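/- arXiv:1710.08075 — 13 statements merged into one kernel-verified Lean document; each statement's English description precedes it below -/
import Mathlib

section
/- Let X be a Polish space and let G be a graph on X. If G has countable coloring number (there is an orientation of G, i.e. an antisymmetric relation o whose symmetrization is G, such that the outflow {y : o x y} of every vertex x is finite), then X can be written as the union of countably many G-loose sets. -/
open Set

/-- A `G`-loose set: every point of the space has an open neighborhood
containing no element of `A` that is `G`-related to it. -/
def Loose {X : Type*} [TopologicalSpace X] (G : X → X → Prop) (A : Set X) : Prop :=
  ∀ x : X, ∃ O : Set X, IsOpen O ∧ x ∈ O ∧ ∀ y ∈ A, y ∈ O → ¬ G x y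

/-- `G` has countable coloring number: there is an orientation `o` of `G`
(an antisymmetric relation whose symmetrization is `G`) such that the
outflow of every vertex is finite. -/
def CountableColoringNumber {X : Type*} (G : X → X → Prop) : Prop :=
  ∃ o : X → X → Prop, (∀ x y, o x y → o y x → x = y) ∧
    (∀ x y, G x y ↔ (o x y ∨ o y x)) ∧ (∀ x, {y | o x y}.Finite)

theorem stmt_0 {X : Type*} [TopologicalSpace X] [PolishSpace X]
    (G : X → X → Prop) (hsym : Symmetric G) (hirr : Irreflexive G)
    (h : CountableColoringNumber G) :
    ∃ A : ℕ → Set X, (∀ n, Loose G (A n)) ∧ (⋃ n, A n) = Set.univ := by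
  obtain ⟨o, _hanti, hGo, hfin⟩ := h
  letI := TopologicalSpace.upgradeIsCompletelyMetrizable X
  refine ⟨fun n => {x | ∀ y, o x y → 1 / ((n : ℝ) + 1) < dist x y}, ?_, ?_⟩
  · intro n x
    have hfc : IsClosed {y | o x y} := (hfin x).isClosed
    have hpos : (0:ℝ) < 1 / (2 * ((n : ℝ) + 1)) := by positivity
    refine ⟨Metric.ball x (1 / (2 * ((n : ℝ) + 1))) \ {y | o x y},
      Metric.isOpen_ball.sdiff hfc, ⟨Metric.mem_ball_self hpos, ?_⟩, ?_⟩
    · intro hx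
      exact hirr x ((hGo x x).2 (Or.inl hx))
    · rintro y hyA ⟨hyb, hyo⟩ hGxy
      rcases (hGo x y).1 hGxy with hxy | hyx
      · exact hyo hxy
      · have h1 := hyA x hyx
        rw [dist_comm] at h1
        have h2 : dist x y < 1 / (2 * ((n : ℝ) + 1)) := by rw [dist_comm]; exact hyb
        have h3 : 1 / (2 * ((n : ℝ) + 1)) ≤ 1 / ((n : ℝ) + 1) := by
          apply one_div_le_one_div_of_le <;> nlinarith [Nat.cast_nonneg (α := ℝ) n]
        linarith
  · ext x
    simp only [mem_iUnion, mem_univ, iff_true, mem_setOf_eq]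
    have hx : x ∉ {y | o x y} := fun hx => hirr x ((hGo x x).2 (Or.inl hx))
    obtain ⟨ε, hε, hεle⟩ : ∃ ε > 0, ∀ y, o x y → ε ≤ dist x y := by
      rcases (hfin x).toFinset.eq_empty_or_nonempty with he | hne
      · refine ⟨1, one_pos, fun y hy => absurd ?_ (by simp [he] : y ∉ (hfin x).toFinset)⟩
        simpa [Set.Finite.mem_toFinset] using hy
      · obtain ⟨y₀, hy₀mem, hy₀min⟩ :=
          ((hfin x).toFinset.image (dist x)).exists_min_image id
            (hne.image _)
        simp only [Finset.mem_image, Set.Finite.mem_toFinset] at hy₀mem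
        obtain ⟨z, hz, hzd⟩ := hy₀mem
        refine ⟨y₀, ?_, fun y hy => ?_⟩
        · rw [← hzd]
          exact dist_pos.2 fun hxz => hx (hxz ▸ hz)
        · exact hy₀min (dist x y) (Finset.mem_image_of_mem _ ((hfin x).mem_toFinset.2 hy))
    obtain ⟨n, hn⟩ := exists_nat_one_div_lt hε
    exact ⟨n, fun y hy => lt_of_lt_of_le hn (hεle y hy)⟩
end

section
/- Let G be a closed graph on a compact metrizable space X. The poset P_G is c.c.c. (every set of pairwise incompatible conditions is countable) if and only if G contains no perfect clique, i.e. there is no nonempty perfect subset C ⊆ X (closed with no isolated points) any two distinct points of which are G-related. -/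
open Set

/-- A `G`-anticlique: no two distinct points of `A` are `G`-related. -/
def Anticlique {X : Type*} (G : X → X → Prop) (A : Set X) : Prop :=
  ∀ x ∈ A, ∀ y ∈ A, x ≠ y → ¬ G x y

/-- A condition in the poset `P_G`: a finite `G`-anticlique together with an
open set containing it. -/
structure Cond (X : Type*) [TopologicalSpace X] (G : X → X → Prop) where
  a : Set X
  o : Set X
  fin : a.Finite
  anti : Anticlique G a
  opn : IsOpen o
  sub : a ⊆ o

/-- The ordering of `P_G`: `q ≤ p` iff `a_p ⊆ a_q` and `o_q ⊆ o_p`. -/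
def CondLE {X : Type*} [TopologicalSpace X] {G : X → X → Prop}
    (q p : Cond X G) : Prop :=
  p.a ⊆ q.a ∧ q.o ⊆ p.o

/-- Two conditions are compatible if they have a common lower bound. -/
def CondCompatible {X : Type*} [TopologicalSpace X] {G : X → X → Prop}
    (p q : Cond X G) : Prop :=
  ∃ r : Cond X G, CondLE r p ∧ CondLE r q

/-- `P_G` is c.c.c.: every set of pairwise incompatible conditions is countable. -/
def CCC (X : Type*) [TopologicalSpace X] (G : X → X → Prop) : Prop :=
  ∀ S : Set (Cond X G), (∀ p ∈ S, ∀ q ∈ S, p ≠ q → ¬ CondCompatible p q) →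
    S.Countable

open Metric Filter Topology TopologicalSpace
set_option linter.unusedSectionVars false
set_option maxHeartbeats 1000000

lemma uncountable_fiber {α β : Type*} [Countable β] {S : Set α} (hS : ¬S.Countable)
    (f : α → β) : ∃ b, ¬{a ∈ S | f a = b}.Countable := by
  by_contra h
  push_neg at h
  refine hS (Set.Countable.mono (fun a ha => ?_) (Set.countable_iUnion h))
  exact mem_iUnion.2 ⟨f a, ha, rfl⟩

lemma freq_fiber {ι : Type*} [Finite ι] (f : ℕ → ι) : ∃ i, ∃ᶠ k in atTop, f k = i := by
  haveI := Fintype.ofFinite ι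
  by_contra h
  push_neg at h
  have h2 : ∀ᶠ k in atTop, ∀ i, f k ≠ i := eventually_all.2 h
  rcases h2.exists with ⟨k, hk⟩
  exact hk (f k) rfl

lemma exists_pos_forall_le {ι : Type*} [Finite ι] (f : ι → ℝ) (hf : ∀ i, 0 < f i) :
    ∃ δ : ℝ, 0 < δ ∧ ∀ i, δ ≤ f i := by
  haveI := Fintype.ofFinite ι
  rcases isEmpty_or_nonempty ι with h | h
  · exact ⟨1, one_pos, fun i => (IsEmpty.false i).elim⟩
  · refine ⟨Finset.univ.inf' Finset.univ_nonempty f, ?_, fun i => Finset.inf'_le f (Finset.mem_univ i)⟩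
    rw [Finset.lt_inf'_iff]
    exact fun i _ => hf i

section CondPts
variable {Y : Type*} [MetricSpace Y] [SecondCountableTopology Y]

/-- Condensation points of `A` (metric version). -/
def condPts' (A : Set Y) : Set Y := {z | ∀ ε : ℝ, 0 < ε → ¬(A ∩ ball z ε).Countable}

lemma condPts_diff_countable' (A : Set Y) : (A \ condPts' A).Countable := by
  obtain ⟨D, hDc, hDd⟩ := exists_countable_dense Y
  set I : Set (Y × ℚ) := {p | p.1 ∈ D ∧ (A ∩ ball p.1 (p.2 : ℝ)).Countable} with hI
  have hIc : I.Countable := Set.Countable.mono (fun p hp => Set.mem_prod.2 ⟨hp.1, Set.mem_univ p.2⟩) (hDc.prod Set.countable_univ)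
  have hsub : A \ condPts' A ⊆ ⋃ p ∈ I, (A ∩ ball p.1 (p.2 : ℝ)) := by
    rintro a ⟨haA, haK⟩
    simp only [condPts', mem_setOf_eq, not_forall] at haK
    obtain ⟨ε, hε, hcts⟩ := haK
    rw [not_not] at hcts
    obtain ⟨c, hcD, hc⟩ := hDd.exists_mem_open isOpen_ball
      (⟨a, mem_ball_self (by linarith)⟩ : (ball a (ε/4)).Nonempty)
    obtain ⟨q, hq1, hq2⟩ := exists_rat_btwn (show (ε/4 : ℝ) < ε/2 by linarith)
    have hball : ball c (q : ℝ) ⊆ ball a ε := by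
      intro y hy
      have h1 : dist y c < (q : ℝ) := mem_ball.1 hy
      have h2 : dist c a < ε/4 := mem_ball.1 hc
      have : dist y a < ε := by
        calc dist y a ≤ dist y c + dist c a := dist_triangle _ _ _
        _ < (q:ℝ) + ε/4 := by linarith
        _ < ε := by linarith
      exact mem_ball.2 this
    refine mem_biUnion (show (c, q) ∈ I from ⟨hcD, hcts.mono (by
      exact inter_subset_inter_right _ hball)⟩) ?_
    exact ⟨haA, mem_ball.2 (by
      have := mem_ball.1 hc
      rw [dist_comm] at this
      linarith)⟩
  exact Set.Countable.mono hsub (hIc.biUnion (fun p hp => hp.2))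

end CondPts

section CondPtsB
variable {Y : Type*} [MetricSpace Y] [SecondCountableTopology Y]

variable {A : Set Y}
lemma nonempty_of_uncountable {α : Type*} {s : Set α} (h : ¬s.Countable) : s.Nonempty := by
  rw [Set.nonempty_iff_ne_empty]; rintro rfl; exact h Set.countable_empty


lemma tendsto_of_dist_lt {u : ℕ → Y} {z : Y} (h : ∀ k : ℕ, dist (u k) z < 1/(k+1)) :
    Tendsto u atTop (𝓝 z) := by
  rw [Metric.tendsto_atTop]
  intro ε hε
  obtain ⟨N, hN⟩ := exists_nat_one_div_lt hε
  refine ⟨N, fun k hk => lt_of_lt_of_le (lt_of_lt_of_le (h k) ?_) hN.le⟩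
  apply one_div_le_one_div_of_le (by positivity)
  have : (N:ℝ) ≤ k := Nat.cast_le.2 hk
  push_cast; linarith

lemma condPts_closed (A : Set Y) : IsClosed (condPts' A) := by
  rw [← isOpen_compl_iff, Metric.isOpen_iff]
  intro z hz
  simp only [mem_compl_iff, condPts', mem_setOf_eq, not_forall, not_not] at hz
  obtain ⟨ε, hε, hc⟩ := hz
  refine ⟨ε/2, by linarith, fun z' hz' => ?_⟩
  simp only [mem_compl_iff, condPts', mem_setOf_eq, not_forall, not_not]
  refine ⟨ε/2, ⟨by linarith, hc.mono (inter_subset_inter_right _ (fun y hy => ?_))⟩⟩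
  have := mem_ball.1 hy; have := mem_ball.1 hz'
  exact mem_ball.2 (by calc dist y z ≤ dist y z' + dist z' z := dist_triangle _ _ _
    _ < ε := by linarith)

lemma condPts_inter_uncountable (hA : ¬A.Countable) : ¬(A ∩ condPts' A).Countable := by
  intro h
  exact hA (((condPts_diff_countable' A).union h).mono (fun a ha => by
    by_cases h2 : a ∈ condPts' A
    · exact Or.inr ⟨ha, h2⟩
    · exact Or.inl ⟨ha, h2⟩))

lemma condPts_ball_uncountable {z : Y} (hz : z ∈ condPts' A) {ε : ℝ} (hε : 0 < ε) :
    ¬(A ∩ condPts' A ∩ ball z ε).Countable := by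
  intro h
  refine hz ε hε (Set.Countable.mono (fun y hy => ?_) (h.union (condPts_diff_countable' A)))
  by_cases h2 : y ∈ condPts' A
  · exact Or.inl ⟨⟨hy.1, h2⟩, hy.2⟩
  · exact Or.inr ⟨hy.1, h2⟩

lemma condPts_perfect (hA : ¬A.Countable) : Perfect (condPts' A) := by
  refine ⟨condPts_closed A, fun z hz => ?_⟩
  rw [accPt_iff_nhds]
  intro U hU
  obtain ⟨ε, hε, hball⟩ := Metric.mem_nhds_iff.1 hU
  have h := condPts_ball_uncountable hz hε
  have h2 : ¬(((A ∩ condPts' A ∩ ball z ε) \ {z})).Countable := by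
    intro hc; exact h ((hc.union (Set.countable_singleton z)).mono (fun y hy =>
      by by_cases h3 : y = z
         · exact Or.inr (by simp [h3])
         · exact Or.inl ⟨hy, h3⟩))
  obtain ⟨y, hy⟩ := nonempty_of_uncountable h2 -- check name
  exact ⟨y, ⟨hball hy.1.2, hy.1.1.2⟩, hy.2⟩

lemma condPts_nonempty (hA : ¬A.Countable) : (condPts' A).Nonempty := by
  obtain ⟨y, hy⟩ := nonempty_of_uncountable (condPts_inter_uncountable hA)
  exact ⟨y, hy.2⟩

lemma condPts_pair_seq {z w : Y} (hz : z ∈ condPts' A) (hw : w ∈ condPts' A) :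
    ∃ a b : ℕ → Y, (∀ k, a k ∈ A ∧ b k ∈ A ∧ a k ≠ b k) ∧
      Tendsto a atTop (𝓝 z) ∧ Tendsto b atTop (𝓝 w) := by
  have key : ∀ k : ℕ, ∃ p : Y × Y, p.1 ∈ A ∧ p.2 ∈ A ∧ p.1 ≠ p.2 ∧
      dist p.1 z < 1/(k+1) ∧ dist p.2 w < 1/(k+1) := by
    intro k
    have h1 : (0:ℝ) < 1/(k+1) := by positivity
    have ha := hz _ h1
    have hb := hw _ h1
    obtain ⟨a, ha2⟩ := nonempty_of_uncountable ha
    have hb2 : ¬(((A ∩ ball w (1/(k+1))) \ {a})).Countable := by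
      intro hc; exact hb ((hc.union (Set.countable_singleton a)).mono (fun y hy => by
        by_cases h3 : y = a
        · exact Or.inr (by simp [h3])
        · exact Or.inl ⟨hy, h3⟩))
    obtain ⟨b, hb3⟩ := nonempty_of_uncountable hb2
    exact ⟨(a, b), ha2.1, hb3.1.1, fun h => hb3.2 (mem_singleton_iff.2 h.symm), mem_ball.1 ha2.2, mem_ball.1 hb3.1.2⟩
  choose p hp1 hp2 hp3 hp4 hp5 using key
  exact ⟨fun k => (p k).1, fun k => (p k).2, fun k => ⟨hp1 k, hp2 k, hp3 k⟩,
    tendsto_of_dist_lt hp4, tendsto_of_dist_lt hp5⟩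

end CondPtsB

section Scheme
variable {Y : Type*} [MetricSpace Y] [CompleteSpace Y]

/-- Generic Cantor scheme construction. -/
lemma genScheme (S : Set Y) (hS : S.Nonempty) (Rel : Y → Y → ℝ → Prop)
    (hRelSymm : ∀ u v r, Rel u v r → Rel v u r)
    (split : ∀ y ∈ S, ∀ ε : ℝ, 0 < ε → ∃ u v r, u ∈ S ∧ v ∈ S ∧ 0 < r ∧ r ≤ ε ∧
      closedBall u r ⊆ ball y ε ∧ closedBall v r ⊆ ball y ε ∧
      Disjoint (closedBall u r) (closedBall v r) ∧ Rel u v r) :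
    ∃ Q : Set Y, Q.Nonempty ∧ Perfect Q ∧ Q ⊆ closure S ∧
      ∀ z ∈ Q, ∀ w ∈ Q, z ≠ w → ∃ u v r, u ∈ S ∧ v ∈ S ∧ 0 < r ∧ Rel u v r ∧
        z ∈ closedBall u r ∧ w ∈ closedBall v r ∧
        Disjoint (closedBall u r) (closedBall v r) ∧
        ∃ a b : ℕ → Y, (∀ k, a k ∈ S ∩ closedBall u r ∧ b k ∈ S ∩ closedBall v r) ∧
          Tendsto a atTop (𝓝 z) ∧ Tendsto b atTop (𝓝 w) := by
  classical
  obtain ⟨y₀, hy₀⟩ := hS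
  choose u v ρ hu hv hρ hρle hbu hbv hdisj hrel using split
  set step : {p : Y × ℝ // p.1 ∈ S ∧ 0 < p.2} → Bool → {p : Y × ℝ // p.1 ∈ S ∧ 0 < p.2} :=
    fun q b => cond b
      ⟨(v q.1.1 q.2.1 (q.1.2/2) (half_pos q.2.2), ρ q.1.1 q.2.1 (q.1.2/2) (half_pos q.2.2)),
        hv _ _ _ _, hρ _ _ _ _⟩
      ⟨(u q.1.1 q.2.1 (q.1.2/2) (half_pos q.2.2), ρ q.1.1 q.2.1 (q.1.2/2) (half_pos q.2.2)),
        hu _ _ _ _, hρ _ _ _ _⟩ with hstep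
  set F : List Bool → {p : Y × ℝ // p.1 ∈ S ∧ 0 < p.2} :=
    fun s => List.rec ⟨(y₀, 1), hy₀, one_pos⟩ (fun b _ ih => step ih b) s with hdefF
  have hF : ∀ (b : Bool) (s : List Bool), F (b :: s) = step (F s) b := fun _ _ => rfl
  set yy : List Bool → Y := fun s => (F s).1.1 with hyy
  set rr : List Bool → ℝ := fun s => (F s).1.2 with hrr
  have hSmem : ∀ s, yy s ∈ S := fun s => (F s).2.1
  have hrpos : ∀ s, 0 < rr s := fun s => (F s).2.2
  -- component computations
  have hcomp : ∀ (b : Bool) (s : List Bool),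
      yy (b :: s) = cond b (v (yy s) (hSmem s) (rr s / 2) (half_pos (hrpos s)))
        (u (yy s) (hSmem s) (rr s / 2) (half_pos (hrpos s))) ∧
      rr (b :: s) = ρ (yy s) (hSmem s) (rr s / 2) (half_pos (hrpos s)) := by
    intro b s
    cases b <;> exact ⟨rfl, rfl⟩
  have hrad : ∀ (b : Bool) (s : List Bool), rr (b :: s) ≤ rr s / 2 := by
    intro b s
    rw [(hcomp b s).2]
    exact hρle _ _ _ _
  have hball : ∀ (b : Bool) (s : List Bool),
      closedBall (yy (b :: s)) (rr (b :: s)) ⊆ ball (yy s) (rr s / 2) := by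
    intro b s
    rcases hcomp b s with ⟨h1, h2⟩
    cases b
    · rw [h1, h2]; exact hbu _ _ _ _
    · rw [h1, h2]; exact hbv _ _ _ _
  have hnest : ∀ (b : Bool) (s : List Bool),
      closedBall (yy (b :: s)) (rr (b :: s)) ⊆ closedBall (yy s) (rr s) := by
    intro b s
    refine (hball b s).trans ((ball_subset_ball (by linarith [hrpos s])).trans ball_subset_closedBall)
  have hsib : ∀ s : List Bool,
      Disjoint (closedBall (yy (false :: s)) (rr (false :: s)))
        (closedBall (yy (true :: s)) (rr (true :: s))) := by
    intro s
    rw [(hcomp false s).1, (hcomp false s).2, (hcomp true s).1, (hcomp true s).2]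
    exact hdisj _ _ _ _
  have hsibrel : ∀ s : List Bool,
      Rel (yy (false :: s)) (yy (true :: s)) (rr (false :: s)) := by
    intro s
    rw [(hcomp false s).1, (hcomp false s).2, (hcomp true s).1]
    exact hrel _ _ _ _
  have hrr_eq : ∀ s, rr (false :: s) = rr (true :: s) := by
    intro s; rw [(hcomp false s).2, (hcomp true s).2]
  -- suffix nesting
  have hsuffix : ∀ (t s : List Bool),
      closedBall (yy (t ++ s)) (rr (t ++ s)) ⊆ closedBall (yy s) (rr s) := by
    intro t
    induction t with
    | nil => intro s; simp
    | cons b t ih => intro s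
                     have := hnest b (t ++ s)
                     simpa using this.trans (ih s)
  -- radius bound
  have hrbound : ∀ s : List Bool, rr s ≤ (1/2) ^ s.length := by
    intro s
    induction s with
    | nil => simp [hrr, hdefF]
    | cons b s ih =>
        have h1 := hrad b s
        have : ((1:ℝ)/2) ^ (b :: s).length = (1/2)^s.length / 2 := by
          simp [pow_succ]; ring
        rw [this]
        linarith
  -- disjointness at the same level
  have hdisjlev : ∀ s t : List Bool, s.length = t.length → s ≠ t →
      Disjoint (closedBall (yy s) (rr s)) (closedBall (yy t) (rr t)) := by
    intro s
    induction s with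
    | nil => intro t hl hne; cases t with
             | nil => exact absurd rfl hne
             | cons c t' => simp at hl
    | cons b s' ih =>
        intro t hl hne
        cases t with
        | nil => simp at hl
        | cons c t' =>
            simp only [List.length_cons, Nat.add_right_cancel_iff] at hl
            by_cases hst : s' = t'
            · subst hst
              have hbc : b ≠ c := by intro h; exact hne (by rw [h])
              cases b <;> cases c <;> first
                | exact absurd rfl hbc
                | exact hsib s'
                | exact (hsib s').symm
            · exact Disjoint.mono ((hnest b s').trans (subset_refl _))
                ((hnest c t').trans (subset_refl _)) (ih t' hl hst)
  -- branches
  set σ : (ℕ → Bool) → ℕ → List Bool :=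
    fun α k => Nat.rec [] (fun m ih => α m :: ih) k with hσ
  have hσs : ∀ α k, σ α (k+1) = α k :: σ α k := fun α k => rfl
  have hσlen : ∀ α k, (σ α k).length = k := by
    intro α k
    induction k with
    | zero => rfl
    | succ k ih => rw [hσs]; simp [ih]
  have hσsuf : ∀ (α : ℕ → Bool) k m, ∃ t, σ α (m + k) = t ++ σ α k := by
    intro α k m
    induction m with
    | zero => exact ⟨[], by simp⟩
    | succ m ih =>
        obtain ⟨t, ht⟩ := ih
        refine ⟨α (m + k) :: t, ?_⟩
        rw [show m + 1 + k = (m + k) + 1 by ring, hσs, ht]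
        rfl
  have hmemchain : ∀ (α : ℕ → Bool) k m, k ≤ m →
      yy (σ α m) ∈ closedBall (yy (σ α k)) (rr (σ α k)) := by
    intro α k m hkm
    obtain ⟨j, rfl⟩ := Nat.exists_eq_add_of_le hkm
    obtain ⟨t, ht⟩ := hσsuf α k j
    rw [Nat.add_comm k j, ht]
    exact hsuffix t _ (mem_closedBall_self (hrpos _).le)
  have hrb : ∀ (α : ℕ → Bool) k, rr (σ α k) ≤ (1/2)^k := by
    intro α k
    have := hrbound (σ α k)
    rwa [hσlen] at this
  have hcauchy : ∀ α : ℕ → Bool, CauchySeq (fun k => yy (σ α k)) := by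
    intro α
    apply cauchySeq_of_le_geometric (1/2) 1 (by norm_num)
    intro k
    have h1 := hmemchain α k (k+1) (Nat.le_succ k)
    have h2 := mem_closedBall.1 h1
    rw [dist_comm] at h2
    calc dist (yy (σ α k)) (yy (σ α (k+1))) ≤ rr (σ α k) := h2
      _ ≤ (1/2)^k := hrb α k
      _ = 1 * (1/2)^k := by ring
  have hlim : ∀ α : ℕ → Bool, ∃ z, Tendsto (fun k => yy (σ α k)) atTop (𝓝 z) :=
    fun α => cauchySeq_tendsto_of_complete (hcauchy α)
  choose L hL using hlim
  have hmemball : ∀ (α : ℕ → Bool) k, L α ∈ closedBall (yy (σ α k)) (rr (σ α k)) := by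
    intro α k
    apply isClosed_closedBall.mem_of_tendsto (hL α)
    filter_upwards [eventually_ge_atTop k] with m hm
    exact hmemchain α k m hm
  have hLS : ∀ α, L α ∈ closure S := fun α =>
    mem_closure_of_tendsto (hL α) (Eventually.of_forall (fun k => hSmem _))
  have hagree : ∀ (α β : ℕ → Bool) k, (∀ m, m < k → β m = α m) → σ β k = σ α k := by
    intro α β k h
    induction k with
    | zero => rfl
    | succ k ih =>
        rw [hσs, hσs, h k (Nat.lt_succ_self k), ih (fun m hm => h m (hm.trans (Nat.lt_succ_self k)))]
  have hdistL : ∀ (α β : ℕ → Bool) k, σ β k = σ α k → dist (L β) (L α) ≤ 2 * (1/2)^k := by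
    intro α β k h
    have h1 := mem_closedBall.1 (hmemball α k)
    have h2' := hmemball β k
    rw [h] at h2'
    have h2 := mem_closedBall.1 h2'
    have hr := hrb α k
    calc dist (L β) (L α) ≤ dist (L β) (yy (σ α k)) + dist (yy (σ α k)) (L α) :=
          dist_triangle _ _ _
      _ ≤ rr (σ α k) + rr (σ α k) := by
          rw [dist_comm (yy (σ α k)) (L α)]; exact add_le_add h2 h1
      _ ≤ 2 * (1/2)^k := by linarith
  have hsmall : ∀ ε : ℝ, 0 < ε → ∃ k : ℕ, 2 * (1/2:ℝ)^k < ε := by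
    intro ε hε
    obtain ⟨k, hk⟩ := exists_pow_lt_of_lt_one (show (0:ℝ) < ε/2 by linarith)
      (show (1:ℝ)/2 < 1 by norm_num)
    exact ⟨k, by linarith⟩
  have hevagree : ∀ (α : ℕ → Bool) (k : ℕ), ∀ᶠ β in 𝓝 α, ∀ m, m < k → β m = α m := by
    intro α k
    have h1 : ∀ m : ℕ, ∀ᶠ β in 𝓝 α, β m = α m := by
      intro m
      have : {b : Bool | b = α m} ∈ 𝓝 (α m) := by
        rw [nhds_discrete]; exact rfl
      exact ((continuous_apply m).tendsto α) this
    have h2 : ∀ᶠ β in 𝓝 α, ∀ m ∈ Finset.range k, β m = α m :=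
      (Finset.range k).eventually_all.2 (fun m _ => h1 m)
    filter_upwards [h2] with β hβ m hm
    exact hβ m (Finset.mem_range.2 hm)
  have hLcont : Continuous L := by
    rw [continuous_iff_continuousAt]
    intro α
    rw [ContinuousAt, Metric.tendsto_nhds]
    intro ε hε
    obtain ⟨k, hk⟩ := hsmall ε hε
    filter_upwards [hevagree α k] with β hβ
    exact lt_of_le_of_lt (hdistL α β k (hagree α β k hβ)) hk
  haveI : CompactSpace (ℕ → Bool) := by infer_instance
  refine ⟨range L, ⟨L (fun _ => false), mem_range_self _⟩, ⟨(isCompact_range hLcont).isClosed, ?_⟩,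
    ?_, ?_⟩
  · -- preperfect
    rintro z ⟨α, rfl⟩
    rw [accPt_iff_nhds]
    intro U hU
    obtain ⟨ε, hε, hball'⟩ := Metric.mem_nhds_iff.1 hU
    obtain ⟨k, hk⟩ := hsmall ε hε
    set β : ℕ → Bool := fun m => if m = k then !(α m) else α m with hβdef
    have hβk : β k = !(α k) := by simp [hβdef]
    have hagr : ∀ m, m < k → β m = α m := by
      intro m hm; simp [hβdef, Nat.ne_of_lt hm]
    have hσeq : σ β k = σ α k := hagree α β k hagr
    have hne : L β ≠ L α := by
      intro h
      have h1 := hmemball α (k+1)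
      have h2 := hmemball β (k+1)
      rw [hσs] at h1 h2
      rw [hσeq, hβk] at h2
      have hd := hdisjlev ((!(α k)) :: σ α k) (α k :: σ α k) (by simp)
        (by simp [Bool.not_ne_self])
      rw [← h] at h1
      exact (Set.disjoint_iff.1 hd) ⟨h2, h1⟩ 
    refine ⟨L β, ⟨hball' ?_, mem_range_self _⟩, hne⟩
    exact mem_ball.2 (lt_of_le_of_lt (hdistL α β k hσeq) hk)
  · rintro z ⟨α, rfl⟩; exact hLS α
  · -- pairs
    rintro z ⟨α, rfl⟩ w ⟨β, rfl⟩ hzw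
    have hex : ∃ k, α k ≠ β k := by
      by_contra h
      push_neg at h
      exact hzw (by rw [funext h])
    set k₀ := Nat.find hex with hk₀def
    have hk₀ : α k₀ ≠ β k₀ := Nat.find_spec hex
    have hagr : ∀ m, m < k₀ → β m = α m := by
      intro m hm
      have := Nat.find_min hex hm
      exact (not_not.1 this).symm
    have hσeq : σ β k₀ = σ α k₀ := hagree α β k₀ hagr
    have hz1 : L α ∈ closedBall (yy (α k₀ :: σ α k₀)) (rr (α k₀ :: σ α k₀)) := by
      have := hmemball α (k₀+1); rwa [hσs] at this
    have hw1 : L β ∈ closedBall (yy (β k₀ :: σ α k₀)) (rr (β k₀ :: σ α k₀)) := by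
      have := hmemball β (k₀+1); rwa [hσs, hσeq] at this
    have hseqz : ∃ a : ℕ → Y, (∀ m, a m ∈ S ∩ closedBall (yy (α k₀ :: σ α k₀)) (rr (α k₀ :: σ α k₀)))
        ∧ Tendsto a atTop (𝓝 (L α)) := by
      refine ⟨fun m => yy (σ α (m + (k₀+1))), fun m => ⟨hSmem (σ α (m + (k₀+1))), ?_⟩,
        (hL α).comp (tendsto_add_atTop_nat (k₀+1))⟩
      have := hmemchain α (k₀+1) (m + (k₀+1)) (Nat.le_add_left _ _)
      rwa [hσs] at this
    have hseqw : ∃ b : ℕ → Y, (∀ m, b m ∈ S ∩ closedBall (yy (β k₀ :: σ α k₀)) (rr (β k₀ :: σ α k₀)))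
        ∧ Tendsto b atTop (𝓝 (L β)) := by
      refine ⟨fun m => yy (σ β (m + (k₀+1))), fun m => ⟨hSmem (σ β (m + (k₀+1))), ?_⟩,
        (hL β).comp (tendsto_add_atTop_nat (k₀+1))⟩
      have := hmemchain β (k₀+1) (m + (k₀+1)) (Nat.le_add_left _ _)
      rwa [hσs, hσeq] at this
    obtain ⟨a, ha, haT⟩ := hseqz
    obtain ⟨b, hb, hbT⟩ := hseqw
    cases hαk : α k₀ with
    | false =>
        have hβk : β k₀ = true := by
          cases hc : β k₀
          · rw [hαk, hc] at hk₀; exact absurd rfl hk₀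
          · rfl
        rw [hαk] at hz1 ha
        rw [hβk] at hw1 hb
        refine ⟨yy (false :: σ α k₀), yy (true :: σ α k₀), rr (false :: σ α k₀),
          hSmem (false :: σ α k₀), hSmem (true :: σ α k₀), hrpos (false :: σ α k₀),
          hsibrel (σ α k₀), hz1, by rw [hrr_eq]; exact hw1,
          by rw [hrr_eq]; exact hsib _, a, b, fun m => ⟨ha m, by rw [hrr_eq]; exact hb m⟩, haT, hbT⟩
    | true =>
        have hβk : β k₀ = false := by
          cases hc : β k₀
          · rfl
          · rw [hαk, hc] at hk₀; exact absurd rfl hk₀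
        rw [hαk] at hz1 ha
        rw [hβk] at hw1 hb
        refine ⟨yy (true :: σ α k₀), yy (false :: σ α k₀), rr (true :: σ α k₀),
          hSmem (true :: σ α k₀), hSmem (false :: σ α k₀), hrpos (true :: σ α k₀), ?_, hz1, by rw [← hrr_eq]; exact hw1,
          by rw [← hrr_eq]; exact (hsib _).symm, a, b,
          fun m => ⟨ha m, by rw [← hrr_eq]; exact hb m⟩, haT, hbT⟩
        rw [← hrr_eq]
        exact hRelSymm _ _ _ (hsibrel (σ α k₀))
end Scheme

lemma not_countable_nat_bool : ¬ Countable (ℕ → Bool) := by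
  intro h
  obtain ⟨g, hg⟩ := exists_surjective_nat (ℕ → Bool)
  obtain ⟨n, hn⟩ := hg (fun n => !(g n n))
  have := congrFun hn n
  simp at this

lemma perfect_uncountable {Y : Type*} [MetricSpace Y] [CompleteSpace Y] {P : Set Y}
    (hP : Perfect P) (hne : P.Nonempty) : ¬P.Countable := by
  obtain ⟨f, hfr, _, hfi⟩ := hP.exists_nat_bool_injection hne
  intro hc
  have h2 : (range f).Countable := hc.mono hfr
  haveI := h2.to_subtype
  exact not_countable_nat_bool (Countable.of_equiv _ (Equiv.ofInjective f hfi).symm)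

lemma perfect_two_points {Y : Type*} [MetricSpace Y] [CompleteSpace Y] {P : Set Y}
    (hP : Perfect P) (hne : P.Nonempty) : ∃ u ∈ P, ∃ v ∈ P, u ≠ v := by
  have h := perfect_uncountable hP hne
  by_contra hcon
  push_neg at hcon
  exact h (Set.Subsingleton.countable (fun u hu v hv => by
    by_contra hne'
    exact hne' (hcon u hu v hv)))

section Graph
variable {X : Type*} [MetricSpace X] {G : X → X → Prop}

/-- Sequential closedness of the graph off the diagonal. -/
def SeqClosedGraph (G : X → X → Prop) : Prop :=
  ∀ (a b : ℕ → X) (z w : X), (∀ k, G (a k) (b k)) →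
    Tendsto a atTop (𝓝 z) → Tendsto b atTop (𝓝 w) → z ≠ w → G z w

lemma seqClosedGraph_of_isClosed {X : Type*} [TopologicalSpace X] {G : X → X → Prop}
    (hirr : Irreflexive G)
    (hclosed : IsClosed {p : {q : X × X // q.1 ≠ q.2} | G p.1.1 p.1.2}) :
    ∀ (a b : ℕ → X) (z w : X), (∀ k, G (a k) (b k)) →
      Tendsto a atTop (𝓝 z) → Tendsto b atTop (𝓝 w) → z ≠ w → G z w := by
  intro a b z w hk ha hb hzw
  have hne : ∀ k, a k ≠ b k := fun k h => hirr (a k) (by nth_rewrite 2 [h]; exact hk k)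
  set f : ℕ → {q : X × X // q.1 ≠ q.2} := fun k => ⟨(a k, b k), hne k⟩ with hf
  have hten : Tendsto f atTop (𝓝 ⟨(z, w), hzw⟩) := by
    rw [tendsto_subtype_rng]
    exact ha.prodMk_nhds hb
  have := hclosed.mem_of_tendsto hten (Eventually.of_forall (fun k => hk k))
  exact this

lemma tendsto_of_dist_lt' {u : ℕ → X} {z : X} (h : ∀ k : ℕ, dist (u k) z < 1/((k:ℝ)+1)) :
    Tendsto u atTop (𝓝 z) := by
  rw [Metric.tendsto_atTop]
  intro ε hε
  obtain ⟨N, hN⟩ := exists_nat_one_div_lt hε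
  refine ⟨N, fun k hk => lt_of_lt_of_le (lt_of_lt_of_le (h k) ?_) hN.le⟩
  apply one_div_le_one_div_of_le (by positivity)
  have : (N:ℝ) ≤ k := Nat.cast_le.2 hk
  linarith

lemma nonedge_nbhd (hG : SeqClosedGraph G) {a b : X} (hab : a ≠ b) (hnab : ¬ G a b) :
    ∃ δ : ℝ, 0 < δ ∧ ∀ a' ∈ ball a δ, ∀ b' ∈ ball b δ, a' ≠ b' ∧ ¬ G a' b' := by
  by_contra hcon
  push_neg at hcon
  have hd : 0 < dist a b := dist_pos.2 hab
  have key : ∀ k : ℕ, ∃ p : X × X, dist p.1 a < 1/((k:ℝ)+1) ∧ dist p.2 b < 1/((k:ℝ)+1) ∧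
      G p.1 p.2 := by
    intro k
    set δk : ℝ := min (1/((k:ℝ)+1)) (dist a b / 3) with hδk
    have hδ : (0:ℝ) < δk := lt_min (by positivity) (by linarith)
    obtain ⟨a', ha', b', hb', hnot⟩ := hcon _ hδ
    have e1 : dist a' a < δk := mem_ball.1 ha'
    have e2 : dist b' b < δk := mem_ball.1 hb'
    have hδle : δk ≤ dist a b / 3 := min_le_right _ _
    have hne : a' ≠ b' := by
      intro h
      rw [h] at e1
      have : dist a b ≤ dist a b' + dist b' b := dist_triangle _ _ _
      rw [dist_comm a b'] at this
      linarith
    exact ⟨(a', b'), lt_of_lt_of_le e1 (min_le_left _ _),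
      lt_of_lt_of_le e2 (min_le_left _ _), hnot hne⟩
  choose p hp1 hp2 hp3 using key
  exact hnab (hG _ _ a b hp3 (tendsto_of_dist_lt' hp1) (tendsto_of_dist_lt' hp2) hab)

/-- An uncountable clique yields a perfect clique. -/
lemma uncountable_clique_perfect [SecondCountableTopology X] (hG : SeqClosedGraph G)
    {A : Set X} (hA : ¬A.Countable) (hcl : ∀ x ∈ A, ∀ y ∈ A, x ≠ y → G x y) :
    ∃ C : Set X, C.Nonempty ∧ Perfect C ∧ ∀ x ∈ C, ∀ y ∈ C, x ≠ y → G x y := by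
  refine ⟨condPts' A, condPts_nonempty hA, condPts_perfect hA, ?_⟩
  intro z hz w hw hzw
  obtain ⟨a, b, hab, haT, hbT⟩ := condPts_pair_seq hz hw
  exact hG a b z w (fun k => hcl _ (hab k).1 _ (hab k).2.1 (hab k).2.2) haT hbT hzw

end Graph

section CliqueSec
variable {X : Type*} [MetricSpace X] [CompactSpace X] {G : X → X → Prop}

lemma cliqueLemma (hGsym : Symmetric G)
    (hG : ∀ (a b : ℕ → X) (z w : X), (∀ k, G (a k) (b k)) →
      Tendsto a atTop (𝓝 z) → Tendsto b atTop (𝓝 w) → z ≠ w → G z w) {n : ℕ} :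
    ∀ (m : ℕ) (J : Finset (Fin n)), J.card ≤ m → ∀ P : Set (Fin n → X), P.Nonempty → Perfect P →
      (∀ u ∈ P, ∀ v ∈ P, u ≠ v → ∀ i, u i ≠ v i) →
      (∀ u ∈ P, ∀ v ∈ P, u ≠ v → ∃ i ∈ J, G (u i) (v i)) →
      ∃ C : Set X, C.Nonempty ∧ Perfect C ∧ ∀ x ∈ C, ∀ y ∈ C, x ≠ y → G x y := by
  intro m
  induction m with
  | zero =>
      intro J hJ P hPne hPperf hPdist hPcov
      obtain ⟨u, hu, v, hv, huv⟩ := perfect_two_points hPperf hPne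
      obtain ⟨i, hi, _⟩ := hPcov u hu v hv huv
      rw [Finset.card_eq_zero.1 (Nat.le_zero.1 hJ)] at hi
      exact absurd hi (Finset.notMem_empty i)
  | succ m ih =>
      intro J hJ P hPne hPperf hPdist hPcov
      rcases Finset.eq_empty_or_nonempty J with rfl | ⟨j, hj⟩
      · obtain ⟨u, hu, v, hv, huv⟩ := perfect_two_points hPperf hPne
        obtain ⟨i, hi, _⟩ := hPcov u hu v hv huv
        exact absurd hi (Finset.notMem_empty i)
      classical
      set jCl : Set (Fin n → X) → Prop :=
        fun A => ∀ u ∈ A, ∀ v ∈ A, u ≠ v → G (u j) (v j) with hjCl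
      set Small : (Fin n → X) → Prop := fun z => ∃ U : Set (Fin n → X), IsOpen U ∧ z ∈ U ∧
        ∃ 𝒴 : Set (Set (Fin n → X)), 𝒴.Countable ∧ (U ∩ P ⊆ ⋃₀ 𝒴) ∧ ∀ A ∈ 𝒴, jCl A
        with hSmalldef
      by_cases hall : ∀ z ∈ P, Small z
      · -- P is a countable union of j-cliques; find an uncountable one and project
        choose U hUopen hUmem 𝒴 h𝒴c h𝒴cov h𝒴cl using hall
        obtain ⟨t, ht⟩ := (hPperf.closed.isCompact).elim_finite_subcover
          (fun z : ↥P => U z.1 z.2) (fun z => hUopen z.1 z.2)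
          (fun z hz => mem_iUnion.2 ⟨⟨z, hz⟩, hUmem z hz⟩)
        have hexu : ∃ A, (∃ z ∈ t, A ∈ 𝒴 z.1 z.2) ∧ ¬(A ∩ P).Countable := by
          by_contra hcc
          push_neg at hcc
          apply perfect_uncountable hPperf hPne
          have hsub : P ⊆ ⋃ z ∈ t, ⋃ A ∈ 𝒴 z.1 z.2, (A ∩ P) := by
            intro u hu
            obtain ⟨z, hz1, hz2⟩ := mem_iUnion₂.1 (ht hu)
            have h3 : u ∈ ⋃₀ 𝒴 z.1 z.2 := h𝒴cov z.1 z.2 ⟨hz2, hu⟩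
            obtain ⟨A, hA1, hA2⟩ := h3
            exact mem_biUnion hz1 (mem_biUnion hA1 ⟨hA2, hu⟩)
          refine Set.Countable.mono hsub ?_
          refine Set.Countable.biUnion t.countable_toSet (fun z hz => ?_)
          refine Set.Countable.biUnion (h𝒴c z.1 z.2) (fun A hA => ?_)
          exact hcc A ⟨z, hz, hA⟩
        obtain ⟨A, ⟨z, hzt, hA𝒴⟩, hAu⟩ := hexu
        have hjcl : jCl A := h𝒴cl z.1 z.2 A hA𝒴
        have hinj : InjOn (fun u : Fin n → X => u j) (A ∩ P) := by
          intro u hu v hv h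
          by_contra hne
          exact (hPdist u hu.2 v hv.2 hne j) h
        have hBu : ¬((fun u : Fin n → X => u j) '' (A ∩ P)).Countable :=
          fun h => hAu (countable_of_injective_of_countable_image hinj h)
        apply uncountable_clique_perfect hG hBu
        rintro x ⟨u, hu, rfl⟩ y ⟨v, hv, rfl⟩ hxy
        exact hjcl u hu.1 v hv.1 (fun h => hxy (by rw [h]))
      · push_neg at hall
        obtain ⟨z₀, hz₀P, hz₀⟩ := hall
        set X' : Set (Fin n → X) := {z ∈ P | ¬ Small z} with hX'
        have hX'ne : X'.Nonempty := ⟨z₀, hz₀P, hz₀⟩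
        have hSmallOpen : IsOpen {z : Fin n → X | Small z} := by
          rw [isOpen_iff_forall_mem_open]
          intro z hz
          obtain ⟨U, hUo, hUm, h𝒴⟩ := hz
          exact ⟨U, fun z' hz' => ⟨U, hUo, hz', h𝒴⟩, hUo, hUm⟩
        have hX'closed : IsClosed X' := by
          have he : X' = P ∩ {z : Fin n → X | Small z}ᶜ := rfl
          rw [he]
          exact hPperf.closed.inter hSmallOpen.isClosed_compl
        have hX'P : X' ⊆ P := fun z hz => hz.1
        -- key claim: every ball piece of X' contains a j-nonedge
        have claim : ∀ y ∈ X', ∀ ε : ℝ, 0 < ε → ∃ u v : Fin n → X, u ∈ ball y ε ∩ X' ∧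
            v ∈ ball y ε ∩ X' ∧ u ≠ v ∧ ¬ G (u j) (v j) := by
          intro y hy ε hε
          by_contra hcon
          push_neg at hcon
          obtain ⟨Bas, hBasC, hBasne, hBasis⟩ := exists_countable_basis (Fin n → X)
          set Good : Set (Set (Fin n → X)) := {b ∈ Bas | ∃ 𝒴 : Set (Set (Fin n → X)),
            𝒴.Countable ∧ (b ∩ P ⊆ ⋃₀ 𝒴) ∧ ∀ A ∈ 𝒴, jCl A} with hGood
          have hGoodC : Good.Countable := hBasC.mono (fun b hb => hb.1)
          have hchoice : ∀ b ∈ Good, ∃ 𝒴 : Set (Set (Fin n → X)), 𝒴.Countable ∧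
              (b ∩ P ⊆ ⋃₀ 𝒴) ∧ ∀ A ∈ 𝒴, jCl A := fun b hb => hb.2
          choose 𝒴g h1 h2 h3 using hchoice
          apply hy.2
          refine ⟨ball y ε, isOpen_ball, mem_ball_self hε,
            insert (ball y ε ∩ X') (⋃ b, ⋃ (hb : b ∈ Good), 𝒴g b hb), ?_, ?_, ?_⟩
          · exact Set.Countable.insert _ (Set.Countable.biUnion hGoodC (fun b hb => h1 b hb))
          · intro u hu
            by_cases huX : u ∈ X'
            · exact ⟨ball y ε ∩ X', mem_insert _ _, hu.1, huX⟩
            · have hsm : Small u := by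
                by_contra hns
                exact huX ⟨hu.2, hns⟩
              obtain ⟨Uu, hUuo, hUum, 𝒴u, h𝒴uc, h𝒴ucov, h𝒴ucl⟩ := hsm
              obtain ⟨b, hbB, hub, hbU⟩ := hBasis.exists_subset_of_mem_open hUum hUuo
              have hbG : b ∈ Good := ⟨hbB, 𝒴u, h𝒴uc,
                fun w hw => h𝒴ucov ⟨hbU hw.1, hw.2⟩, h𝒴ucl⟩
              obtain ⟨A, hA1, hA2⟩ := h2 b hbG ⟨hub, hu.2⟩
              exact ⟨A, mem_insert_iff.2 (Or.inr (mem_iUnion.2 ⟨b, mem_iUnion.2 ⟨hbG, hA1⟩⟩)), hA2⟩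
          · intro A hA
            rcases mem_insert_iff.1 hA with rfl | hA2
            · intro u hu v hv huv
              exact hcon u v ⟨hu.1, hu.2⟩ ⟨hv.1, hv.2⟩ huv
            · obtain ⟨b, hb⟩ := mem_iUnion.1 hA2
              obtain ⟨hbG, hAb⟩ := mem_iUnion.1 hb
              exact h3 b hbG A hAb
        -- the scheme relation
        set Rel2 : (Fin n → X) → (Fin n → X) → ℝ → Prop := fun u v r =>
          ∀ a ∈ closedBall (u j) r, ∀ b ∈ closedBall (v j) r, a ≠ b ∧ ¬ G a b with hRel2
        have hRel2symm : ∀ u v r, Rel2 u v r → Rel2 v u r := by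
          intro u v r h a ha b hb
          obtain ⟨h1, h2⟩ := h b hb a ha
          exact ⟨h1.symm, fun hg => h2 (hGsym hg)⟩
        have split : ∀ y ∈ X', ∀ ε : ℝ, 0 < ε → ∃ u v r, u ∈ X' ∧ v ∈ X' ∧ 0 < r ∧ r ≤ ε ∧
            closedBall u r ⊆ ball y ε ∧ closedBall v r ⊆ ball y ε ∧
            Disjoint (closedBall u r) (closedBall v r) ∧ Rel2 u v r := by
          intro y hy ε hε
          obtain ⟨u, v, hu, hv, huv, hnG⟩ := claim y hy (ε/2) (by linarith)
          have hujvj : u j ≠ v j := hPdist u (hX'P hu.2) v (hX'P hv.2) huv j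
          obtain ⟨δ, hδ, hδp⟩ := nonedge_nbhd hG hujvj hnG
          have hdu := mem_ball.1 hu.1
          have hdv := mem_ball.1 hv.1
          obtain ⟨r, hrp, hrδ, hru, hrv⟩ : ∃ r : ℝ, 0 < r ∧ r < δ ∧
              r + dist u y < ε/2 ∧ r + dist v y < ε/2 := by
            refine ⟨min (δ/2) (min ((ε/2 - dist u y)/2) ((ε/2 - dist v y)/2)),
              lt_min (by linarith) (lt_min (by linarith) (by linarith)),
              lt_of_le_of_lt (min_le_left _ _) (by linarith), ?_, ?_⟩
            · have h5 := (min_le_right (δ/2) (min ((ε/2 - dist u y)/2) ((ε/2 - dist v y)/2))).trans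
                (min_le_left _ _)
              linarith
            · have h5 := (min_le_right (δ/2) (min ((ε/2 - dist u y)/2) ((ε/2 - dist v y)/2))).trans
                (min_le_right _ _)
              linarith
          have hrel : Rel2 u v r := by
            intro a ha b hb
            refine hδp a ?_ b ?_
            · exact mem_ball.2 (lt_of_le_of_lt (mem_closedBall.1 ha) hrδ)
            · exact mem_ball.2 (lt_of_le_of_lt (mem_closedBall.1 hb) hrδ)
          refine ⟨u, v, r, hu.2, hv.2, hrp, ?_, ?_, ?_, ?_, hrel⟩
          · have hd : (0:ℝ) ≤ dist u y := dist_nonneg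
            linarith
          · intro z hz
            have h5 := mem_closedBall.1 hz
            refine mem_ball.2 ?_
            calc dist z y ≤ dist z u + dist u y := dist_triangle _ _ _
              _ < ε := by linarith
          · intro z hz
            have h5 := mem_closedBall.1 hz
            refine mem_ball.2 ?_
            calc dist z y ≤ dist z v + dist v y := dist_triangle _ _ _
              _ < ε := by linarith
          · rw [Set.disjoint_left]
            intro z hz1 hz2
            have e1 : dist (z j) (u j) ≤ r := le_trans (dist_le_pi_dist z u j) (mem_closedBall.1 hz1)
            have e2 : dist (z j) (v j) ≤ r := le_trans (dist_le_pi_dist z v j) (mem_closedBall.1 hz2)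
            exact (hrel (z j) (mem_closedBall.2 e1) (z j) (mem_closedBall.2 e2)).1 rfl
        obtain ⟨Q, hQne, hQperf, hQcl, hQpair⟩ := genScheme X' hX'ne Rel2 hRel2symm split
        have hQX' : Q ⊆ X' := by
          rw [← hX'closed.closure_eq]
          exact hQcl
        have hQP : Q ⊆ P := fun z hz => hX'P (hQX' hz)
        -- pairs of Q have no j-edge
        have hQnoj : ∀ z ∈ Q, ∀ w ∈ Q, z ≠ w → ¬ G (z j) (w j) := by
          intro z hz w hw hzw
          obtain ⟨u, v, r, _, _, hr, hrel, hzu, hwv, _, _⟩ := hQpair z hz w hw hzw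
          have e1 : dist (z j) (u j) ≤ r := le_trans (dist_le_pi_dist z u j) (mem_closedBall.1 hzu)
          have e2 : dist (w j) (v j) ≤ r := le_trans (dist_le_pi_dist w v j) (mem_closedBall.1 hwv)
          exact (hrel (z j) (mem_closedBall.2 e1) (w j) (mem_closedBall.2 e2)).2
        refine ih (J.erase j) ?_ Q hQne hQperf ?_ ?_
        · rw [Finset.card_erase_of_mem hj]
          exact Nat.sub_le_iff_le_add.2 hJ
        · intro u hu v hv huv i
          exact hPdist u (hQP hu) v (hQP hv) huv i
        · intro u hu v hv huv
          obtain ⟨i, hiJ, hGi⟩ := hPcov u (hQP hu) v (hQP hv) huv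
          refine ⟨i, Finset.mem_erase.2 ⟨?_, hiJ⟩, hGi⟩
          intro hij
          rw [hij] at hGi
          exact hQnoj u hu v hv huv hGi
end CliqueSec

lemma grandLemma {X : Type*} [MetricSpace X] [CompactSpace X] {G : X → X → Prop}
    (hGsym : Symmetric G) (hirr : Irreflexive G)
    (hG : ∀ (a b : ℕ → X) (z w : X), (∀ k, G (a k) (b k)) →
      Tendsto a atTop (𝓝 z) → Tendsto b atTop (𝓝 w) → z ≠ w → G z w) :
    ∀ (n : ℕ) (T : Set (Fin n → X)), ¬T.Countable →
      (∀ u ∈ T, ∀ v ∈ T, u ≠ v → ∃ i, G (u i) (v i)) →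
      ∃ C : Set X, C.Nonempty ∧ Perfect C ∧ ∀ x ∈ C, ∀ y ∈ C, x ≠ y → G x y := by
  intro n
  induction n with
  | zero =>
      intro T hT _
      exact absurd (Set.Subsingleton.countable
        (fun u _ v _ => funext (fun i => i.elim0))) hT
  | succ n ih =>
      intro T hT hTp
      classical
      by_cases hcase : ∃ (i : Fin (n+1)) (c : X), ¬{u ∈ T | u i = c}.Countable
      · obtain ⟨i, c, hic⟩ := hcase
        have hinj : InjOn (fun u : Fin (n+1) → X => u ∘ i.succAbove) {u ∈ T | u i = c} := by
          intro u hu v hv h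
          funext k
          by_cases hk : k = i
          · rw [hk, hu.2, hv.2]
          · obtain ⟨l, hl⟩ := Fin.exists_succAbove_eq hk
            rw [← hl]
            exact congrFun h l
        apply ih ((fun u : Fin (n+1) → X => u ∘ i.succAbove) '' {u ∈ T | u i = c})
        · intro hcnt
          exact hic (countable_of_injective_of_countable_image hinj hcnt)
        · rintro u' ⟨u, hu, rfl⟩ v' ⟨v, hv, rfl⟩ hne
          have huv : u ≠ v := fun h => hne (by rw [h])
          obtain ⟨i₀, hGi₀⟩ := hTp u hu.1 v hv.1 huv
          have hi₀ : i₀ ≠ i := by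
            intro h
            rw [h, hu.2, hv.2] at hGi₀
            exact hirr c hGi₀
          obtain ⟨l, hl⟩ := Fin.exists_succAbove_eq hi₀
          refine ⟨l, ?_⟩
          simpa [Function.comp, hl] using hGi₀
      · push_neg at hcase
        set A : Set (Fin (n+1) → X) := T ∩ condPts' T with hA
        have hTA : ¬A.Countable := condPts_inter_uncountable hT
        have hAne : A.Nonempty := nonempty_of_uncountable hTA
        have hAcond : ∀ y ∈ A, ∀ ε : ℝ, 0 < ε → ¬(A ∩ ball y ε).Countable := by
          intro y hy ε hε
          exact condPts_ball_uncountable hy.2 hε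
        set Rel1 : (Fin (n+1) → X) → (Fin (n+1) → X) → ℝ → Prop :=
          fun u v r => ∀ i, 2*r < dist (u i) (v i) with hRel1
        have hRel1symm : ∀ u v r, Rel1 u v r → Rel1 v u r := by
          intro u v r h i; rw [dist_comm]; exact h i
        have split : ∀ y ∈ A, ∀ ε : ℝ, 0 < ε → ∃ u v r,
            u ∈ A ∧ v ∈ A ∧ 0 < r ∧ r ≤ ε ∧
            closedBall u r ⊆ ball y ε ∧ closedBall v r ⊆ ball y ε ∧
            Disjoint (closedBall u r) (closedBall v r) ∧ Rel1 u v r := by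
          intro y hy ε hε
          have hun := hAcond y hy (ε/2) (by linarith)
          obtain ⟨u, hu⟩ := nonempty_of_uncountable hun
          have hbad : ((A ∩ ball y (ε/2)) \ ⋃ i, {w ∈ T | w i = u i}).Nonempty := by
            apply nonempty_of_uncountable
            intro hc
            apply hun
            refine Set.Countable.mono (fun w hw => ?_)
              (hc.union (Set.countable_iUnion (fun i => hcase i (u i))))
            by_cases hwb : w ∈ ⋃ i, {w ∈ T | w i = u i}
            · exact Or.inr hwb
            · exact Or.inl ⟨hw, hwb⟩
          obtain ⟨v, hv⟩ := hbad
          have hvi : ∀ i, v i ≠ u i := by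
            intro i h
            exact hv.2 (mem_iUnion.2 ⟨i, ⟨hv.1.1.1, h⟩⟩)
          obtain ⟨d, hd, hdle⟩ := exists_pos_forall_le (fun i => dist (u i) (v i))
            (fun i => dist_pos.2 (fun h => hvi i h.symm))
          have hdu := mem_ball.1 hu.2
          have hdv := mem_ball.1 hv.1.2
          obtain ⟨r, hrp, hrd, hru, hrv⟩ : ∃ r : ℝ, 0 < r ∧ 2*r < d ∧
              r + dist u y < ε/2 ∧ r + dist v y < ε/2 := by
            refine ⟨min (d/4) (min ((ε/2 - dist u y)/2) ((ε/2 - dist v y)/2)),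
              lt_min (by linarith) (lt_min (by linarith) (by linarith)), ?_, ?_, ?_⟩
            · have h5 := min_le_left (d/4) (min ((ε/2 - dist u y)/2) ((ε/2 - dist v y)/2))
              linarith
            · have h5 := (min_le_right (d/4) (min ((ε/2 - dist u y)/2) ((ε/2 - dist v y)/2))).trans
                (min_le_left _ _)
              linarith
            · have h5 := (min_le_right (d/4) (min ((ε/2 - dist u y)/2) ((ε/2 - dist v y)/2))).trans
                (min_le_right _ _)
              linarith
          have hrel : Rel1 u v r := by
            intro i
            exact lt_of_lt_of_le hrd (hdle i)
          refine ⟨u, v, r, hu.1, hv.1.1, hrp, ?_, ?_, ?_, ?_, hrel⟩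
          · have hd0 : (0:ℝ) ≤ dist u y := dist_nonneg
            linarith
          · intro z hz
            have h5 := mem_closedBall.1 hz
            refine mem_ball.2 ?_
            calc dist z y ≤ dist z u + dist u y := dist_triangle _ _ _
              _ < ε := by linarith
          · intro z hz
            have h5 := mem_closedBall.1 hz
            refine mem_ball.2 ?_
            calc dist z y ≤ dist z v + dist v y := dist_triangle _ _ _
              _ < ε := by linarith
          · rw [Set.disjoint_left]
            intro z hz1 hz2
            have e1 : dist (z 0) (u 0) ≤ r := (dist_le_pi_dist z u 0).trans (mem_closedBall.1 hz1)
            have e2 : dist (z 0) (v 0) ≤ r := (dist_le_pi_dist z v 0).trans (mem_closedBall.1 hz2)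
            have e3 := hrel 0
            have : dist (u 0) (v 0) ≤ dist (u 0) (z 0) + dist (z 0) (v 0) := dist_triangle _ _ _
            rw [dist_comm (u 0) (z 0)] at this
            linarith
        obtain ⟨Q, hQne, hQperf, hQcl, hQpair⟩ := genScheme A hAne Rel1 hRel1symm split
        have hQdist : ∀ z ∈ Q, ∀ w ∈ Q, z ≠ w → ∀ i, z i ≠ w i := by
          intro z hz w hw hzw i
          obtain ⟨u, v, r, _, _, hr, hrel, hzu, hwv, _, _⟩ := hQpair z hz w hw hzw
          have e1 : dist (z i) (u i) ≤ r := (dist_le_pi_dist z u i).trans (mem_closedBall.1 hzu)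
          have e2 : dist (w i) (v i) ≤ r := (dist_le_pi_dist w v i).trans (mem_closedBall.1 hwv)
          intro h
          have e3 := hrel i
          rw [h] at e1
          have h4 : dist (u i) (v i) ≤ dist (u i) (w i) + dist (w i) (v i) := dist_triangle _ _ _
          rw [dist_comm (u i) (w i)] at h4
          linarith
        have hQcov : ∀ z ∈ Q, ∀ w ∈ Q, z ≠ w → ∃ i, G (z i) (w i) := by
          intro z hz w hw hzw
          obtain ⟨u, v, r, _, _, hr, hrel, hzu, hwv, hdisj, a, b, hab, haT, hbT⟩ :=
            hQpair z hz w hw hzw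
          have hne : ∀ k, a k ≠ b k := by
            intro k h
            exact (Set.disjoint_left.1 hdisj (hab k).1.2) (h ▸ (hab k).2.2)
          have hedges : ∀ k, ∃ i, G (a k i) (b k i) :=
            fun k => hTp _ (hab k).1.1.1 _ (hab k).2.1.1 (hne k)
          choose ie hie using hedges
          obtain ⟨i, hfreq⟩ := freq_fiber ie
          obtain ⟨φ, hφmono, hφ⟩ := Filter.extraction_of_frequently_atTop hfreq
          have hta : Tendsto (fun k => a (φ k) i) atTop (𝓝 (z i)) :=
            ((continuous_apply i).tendsto z).comp (haT.comp hφmono.tendsto_atTop)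
          have htb : Tendsto (fun k => b (φ k) i) atTop (𝓝 (w i)) :=
            ((continuous_apply i).tendsto w).comp (hbT.comp hφmono.tendsto_atTop)
          refine ⟨i, hG _ _ _ _ (fun k => ?_) hta htb (hQdist z hz w hw hzw i)⟩
          have := hie (φ k)
          rwa [hφ k] at this
        exact cliqueLemma hGsym hG (n+1) Finset.univ (by simp) Q hQne hQperf hQdist
          (fun u hu v hv huv => by
            obtain ⟨i, hi⟩ := hQcov u hu v hv huv
            exact ⟨i, Finset.mem_univ i, hi⟩)

theorem stmt_2 {X : Type*} [TopologicalSpace X] [CompactSpace X] [TopologicalSpace.MetrizableSpace X]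
    (G : X → X → Prop) (hsym : Symmetric G) (hirr : Irreflexive G)
    (hclosed : IsClosed {p : {q : X × X // q.1 ≠ q.2} | G p.1.1 p.1.2}) :
    CCC X G ↔
      ¬ ∃ C : Set X, C.Nonempty ∧ Perfect C ∧ ∀ x ∈ C, ∀ y ∈ C, x ≠ y → G x y := by
  classical
  letI : MetricSpace X := TopologicalSpace.metrizableSpaceMetric X
  have hG := seqClosedGraph_of_isClosed hirr hclosed
  constructor
  · -- CCC → no perfect clique
    intro hccc
    rintro ⟨C, hCne, hCperf, hCcl⟩
    set mk : X → Cond X G := fun x =>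
      ⟨{x}, univ, finite_singleton x,
        fun x' hx' y' hy' hne => absurd ((mem_singleton_iff.1 hx').trans
          (mem_singleton_iff.1 hy').symm) hne,
        isOpen_univ, subset_univ _⟩ with hmk
    have hinj : InjOn mk C := by
      intro x hx y hy h
      have : ({x} : Set X) = {y} := congrArg Cond.a h
      exact singleton_eq_singleton_iff.1 this
    have hantichain : ∀ p ∈ mk '' C, ∀ q ∈ mk '' C, p ≠ q → ¬ CondCompatible p q := by
      rintro p ⟨x, hx, rfl⟩ q ⟨y, hy, rfl⟩ hpq ⟨r, hrp, hrq⟩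
      have hxy : x ≠ y := fun h => hpq (by rw [h])
      have hxr : x ∈ r.a := hrp.1 rfl
      have hyr : y ∈ r.a := hrq.1 rfl
      exact r.anti x hxr y hyr hxy (hCcl x hx y hy hxy)
    have hcnt := hccc (mk '' C) hantichain
    exact perfect_uncountable hCperf hCne
      (countable_of_injective_of_countable_image hinj hcnt)
  · -- no perfect clique → CCC
    intro hnocl S hSpair
    by_contra hSc
    apply hnocl
    -- Step 1: uniformize the size of the anticliques
    obtain ⟨n, hn⟩ := uncountable_fiber hSc (fun p : Cond X G => p.fin.toFinset.card)
    set S₁ : Set (Cond X G) := {p ∈ S | p.fin.toFinset.card = n} with hS₁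
    -- Step 2: enumerations
    have htup : ∀ p : Cond X G, p ∈ S₁ → ∃ e : Fin n → X,
        (∀ i, e i ∈ p.a) ∧ (∀ x ∈ p.a, ∃ i, e i = x) ∧ Function.Injective e := by
      intro p hp
      have hcard : p.fin.toFinset.card = n := hp.2
      refine ⟨fun i => ((p.fin.toFinset.equivFin.symm (Fin.cast hcard.symm i)) : X), ?_, ?_, ?_⟩
      · intro i
        have := (p.fin.toFinset.equivFin.symm (Fin.cast hcard.symm i)).2
        rwa [Set.Finite.mem_toFinset] at this
      · intro x hx
        refine ⟨Fin.cast hcard (p.fin.toFinset.equivFin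
          ⟨x, (Set.Finite.mem_toFinset p.fin).2 hx⟩), ?_⟩
        have hcc : Fin.cast hcard.symm (Fin.cast hcard (p.fin.toFinset.equivFin
            ⟨x, (Set.Finite.mem_toFinset p.fin).2 hx⟩)) = p.fin.toFinset.equivFin
            ⟨x, (Set.Finite.mem_toFinset p.fin).2 hx⟩ := by
          apply Fin.ext
          simp
        beta_reduce
        rw [hcc, Equiv.symm_apply_apply]
      · intro i k h
        have h3 := p.fin.toFinset.equivFin.symm.injective (Subtype.coe_injective h)
        have h4 : (Fin.cast hcard.symm i).val = (Fin.cast hcard.symm k).val := by rw [h3]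
        simpa [Fin.ext_iff] using h4
    choose tup htupmem htupsurj htupinj using htup
    -- the countable dense set
    obtain ⟨D, hDc, hDd⟩ := exists_countable_dense X
    haveI : Countable ↥D := hDc.to_subtype
    -- Step 3: choose centers and radii
    have hsel : ∀ p : ↥S₁, ∃ (c : Fin n → ↥D) (δ : ℚ), 0 < (δ:ℝ) ∧
        (∀ i, tup p.1 p.2 i ∈ ball (c i : X) (δ:ℝ)) ∧
        (∀ i, ball (c i : X) (δ:ℝ) ⊆ p.1.o) ∧
        (∀ i k, i ≠ k → ∀ x ∈ ball (c i : X) (δ:ℝ), ∀ y ∈ ball (c k : X) (δ:ℝ),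
          x ≠ y ∧ ¬ G x y) := by
      rintro ⟨p, hp⟩
      set e : Fin n → X := tup p hp with he
      -- distinct non-edges
      have hne : ∀ i k : Fin n, i ≠ k → e i ≠ e k := by
        intro i k hik h
        exact hik (htupinj p hp h)
      have hnG : ∀ i k : Fin n, i ≠ k → ¬ G (e i) (e k) := by
        intro i k hik
        exact p.anti _ (htupmem p hp i) _ (htupmem p hp k) (hne i k hik)
      have hpair : ∀ q : Fin n × Fin n, ∃ δ : ℝ, 0 < δ ∧ (q.1 ≠ q.2 →
          ∀ x ∈ ball (e q.1) δ, ∀ y ∈ ball (e q.2) δ, x ≠ y ∧ ¬ G x y) := by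
        intro ⟨i, k⟩
        by_cases hik : i = k
        · exact ⟨1, one_pos, fun h => absurd hik h⟩
        · obtain ⟨δ, hδ, hδp⟩ := nonedge_nbhd hG (hne i k hik) (hnG i k hik)
          exact ⟨δ, hδ, fun _ => hδp⟩
      choose δf hδf hδfp using hpair
      have hoin : ∀ i : Fin n, ∃ ε : ℝ, 0 < ε ∧ ball (e i) ε ⊆ p.o := by
        intro i
        have := Metric.isOpen_iff.1 p.opn (e i) (p.sub (htupmem p hp i))
        obtain ⟨ε, hε, hb⟩ := this
        exact ⟨ε, hε, hb⟩
      choose εf hεf hεfp using hoin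
      obtain ⟨δ₁, hδ₁, hδ₁le⟩ := exists_pos_forall_le δf hδf
      obtain ⟨δ₂, hδ₂, hδ₂le⟩ := exists_pos_forall_le εf hεf
      set δ' : ℝ := min δ₁ δ₂ with hδ'
      have hδ'p : 0 < δ' := lt_min hδ₁ hδ₂
      -- choose centers in D
      have hcex : ∀ i : Fin n, ∃ c : ↥D, dist (e i) (c : X) < δ'/4 := by
        intro i
        obtain ⟨c, hcD, hc⟩ := hDd.exists_mem_open isOpen_ball
          (⟨e i, mem_ball_self (by linarith)⟩ : (ball (e i) (δ'/4)).Nonempty)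
        exact ⟨⟨c, hcD⟩, by have := mem_ball.1 hc; rw [dist_comm]; exact this⟩
      choose c hc using hcex
      obtain ⟨δq, hq1, hq2⟩ := exists_rat_btwn (show δ'/4 < δ'/2 by linarith)
      have hqpos : 0 < (δq:ℝ) := lt_trans (by linarith) hq1
      have hballs : ∀ i, ball (c i : X) (δq:ℝ) ⊆ ball (e i) δ' := by
        intro i z hz
        have h1 := mem_ball.1 hz
        have h2 := hc i
        refine mem_ball.2 ?_
        calc dist z (e i) ≤ dist z (c i : X) + dist (c i : X) (e i) := dist_triangle _ _ _
          _ < (δq:ℝ) + δ'/4 := by rw [dist_comm (c i : X) (e i)]; linarith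
          _ < δ' := by linarith
      refine ⟨c, δq, hqpos, ?_, ?_, ?_⟩
      · intro i
        exact mem_ball.2 (lt_trans (hc i) (by linarith))
      · intro i
        refine (hballs i).trans ?_
        refine (ball_subset_ball ?_).trans (hεfp i)
        exact le_trans (min_le_right _ _) (hδ₂le i)
      · intro i k hik x hx y hy
        refine hδfp (i, k) hik x ?_ y ?_
        · exact (ball_subset_ball (le_trans (min_le_left _ _) (hδ₁le (i,k)))) (hballs i hx)
        · exact (ball_subset_ball (le_trans (min_le_left _ _) (hδ₁le (i,k)))) (hballs k hy)
    choose cf δq hδqpos hR1 hR2 hR3 using hsel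
    -- Step 4: pigeonhole on (c, δ)
    have hS₁u : ¬(univ : Set ↥S₁).Countable := by
      intro h
      apply hn
      haveI : Countable ↥S₁ := Set.countable_univ_iff.1 h
      exact Set.countable_coe_iff.1 this
    obtain ⟨cd, hcd⟩ := uncountable_fiber hS₁u (fun p : ↥S₁ => (cf p, δq p))
    set S₂ : Set ↥S₁ := {p | (cf p, δq p) = cd} with hS₂
    have hS₂u : ¬S₂.Countable := by
      intro h
      exact hcd (h.mono (fun p hp => hp.2))
    -- the tuple map
    set tm : ↥S₁ → (Fin n → X) := fun p => tup p.1 p.2 with htm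
    have hmema : ∀ (p : ↥S₁) (x : X), x ∈ p.1.a ↔ ∃ i, tm p i = x := by
      intro p x
      constructor
      · exact htupsurj p.1 p.2 x
      · rintro ⟨i, rfl⟩
        exact htupmem p.1 p.2 i
    have hInj : InjOn tm S₂ := by
      intro p hp q hq h
      have hpa : p.1.a = q.1.a := by
        ext x
        rw [hmema p x, hmema q x, h]
      by_contra hpq
      have hpq1 : p.1 ≠ q.1 := fun h' => hpq (Subtype.ext h')
      refine hSpair p.1 p.2.1 q.1 q.2.1 hpq1 ?_
      refine ⟨⟨p.1.a, p.1.o ∩ q.1.o, p.1.fin, p.1.anti, p.1.opn.inter q.1.opn, ?_⟩, ?_, ?_⟩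
      · exact subset_inter p.1.sub (hpa ▸ q.1.sub)
      · exact ⟨subset_rfl, inter_subset_left⟩
      · exact ⟨hpa.symm.subset, inter_subset_right⟩
    have hTu : ¬(tm '' S₂).Countable := by
      intro h
      exact hS₂u (countable_of_injective_of_countable_image hInj h)
    -- edge property
    have hTedge : ∀ u ∈ tm '' S₂, ∀ v ∈ tm '' S₂, u ≠ v → ∃ i, G (u i) (v i) := by
      rintro u ⟨p, hp, rfl⟩ v ⟨q, hq, rfl⟩ hne
      have hpq : p ≠ q := fun h => hne (by rw [h])
      have hpq1 : p.1 ≠ q.1 := fun h' => hpq (Subtype.ext h')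
      have hincomp := hSpair p.1 p.2.1 q.1 q.2.1 hpq1
      have hcf : cf p = cf q := by
        have h1 : (cf p, δq p) = cd := hp
        have h2 : (cf q, δq q) = cd := hq
        rw [← h2] at h1
        exact congrArg Prod.fst h1
      have hdq : δq p = δq q := by
        have h1 : (cf p, δq p) = cd := hp
        have h2 : (cf q, δq q) = cd := hq
        rw [← h2] at h1
        exact congrArg Prod.snd h1
      -- mutual containments
      have hqp : q.1.a ⊆ p.1.o := by
        intro x hx
        obtain ⟨i, rfl⟩ := (hmema q x).1 hx
        have h5 := hR1 q i
        rw [← hcf, ← hdq] at h5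
        exact hR2 p i h5
      have hpq2 : p.1.a ⊆ q.1.o := by
        intro x hx
        obtain ⟨i, rfl⟩ := (hmema p x).1 hx
        have h5 := hR1 p i
        rw [hcf, hdq] at h5
        exact hR2 q i h5
      have hnanti : ¬ Anticlique G (p.1.a ∪ q.1.a) := by
        intro hanti
        refine hincomp ?_
        refine ⟨⟨p.1.a ∪ q.1.a, p.1.o ∩ q.1.o, p.1.fin.union q.1.fin, hanti,
          p.1.opn.inter q.1.opn, ?_⟩, ?_, ?_⟩
        · refine union_subset (subset_inter p.1.sub hpq2) (subset_inter hqp q.1.sub)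
        · exact ⟨subset_union_left, inter_subset_left⟩
        · exact ⟨subset_union_right, inter_subset_right⟩
      rw [Anticlique] at hnanti
      push_neg at hnanti
      obtain ⟨x, hxm, y, hym, hxy, hGxy⟩ := hnanti
      rcases hxm with hxp | hxq
      · rcases hym with hyp | hyq
        · exact absurd hGxy (p.1.anti x hxp y hyp hxy)
        · -- x ∈ p.a, y ∈ q.a
          obtain ⟨i, rfl⟩ := (hmema p x).1 hxp
          obtain ⟨k, rfl⟩ := (hmema q y).1 hyq
          by_cases hik : i = k
          · subst hik
            exact ⟨i, hGxy⟩
          · exfalso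
            have h5 := hR1 q k
            rw [← hcf, ← hdq] at h5
            exact (hR3 p i k hik _ (hR1 p i) _ h5).2 hGxy
      · rcases hym with hyp | hyq
        · -- x ∈ q.a, y ∈ p.a
          obtain ⟨k, rfl⟩ := (hmema q x).1 hxq
          obtain ⟨i, rfl⟩ := (hmema p y).1 hyp
          by_cases hik : i = k
          · subst hik
            exact ⟨i, hsym hGxy⟩
          · exfalso
            have h5 := hR1 q k
            rw [← hcf, ← hdq] at h5
            exact (hR3 p k i (fun h => hik h.symm) _ h5 _ (hR1 p i)).2 hGxy
        · exact absurd hGxy (q.1.anti x hxq y hyq hxy)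
    exact grandLemma hsym hirr hG n (tm '' S₂) hTu hTedge
end

section
/- Let G be a closed graph on a compact metrizable space X. The poset P_G is σ-centered (a countable union of centered sets) if and only if X is the union of countably many G-anticliques (i.e. G has countable chromatic number). -/
open Set

/-- A set of conditions is centered if every finite subset has a common
lower bound in `P_G`. -/
def Centered {X : Type*} [TopologicalSpace X] {G : X → X → Prop}
    (A : Set (Cond X G)) : Prop :=
  ∀ b : Finset (Cond X G), ↑b ⊆ A → ∃ q : Cond X G, ∀ p ∈ b, CondLE q p

/-- `P_G` is σ-centered: it is a countable union of centered sets. -/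
def SigmaCentered (X : Type*) [TopologicalSpace X] (G : X → X → Prop) : Prop :=
  ∃ A : ℕ → Set (Cond X G), (∀ n, Centered (A n)) ∧ (⋃ n, A n) = Set.univ

lemma anticlique_mono {X : Type*} {G : X → X → Prop} {A B : Set X}
    (h : A ⊆ B) (hB : Anticlique G B) : Anticlique G A :=
  fun x hx y hy => hB x (h hx) y (h hy)

lemma anticlique_empty {X : Type*} (G : X → X → Prop) : Anticlique G (∅ : Set X) :=
  fun x hx => absurd hx (notMem_empty x)

lemma centered_empty {X : Type*} [TopologicalSpace X] {G : X → X → Prop} :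
    Centered (∅ : Set (Cond X G)) := by
  intro b hb
  refine ⟨⟨∅, ∅, finite_empty, anticlique_empty G, isOpen_empty, Subset.rfl⟩, ?_⟩
  intro p hp
  exact absurd (hb hp) (notMem_empty p)

lemma sigmaCentered_of_cover {X : Type*} [TopologicalSpace X] {G : X → X → Prop}
    (hD : IsOpen {p : X × X | p.1 ≠ p.2 ∧ ¬ G p.1 p.2})
    (f : ℕ → Set X) (hfo : ∀ n, IsOpen (f n))
    (hfb : ∀ (o : Set X), IsOpen o → ∀ x ∈ o, ∃ n, x ∈ f n ∧ f n ⊆ o)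
    (B : ℕ → Set X) (hB : ∀ n, Anticlique G (B n)) (hBc : (⋃ n, B n) = univ) :
    SigmaCentered X G := by
  classical
  set T : Finset (ℕ × ℕ) → Set X := fun S => ⋃ p ∈ S, f p.1 ∩ B p.2 with hT
  set Cls : Finset (ℕ × ℕ) → Set (Cond X G) := fun S =>
    {c | c.a ⊆ T S ∧ Anticlique G (T S) ∧ ∀ p ∈ S, f p.1 ⊆ c.o} with hCls
  -- each class is centered
  have hcent : ∀ S, Centered (Cls S) := by
    intro S b hb
    have hbmem : ∀ p ∈ b, p ∈ Cls S := fun p hp => hb hp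
    refine ⟨⟨⋃ p ∈ (↑b : Set (Cond X G)), p.a, ⋂ p ∈ (↑b : Set (Cond X G)), p.o,
      ?_, ?_, ?_, ?_⟩, ?_⟩
    · exact Set.Finite.biUnion b.finite_toSet (fun p _ => p.fin)
    · intro x hx y hy hxy
      obtain ⟨p, hp, hxp⟩ := mem_iUnion₂.mp hx
      obtain ⟨p', hp', hyp⟩ := mem_iUnion₂.mp hy
      have h1 := hbmem p hp
      have h2 := hbmem p' hp'
      exact h1.2.1 x (h1.1 hxp) y (h2.1 hyp) hxy
    · exact Set.Finite.isOpen_biInter b.finite_toSet (fun p _ => p.opn)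
    · intro x hx
      obtain ⟨p, hp, hxp⟩ := mem_iUnion₂.mp hx
      have hxT : x ∈ T S := (hbmem p hp).1 hxp
      refine mem_iInter₂.mpr fun p' hp' => ?_
      obtain ⟨pr, hpr, hxpr⟩ := mem_iUnion₂.mp hxT
      exact (hbmem p' hp').2.2 pr hpr hxpr.1
    · intro p hp
      constructor
      · exact fun x hx => mem_iUnion₂.mpr ⟨p, hp, hx⟩
      · exact fun x hx => (mem_iInter₂.mp hx) p hp
  -- every condition belongs to some class
  have hcover : ∀ c : Cond X G, ∃ S, c ∈ Cls S := by
    intro c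
    have key : ∀ x ∈ c.a, ∀ y ∈ c.a, x ≠ y →
        ∃ u v : Set X, IsOpen u ∧ IsOpen v ∧ x ∈ u ∧ y ∈ v ∧
          ∀ z ∈ u, ∀ w ∈ v, ¬ G z w := by
      intro x hx y hy hxy
      have hmem : (x, y) ∈ {p : X × X | p.1 ≠ p.2 ∧ ¬ G p.1 p.2} :=
        ⟨hxy, c.anti x hx y hy hxy⟩
      obtain ⟨u, v, hu, hv, hxu, hyv, huv⟩ := isOpen_prod_iff.mp hD x y hmem
      exact ⟨u, v, hu, hv, hxu, hyv, fun z hz w hw => (huv (mk_mem_prod hz hw)).2⟩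
    choose! u v hu hv hxu hyv hGuv using key
    set s : Finset X := c.fin.toFinset with hs
    have hmem_s : ∀ {x}, x ∈ s ↔ x ∈ c.a := fun {x} => c.fin.mem_toFinset
    set W : X → Set X := fun x => c.o ∩ ⋂ y ∈ s.erase x, (u x y ∩ v y x) with hW
    have hWopen : ∀ x ∈ c.a, IsOpen (W x) := by
      intro x hx
      refine c.opn.inter (isOpen_biInter_finset fun y hy => ?_)
      have hy' : y ∈ c.a := hmem_s.mp (Finset.mem_of_mem_erase hy)
      have hne : x ≠ y := (Finset.ne_of_mem_erase hy).symm
      exact (hu x hx y hy' hne).inter (hv y hy' x hx hne.symm)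
    have hxW : ∀ x ∈ c.a, x ∈ W x := by
      intro x hx
      refine ⟨c.sub hx, ?_⟩
      refine mem_iInter₂.mpr fun y hy => ?_
      have hy' : y ∈ c.a := hmem_s.mp (Finset.mem_of_mem_erase hy)
      have hne : x ≠ y := (Finset.ne_of_mem_erase hy).symm
      exact ⟨hxu x hx y hy' hne, hyv y hy' x hx hne.symm⟩
    have hWedge : ∀ x ∈ c.a, ∀ y ∈ c.a, x ≠ y →
        ∀ z ∈ W x, ∀ w ∈ W y, ¬ G z w := by
      intro x hx y hy hxy z hz w hw
      have hys : y ∈ s.erase x := Finset.mem_erase.mpr ⟨hxy.symm, hmem_s.mpr hy⟩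
      have hxs : x ∈ s.erase y := Finset.mem_erase.mpr ⟨hxy, hmem_s.mpr hx⟩
      have hzu : z ∈ u x y := ((mem_iInter₂.mp hz.2) y hys).1
      have hwv : w ∈ v x y := ((mem_iInter₂.mp hw.2) x hxs).2
      exact hGuv x hx y hy hxy z hzu w hwv
    have hbas : ∀ x ∈ c.a, ∃ nx, x ∈ f nx ∧ f nx ⊆ W x :=
      fun x hx => hfb (W x) (hWopen x hx) x (hxW x hx)
    choose! n hn1 hn2 using hbas
    have hcol : ∀ x : X, ∃ mx, x ∈ B mx := by
      intro x
      have : x ∈ ⋃ k, B k := hBc ▸ mem_univ x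
      exact mem_iUnion.mp this
    choose m hm using hcol
    refine ⟨s.image (fun x => (n x, m x)), ?_, ?_, ?_⟩
    · intro x hx
      refine mem_iUnion₂.mpr ⟨(n x, m x), Finset.mem_image_of_mem _ (hmem_s.mpr hx),
        hn1 x hx, hm x⟩
    · intro z hz w hw hzw
      obtain ⟨p, hp, hzp⟩ := mem_iUnion₂.mp hz
      obtain ⟨p', hp', hwp⟩ := mem_iUnion₂.mp hw
      obtain ⟨x, hxs, hxp⟩ := Finset.mem_image.mp hp
      obtain ⟨y, hys, hyp⟩ := Finset.mem_image.mp hp'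
      have hx : x ∈ c.a := hmem_s.mp hxs
      have hy : y ∈ c.a := hmem_s.mp hys
      subst hxp; subst hyp
      by_cases hmxy : m x = m y
      · exact hB (m x) z hzp.2 w (hmxy ▸ hwp.2) hzw
      · have hxy : x ≠ y := fun h => hmxy (h ▸ rfl)
        exact hWedge x hx y hy hxy z (hn2 x hx hzp.1) w (hn2 y hy hwp.1)
    · intro p hp
      obtain ⟨x, hxs, hxp⟩ := Finset.mem_image.mp hp
      have hx : x ∈ c.a := hmem_s.mp hxs
      subst hxp
      exact (hn2 x hx).trans inter_subset_left
  -- assemble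
  refine ⟨fun k => ((Encodable.decode k : Option (Finset (ℕ × ℕ)))).elim ∅ Cls, ?_, ?_⟩
  · intro k
    cases hk : (Encodable.decode k : Option (Finset (ℕ × ℕ))) with
    | none => simpa [hk] using centered_empty
    | some S => simpa [hk] using hcent S
  · refine eq_univ_of_forall fun c => ?_
    obtain ⟨S, hS⟩ := hcover c
    refine mem_iUnion.mpr ⟨Encodable.encode S, ?_⟩
    simpa [Encodable.encodek] using hS

/-- The condition `({x}, X)`. -/
def singCond {X : Type*} [TopologicalSpace X] (G : X → X → Prop) (x : X) :
    Cond X G :=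
  ⟨{x}, univ, finite_singleton x,
    fun a ha b hb hab => absurd (ha.trans hb.symm) hab,
    isOpen_univ, subset_univ _⟩

theorem stmt_3 {X : Type*} [TopologicalSpace X] [CompactSpace X]
    [TopologicalSpace.MetrizableSpace X]
    (G : X → X → Prop) (hsym : Symmetric G) (hirr : Irreflexive G)
    (hclosed : IsClosed {p : {q : X × X // q.1 ≠ q.2} | G p.1.1 p.1.2}) :
    SigmaCentered X G ↔
      ∃ B : ℕ → Set X, (∀ n, Anticlique G (B n)) ∧ (⋃ n, B n) = Set.univ := by
  classical
  constructor
  · rintro ⟨A, hcent, hcov⟩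
    set px : X → Cond X G := singCond G with hpx
    refine ⟨fun k => {x | px x ∈ A k}, ?_, ?_⟩
    · intro k x hx y hy hxy
      have hsub : (↑({px x, px y} : Finset (Cond X G)) : Set (Cond X G)) ⊆ A k := by
        intro p hp
        simp only [Finset.coe_insert, Finset.coe_singleton, mem_insert_iff,
          mem_singleton_iff] at hp
        rcases hp with h | h
        · exact h ▸ hx
        · exact h ▸ hy
      obtain ⟨q, hq⟩ := hcent k _ hsub
      have h1 := hq (px x) (Finset.mem_insert_self _ _)
      have h2 := hq (px y) (Finset.mem_insert_of_mem (Finset.mem_singleton_self _))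
      have hxq : x ∈ q.a := h1.1 rfl
      have hyq : y ∈ q.a := h2.1 rfl
      exact q.anti x hxq y hyq hxy
    · refine eq_univ_of_forall fun x => ?_
      have : px x ∈ ⋃ k, A k := hcov ▸ mem_univ (px x)
      obtain ⟨k, hk⟩ := mem_iUnion.mp this
      exact mem_iUnion.mpr ⟨k, hk⟩
  · rintro ⟨B, hB, hBc⟩
    -- the off-diagonal non-edge set is open
    have hOff : IsOpen {q : X × X | q.1 ≠ q.2} :=
      (isClosed_diagonal (X := X)).isOpen_compl
    have himg : IsOpen (Subtype.val '' {p : {q : X × X // q.1 ≠ q.2} | G p.1.1 p.1.2}ᶜ) :=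
      hOff.isOpenMap_subtype_val _ hclosed.isOpen_compl
    have hD : IsOpen {p : X × X | p.1 ≠ p.2 ∧ ¬ G p.1 p.2} := by
      convert himg using 1
      ext ⟨x, y⟩
      constructor
      · rintro ⟨hne, hg⟩
        exact ⟨⟨(x, y), hne⟩, hg, rfl⟩
      · rintro ⟨⟨⟨a, b⟩, hne⟩, hg, h⟩
        cases h
        exact ⟨hne, hg⟩
    -- a countable family of open sets forming a basis
    obtain ⟨f, hf⟩ := (Set.Countable.insert ∅
      (TopologicalSpace.countable_countableBasis X)).exists_eq_range
      (insert_nonempty _ _)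
    have hfo : ∀ k, IsOpen (f k) := by
      intro k
      have hk : f k ∈ insert ∅ (TopologicalSpace.countableBasis X) :=
        hf ▸ mem_range_self k
      rcases mem_insert_iff.mp hk with h | h
      · rw [h]; exact isOpen_empty
      · exact TopologicalSpace.isOpen_of_mem_countableBasis h
    have hfb : ∀ (o : Set X), IsOpen o → ∀ x ∈ o, ∃ k, x ∈ f k ∧ f k ⊆ o := by
      intro o ho x hx
      obtain ⟨t, ht, hxt, hto⟩ :=
        (TopologicalSpace.isBasis_countableBasis X).exists_subset_of_mem_open hx ho
      have : t ∈ range f := hf ▸ mem_insert_of_mem _ ht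
      obtain ⟨k, hk⟩ := this
      exact ⟨k, hk ▸ hxt, hk ▸ hto⟩
    exact sigmaCentered_of_cover hD f hfo hfb B hB hBc
end

section
/- Let G be a closed graph on a compact metrizable space X. The poset P_G is σ-liminf-centered (a countable union of liminf-centered sets) if and only if X is the union of countably many G-loose sets (i.e. G has countable loose number). -/
open Set

/-- A set of conditions is liminf-centered if for every sequence of its
elements there is a condition `q` such that every `r ≤ q` is compatible with
infinitely many members of the sequence. -/
def LiminfCentered {X : Type*} [TopologicalSpace X] {G : X → X → Prop}
    (A : Set (Cond X G)) : Prop :=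
  ∀ p : ℕ → Cond X G, (∀ i, p i ∈ A) →
    ∃ q : Cond X G, ∀ r : Cond X G, CondLE r q →
      {i : ℕ | CondCompatible (p i) r}.Infinite

/-- `P_G` is σ-liminf-centered: it is a countable union of liminf-centered sets. -/
def SigmaLiminfCentered (X : Type*) [TopologicalSpace X] (G : X → X → Prop) : Prop :=
  ∃ A : ℕ → Set (Cond X G), (∀ n, LiminfCentered (A n)) ∧ (⋃ n, A n) = Set.univ

lemma nbhd_not_rel {X : Type*} [MetricSpace X] {G : X → X → Prop}
    (hclosed : IsClosed {p : {q : X × X // q.1 ≠ q.2} | G p.1.1 p.1.2})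
    {a b : X} (hab : a ≠ b) (hG : ¬ G a b) :
    ∃ δ > 0, ∀ v w, dist v a < δ → dist w b < δ → v ≠ w ∧ ¬ G v w := by
  rw [isClosed_induced_iff] at hclosed
  obtain ⟨C, hC, hCeq⟩ := hclosed
  have hmem : ∀ (q : X × X), q.1 ≠ q.2 → (G q.1 q.2 ↔ q ∈ C) := by
    intro q hq
    constructor
    · intro h
      have : (⟨q, hq⟩ : {q : X × X // q.1 ≠ q.2}) ∈ Subtype.val ⁻¹' C := by
        rw [hCeq]; exact h
      exact this
    · intro h
      have : (⟨q, hq⟩ : {q : X × X // q.1 ≠ q.2}) ∈ Subtype.val ⁻¹' C := h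
      rw [hCeq] at this; exact this
  have habC : (a, b) ∉ C := fun h => hG ((hmem (a, b) hab).2 h)
  obtain ⟨ε, hε, hball⟩ := Metric.isOpen_iff.1 hC.isOpen_compl (a, b) habC
  have hd : 0 < dist a b := dist_pos.2 hab
  refine ⟨min ε (dist a b / 2), lt_min hε (by linarith), fun v w hv hw => ?_⟩
  have hv1 : dist v a < ε := lt_of_lt_of_le hv (min_le_left _ _)
  have hw1 : dist w b < ε := lt_of_lt_of_le hw (min_le_left _ _)
  have hv2 : dist v a < dist a b / 2 := lt_of_lt_of_le hv (min_le_right _ _)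
  have hw2 : dist w b < dist a b / 2 := lt_of_lt_of_le hw (min_le_right _ _)
  have hvw : v ≠ w := by
    intro h; subst h
    have h1 : dist a b ≤ dist v a + dist v b := by
      rw [dist_comm v a]; exact dist_triangle a v b
    linarith
  refine ⟨hvw, fun hGvw => ?_⟩
  have : (v, w) ∈ Metric.ball (a, b) ε := by
    rw [Metric.mem_ball, Prod.dist_eq]
    exact max_lt hv1 hw1
  exact hball this ((hmem (v, w) hvw).1 hGvw)

/-- The countable classification of conditions used to witness σ-liminf-centeredness. -/
def ClassSet {X : Type*} [MetricSpace X] (G : X → X → Prop) (A : ℕ → Set X)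
    (i : (Σ k : ℕ, (Fin k → ℕ)) × ℕ) : Set (Cond X G) :=
  {p | ∃ x : Fin i.1.1 → X,
    p.a = Set.range x ∧
    (∀ j, x j ∈ A (i.1.2 j)) ∧
    (∀ j, Metric.closedBall (x j) ((1 : ℝ) / ((i.2 : ℝ) + 1)) ⊆ p.o) ∧
    (∀ j j' : Fin i.1.1, j ≠ j' → ∀ v ∈ Metric.closedBall (x j) ((1 : ℝ) / ((i.2 : ℝ) + 1)),
      ∀ w ∈ Metric.closedBall (x j') ((1 : ℝ) / ((i.2 : ℝ) + 1)), v ≠ w ∧ ¬ G v w)}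

lemma class_centered {X : Type*} [MetricSpace X] [CompactSpace X] {G : X → X → Prop}
    (hsym : Symmetric G)
    (hclosed : IsClosed {p : {q : X × X // q.1 ≠ q.2} | G p.1.1 p.1.2})
    {A : ℕ → Set X} (hloose : ∀ n, Loose G (A n))
    (i : (Σ k : ℕ, (Fin k → ℕ)) × ℕ) :
    LiminfCentered (ClassSet G A i) := by
  obtain ⟨⟨k, s⟩, m⟩ := i
  intro p hp
  simp only [ClassSet, Set.mem_setOf_eq] at hp
  set ε : ℝ := (1 : ℝ) / ((m : ℝ) + 1) with hεdef
  have hεpos : 0 < ε := by positivity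
  choose z hz1 hz2 hz3 hz4 using hp
  obtain ⟨xs, φ, hφ, hconv⟩ := CompactSpace.tendsto_subseq z
  have hconvj : ∀ j : Fin k, Filter.Tendsto (fun nn => z (φ nn) j) Filter.atTop (nhds (xs j)) := by
    intro j
    rw [tendsto_pi_nhds] at hconv
    exact hconv j
  have hanti : Anticlique G (Set.range xs) := by
    rintro u ⟨j, rfl⟩ v ⟨j', rfl⟩ hne
    have hjj : j ≠ j' := fun h => hne (by rw [h])
    have h1 := (hconvj j).eventually (Filter.eventually_mem_set.2
      (Metric.closedBall_mem_nhds (xs j) hεpos))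
    have h2 := (hconvj j').eventually (Filter.eventually_mem_set.2
      (Metric.closedBall_mem_nhds (xs j') hεpos))
    obtain ⟨nn, hnj, hnj'⟩ := (h1.and h2).exists
    have hv : xs j ∈ Metric.closedBall (z (φ nn) j) ε := by
      rw [Metric.mem_closedBall, dist_comm]; exact Metric.mem_closedBall.1 hnj
    have hw : xs j' ∈ Metric.closedBall (z (φ nn) j') ε := by
      rw [Metric.mem_closedBall, dist_comm]; exact Metric.mem_closedBall.1 hnj'
    exact (hz4 (φ nn) j j' hjj _ hv _ hw).2
  refine ⟨⟨Set.range xs, ⋃ j, Metric.ball (xs j) (ε / 2), Set.finite_range xs, hanti,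
    isOpen_iUnion (fun j => Metric.isOpen_ball), ?_⟩, ?_⟩
  · rintro u ⟨j, rfl⟩
    exact mem_iUnion.2 ⟨j, Metric.mem_ball_self (by positivity)⟩
  · rintro r ⟨hr1, hr2⟩
    simp only at hr1 hr2
    have E1 : ∀ j : Fin k, ∀ᶠ nn in Filter.atTop, z (φ nn) j ∈ Metric.ball (xs j) (ε / 2) :=
      fun j => (hconvj j).eventually (Filter.eventually_mem_set.2
        (Metric.ball_mem_nhds (xs j) (by positivity)))
    have E2 : ∀ j : Fin k, ∀ᶠ nn in Filter.atTop, z (φ nn) j ∈ r.o :=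
      fun j => (hconvj j).eventually (Filter.eventually_mem_set.2
        (r.opn.mem_nhds (r.sub (hr1 ⟨j, rfl⟩))))
    have E3 : ∀ u ∈ r.a, ∀ j : Fin k, ∀ᶠ nn in Filter.atTop,
        (u ≠ z (φ nn) j → ¬ G u (z (φ nn) j)) := by
      intro u hu j
      by_cases huj : u = xs j
      · subst huj
        obtain ⟨O, hO, hxO, hOno⟩ := hloose (s j) (xs j)
        filter_upwards [(hconvj j).eventually (Filter.eventually_mem_set.2
          (hO.mem_nhds hxO))] with nn hnn _
        exact hOno _ (hz2 (φ nn) j) hnn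
      · have hnG : ¬ G u (xs j) := r.anti u hu (xs j) (hr1 ⟨j, rfl⟩) huj
        obtain ⟨δ, hδpos, hδ⟩ := nbhd_not_rel hclosed huj hnG
        filter_upwards [(hconvj j).eventually (Filter.eventually_mem_set.2
          (Metric.ball_mem_nhds (xs j) hδpos))] with nn hnn hneq
        exact (hδ u (z (φ nn) j) (by simpa using hδpos) (Metric.mem_ball.1 hnn)).2
    have Eall : ∀ᶠ nn in Filter.atTop,
        (∀ j : Fin k, z (φ nn) j ∈ Metric.ball (xs j) (ε / 2)) ∧
        (∀ j : Fin k, z (φ nn) j ∈ r.o) ∧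
        (∀ u ∈ r.a, ∀ j : Fin k, u ≠ z (φ nn) j → ¬ G u (z (φ nn) j)) := by
      refine (Filter.eventually_all.2 E1).and ((Filter.eventually_all.2 E2).and ?_)
      exact (Filter.eventually_all_finite r.fin).2 (fun u hu => Filter.eventually_all.2 (E3 u hu))
    obtain ⟨N, hN⟩ := Filter.eventually_atTop.1 Eall
    have hcompat : ∀ nn, N ≤ nn → CondCompatible (p (φ nn)) r := by
      intro nn hnn
      obtain ⟨F1, F2, F3⟩ := hN nn hnn
      have hsub' : r.a ∪ (p (φ nn)).a ⊆ r.o ∩ (p (φ nn)).o := by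
        rintro u (hu | hu)
        · refine ⟨r.sub hu, ?_⟩
          obtain ⟨j', hj'⟩ := mem_iUnion.1 (hr2 (r.sub hu))
          refine hz3 (φ nn) j' ?_
          rw [Metric.mem_closedBall]
          have h1 : dist u (xs j') < ε / 2 := Metric.mem_ball.1 hj'
          have h2 : dist (xs j') (z (φ nn) j') < ε / 2 := by
            rw [dist_comm]; exact Metric.mem_ball.1 (F1 j')
          calc dist u (z (φ nn) j')
              ≤ dist u (xs j') + dist (xs j') (z (φ nn) j') := dist_triangle _ _ _
            _ ≤ ε := by linarith
        · rw [hz1 (φ nn)] at hu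
          obtain ⟨j, rfl⟩ := hu
          exact ⟨F2 j, (p (φ nn)).sub (by rw [hz1 (φ nn)]; exact ⟨j, rfl⟩)⟩
      have hanti' : Anticlique G (r.a ∪ (p (φ nn)).a) := by
        have hcross : ∀ u ∈ r.a, ∀ v ∈ (p (φ nn)).a, u ≠ v → ¬ G u v := by
          intro u hu v hv hne
          rw [hz1 (φ nn)] at hv
          obtain ⟨j, rfl⟩ := hv
          exact F3 u hu j hne
        rintro u (hu | hu) v (hv | hv) hne
        · exact r.anti u hu v hv hne
        · exact hcross u hu v hv hne
        · exact fun hG => hcross v hv u hu (Ne.symm hne) (hsym hG)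
        · exact (p (φ nn)).anti u hu v hv hne
      exact ⟨⟨r.a ∪ (p (φ nn)).a, r.o ∩ (p (φ nn)).o, r.fin.union (p (φ nn)).fin, hanti',
        r.opn.inter (p (φ nn)).opn, hsub'⟩,
        ⟨subset_union_right, inter_subset_right⟩, ⟨subset_union_left, inter_subset_left⟩⟩
    apply Set.infinite_of_injective_forall_mem (f := fun nn : ℕ => φ (N + nn))
    · intro a b hab
      exact Nat.add_left_cancel (hφ.injective hab)
    · intro a
      exact hcompat (N + a) (Nat.le_add_right N a)
/-- The singleton condition. -/
def mk1 {X : Type*} [TopologicalSpace X] {G : X → X → Prop} (hirr : Irreflexive G)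
    (x : X) : Cond X G where
  a := {x}
  o := univ
  fin := finite_singleton x
  anti := by
    intro u hu v hv huv
    rw [mem_singleton_iff] at hu hv
    exact absurd (hu.trans hv.symm) huv
  opn := isOpen_univ
  sub := subset_univ _

lemma dir1 {X : Type*} [MetricSpace X] {G : X → X → Prop} (hirr : Irreflexive G)
    (h : SigmaLiminfCentered X G) :
    ∃ A : ℕ → Set X, (∀ n, Loose G (A n)) ∧ (⋃ n, A n) = Set.univ := by
  obtain ⟨A, hA, hAu⟩ := h
  refine ⟨fun n => {x | mk1 hirr x ∈ A n}, ?_, ?_⟩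
  · -- each is loose
    intro n x
    by_contra hcon
    push_neg at hcon
    have hbad : ∀ O : Set X, IsOpen O → x ∈ O → ∃ y, y ∈ {x | mk1 hirr x ∈ A n} ∧ y ∈ O ∧ G x y := by
      intro O hO hxO
      obtain ⟨y, hy1, hy2, hy3⟩ := hcon O hO hxO
      exact ⟨y, hy1, hy2, hy3⟩
    have hy : ∀ i : ℕ, ∃ y, y ∈ {x | mk1 hirr x ∈ A n} ∧ y ∈ Metric.ball x (1 / (i + 1)) ∧ G x y := by
      intro i
      refine hbad _ Metric.isOpen_ball (Metric.mem_ball_self ?_)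
      positivity
    choose y hyA hyB hyG using hy
    obtain ⟨q, hq⟩ := hA n (fun i => mk1 hirr (y i)) hyA
    by_cases hx : x ∈ q.a
    · have hinf := hq q ⟨subset_rfl, subset_rfl⟩
      obtain ⟨i, hi⟩ := hinf.nonempty
      obtain ⟨r', ⟨hr1, _⟩, ⟨hr3, _⟩⟩ := hi
      have hxy : x ≠ y i := fun he => hirr x (he ▸ hyG i)
      exact r'.anti x (hr3 hx) (y i) (hr1 rfl) hxy (hyG i)
    · -- x not in q.a; shrink
      have hfin : IsClosed q.a := q.fin.isClosed
      obtain ⟨δ, hδ, hball⟩ := Metric.isOpen_iff.1 hfin.isOpen_compl x hx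
      have hsub : q.a ⊆ q.o ∩ (Metric.closedBall x (δ / 2))ᶜ := by
        intro u hu
        refine ⟨q.sub hu, fun hcb => ?_⟩
        have : u ∈ Metric.ball x δ := by
          rw [Metric.mem_ball]
          calc dist u x ≤ δ / 2 := Metric.mem_closedBall.1 hcb
          _ < δ := by linarith
        exact hball this hu
      set r : Cond X G := ⟨q.a, q.o ∩ (Metric.closedBall x (δ / 2))ᶜ, q.fin, q.anti,
        q.opn.inter Metric.isClosed_closedBall.isOpen_compl, hsub⟩ with hr
      have hinf := hq r ⟨subset_rfl, inter_subset_left⟩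
      obtain ⟨M, hM⟩ := exists_nat_one_div_lt (ε := (δ:ℝ) / 2) (by linarith)
      obtain ⟨i, hiS, hiM⟩ := hinf.exists_gt M
      obtain ⟨r', ⟨hr1, _⟩, ⟨_, hr4⟩⟩ := hiS
      have hyo : y i ∈ r.o := hr4 (r'.sub (hr1 rfl))
      have : y i ∉ Metric.closedBall x (δ / 2) := hyo.2
      apply this
      rw [Metric.mem_closedBall, dist_comm]
      have h1 : dist x (y i) < 1 / (i + 1) := Metric.mem_ball'.1 (hyB i)
      have h2 : (1 : ℝ) / (i + 1) ≤ 1 / (M + 1) := by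
        apply one_div_le_one_div_of_le
        · positivity
        · have : (M : ℝ) < i := by exact_mod_cast hiM
          linarith
      linarith
  · -- cover
    rw [eq_univ_iff_forall]
    intro x
    have : mk1 hirr x ∈ ⋃ n, A n := by rw [hAu]; trivial
    obtain ⟨n, hn⟩ := mem_iUnion.1 this
    exact mem_iUnion.2 ⟨n, hn⟩

lemma class_cover {X : Type*} [MetricSpace X] {G : X → X → Prop}
    (hclosed : IsClosed {p : {q : X × X // q.1 ≠ q.2} | G p.1.1 p.1.2})
    {A : ℕ → Set X} (hcov : ∀ y : X, ∃ n, y ∈ A n) (p : Cond X G) :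
    ∃ i, p ∈ ClassSet G A i := by
  choose g hg using hcov
  have hfin := p.fin
  set k := hfin.toFinset.card with hk
  set e := hfin.toFinset.equivFin with he
  set x : Fin k → X := fun j => (e.symm j : X) with hx
  have hxmem : ∀ j, x j ∈ p.a := fun j => hfin.mem_toFinset.1 (e.symm j).2
  have hxinj : Function.Injective x := fun j j' h => e.symm.injective (Subtype.ext h)
  have hxrange : Set.range x = p.a := by
    ext y; constructor
    · rintro ⟨j, rfl⟩; exact hxmem j
    · intro hy
      refine ⟨e ⟨y, hfin.mem_toFinset.2 hy⟩, ?_⟩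
      simp [hx]
  have hδ1 : ∀ j : Fin k, ∃ δ > 0, Metric.ball (x j) δ ⊆ p.o := fun j =>
    Metric.isOpen_iff.1 p.opn (x j) (p.sub (hxmem j))
  choose d1 hd1pos hd1 using hδ1
  have hδ2 : ∀ j j' : Fin k, ∃ δ > 0, j ≠ j' →
      ∀ v w, dist v (x j) < δ → dist w (x j') < δ → v ≠ w ∧ ¬ G v w := by
    intro j j'
    by_cases hjj : j = j'
    · exact ⟨1, one_pos, fun h => absurd hjj h⟩
    · have hne : x j ≠ x j' := fun h => hjj (hxinj h)
      have hnG : ¬ G (x j) (x j') := p.anti _ (hxmem j) _ (hxmem j') hne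
      obtain ⟨δ, hδ, hδ'⟩ := nbhd_not_rel hclosed hne hnG
      exact ⟨δ, hδ, fun _ => hδ'⟩
  choose d2 hd2pos hd2 using hδ2
  obtain ⟨δ₀, hδ₀pos, hδ₀1, hδ₀2⟩ :
      ∃ δ₀ > 0, (∀ j, δ₀ ≤ d1 j) ∧ (∀ j j', δ₀ ≤ d2 j j') := by
    rcases isEmpty_or_nonempty (Fin k) with hk0 | hk1
    · exact ⟨1, one_pos, fun j => (hk0.false j).elim, fun j => (hk0.false j).elim⟩
    · have hne1 : (Finset.univ : Finset (Fin k)).Nonempty := Finset.univ_nonempty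
      have hne2 : (Finset.univ : Finset (Fin k × Fin k)).Nonempty := Finset.univ_nonempty
      refine ⟨min (Finset.univ.inf' hne1 d1)
        (Finset.univ.inf' hne2 (fun jj => d2 jj.1 jj.2)), ?_, ?_, ?_⟩
      · refine lt_min ?_ ?_
        · exact (Finset.lt_inf'_iff hne1).2 fun j _ => hd1pos j
        · exact (Finset.lt_inf'_iff hne2).2 fun jj _ => hd2pos jj.1 jj.2
      · intro j
        exact le_trans (min_le_left _ _) (Finset.inf'_le _ (Finset.mem_univ j))
      · intro j j'
        exact le_trans (min_le_right _ _) (Finset.inf'_le _ (Finset.mem_univ (j, j')))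
  obtain ⟨m, hm⟩ := exists_nat_one_div_lt hδ₀pos
  refine ⟨⟨⟨k, fun j => g (x j)⟩, m⟩, x, hxrange.symm, fun j => hg (x j), ?_, ?_⟩
  · intro j y hy
    refine hd1 j ?_
    rw [Metric.mem_ball]
    calc dist y (x j) ≤ (1 : ℝ) / ((m : ℝ) + 1) := Metric.mem_closedBall.1 hy
      _ < δ₀ := hm
      _ ≤ d1 j := hδ₀1 j
  · intro j j' hjj v hv w hw
    refine hd2 j j' hjj v w ?_ ?_
    · calc dist v (x j) ≤ (1 : ℝ) / ((m : ℝ) + 1) := Metric.mem_closedBall.1 hv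
        _ < δ₀ := hm
        _ ≤ d2 j j' := hδ₀2 j j'
    · calc dist w (x j') ≤ (1 : ℝ) / ((m : ℝ) + 1) := Metric.mem_closedBall.1 hw
        _ < δ₀ := hm
        _ ≤ d2 j j' := hδ₀2 j j'

lemma dir2 {X : Type*} [MetricSpace X] [CompactSpace X] {G : X → X → Prop}
    (hsym : Symmetric G)
    (hclosed : IsClosed {p : {q : X × X // q.1 ≠ q.2} | G p.1.1 p.1.2})
    (h : ∃ A : ℕ → Set X, (∀ n, Loose G (A n)) ∧ (⋃ n, A n) = Set.univ) :
    SigmaLiminfCentered X G := by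
  obtain ⟨A, hloose, hcover⟩ := h
  have hcov : ∀ y : X, ∃ n, y ∈ A n := by
    intro y
    have : y ∈ ⋃ n, A n := by rw [hcover]; trivial
    exact mem_iUnion.1 this
  obtain ⟨f, hf⟩ := exists_surjective_nat ((Σ k : ℕ, (Fin k → ℕ)) × ℕ)
  refine ⟨fun n => ClassSet G A (f n), fun n => class_centered hsym hclosed hloose (f n), ?_⟩
  rw [eq_univ_iff_forall]
  intro p
  obtain ⟨i, hi⟩ := class_cover hclosed hcov p
  obtain ⟨n, rfl⟩ := hf i
  exact mem_iUnion.2 ⟨n, hi⟩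

theorem stmt_4 {X : Type*} [TopologicalSpace X] [CompactSpace X]
    [TopologicalSpace.MetrizableSpace X]
    (G : X → X → Prop) (hsym : Symmetric G) (hirr : Irreflexive G)
    (hclosed : IsClosed {p : {q : X × X // q.1 ≠ q.2} | G p.1.1 p.1.2}) :
    SigmaLiminfCentered X G ↔
      ∃ A : ℕ → Set X, (∀ n, Loose G (A n)) ∧ (⋃ n, A n) = Set.univ := by
  letI : MetricSpace X := TopologicalSpace.metrizableSpaceMetric X
  exact ⟨dir1 hirr, dir2 hsym hclosed⟩
end

section
/- The graph G₁ on the space Y has uncountable list-chromatic number: there is an assignment F of a countably infinite set F(y) ⊆ ℕ to each point y ∈ Y such that there is no function f with f(y) ∈ F(y) for all y ∈ Y and f(y₀) ≠ f(y₁) whenever y₀ G₁ y₁. -/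
open Set

abbrev Y : Type := (List Bool) ⊕ (ℕ → Bool)

def StrRel (s : List Bool) (y : ℕ → Bool) : Prop :=
  ∃ n : ℕ, s = List.ofFn fun i : Fin n => y i

def G1 : Y → Y → Prop
  | .inl s, .inr y => StrRel s y
  | .inr y, .inl s => StrRel s y
  | _, _ => False

namespace Stmt8Aux

/-- Decoded "list" set for a branch `y`: pairs `(L, g)` where `L` is a block start
(0 or successor of a true position), the next `g` bits are false, then a true. -/
def A (y : ℕ → Bool) : Set ℕ :=
  { c | ∃ L g, (L = 0 ∨ y (L - 1) = true) ∧ (∀ i < g, y (L + i) = false) ∧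
      y (L + g) = true ∧ c = Nat.pair L g }

open Classical in
noncomputable def Fdef : Y → Set ℕ
  | .inl s => Set.range (Nat.pair s.length)
  | .inr y => if (A y).Infinite then A y else Set.univ

lemma Fdef_infinite (z : Y) : (Fdef z).Infinite := by
  match z with
  | .inl s =>
      exact Set.infinite_range_of_injective (fun a b h => (Nat.pair_eq_pair.mp h).2)
  | .inr y =>
      simp only [Fdef]
      split
      · assumption
      · exact Set.infinite_univ

variable (f : Y → ℕ)

def seq : ℕ → List Bool
  | 0 => []
  | k + 1 => seq k ++ (List.replicate ((Nat.unpair (f (Sum.inl (seq k)))).2) false ++ [true])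

def Lk (k : ℕ) : ℕ := (seq f k).length
def gk (k : ℕ) : ℕ := (Nat.unpair (f (Sum.inl (seq f k)))).2

lemma Lk_succ (k : ℕ) : Lk f (k + 1) = Lk f k + gk f k + 1 := by
  simp [Lk, seq, gk]; omega

lemma Lk_lt (k : ℕ) : Lk f k < Lk f (k + 1) := by
  rw [Lk_succ]; omega

lemma Lk_mono : StrictMono (Lk f) := strictMono_nat_of_lt_succ (Lk_lt f)

lemma le_Lk (k : ℕ) : k ≤ Lk f k := by
  induction k with
  | zero => exact Nat.zero_le _
  | succ n ih => have := Lk_lt f n; omega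

lemma seq_prefix (k m : ℕ) (h : k ≤ m) : seq f k <+: seq f m := by
  induction m with
  | zero => simp_all
  | succ n ih =>
      rcases Nat.lt_or_ge k (n + 1) with h' | h'
      · exact (ih (by omega)).trans ⟨_, rfl⟩
      · have : k = n + 1 := by omega
        subst this; exact List.prefix_refl _

def yf (i : ℕ) : Bool := (seq f (i + 1)).getD i false

lemma getD_prefix {l₁ l₂ : List Bool} (h : l₁ <+: l₂) {i : ℕ} (hi : i < l₁.length) :
    l₂.getD i false = l₁.getD i false := by
  obtain ⟨t, rfl⟩ := h
  rw [List.getD_eq_getElem _ _ hi, List.getD_eq_getElem _ _ (by simp; omega),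
    List.getElem_append_left]

lemma yf_eq (k i : ℕ) (h : i < Lk f k) : yf f i = (seq f k).getD i false := by
  have hi : i < Lk f (i + 1) := lt_of_lt_of_le (by omega) (le_Lk f (i + 1))
  rcases le_total (i + 1) k with h' | h'
  · exact (getD_prefix (seq_prefix f _ _ h') hi).symm
  · exact getD_prefix (seq_prefix f _ _ h') h

lemma yf_block (k i : ℕ) (h1 : Lk f k ≤ i) (h2 : i < Lk f (k + 1)) :
    yf f i = decide (i = Lk f k + gk f k) := by
  rw [yf_eq f (k + 1) i h2]
  show (seq f k ++ (List.replicate (gk f k) false ++ [true])).getD i false = _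
  have hLk : (seq f k).length = Lk f k := rfl
  have hlen : i - Lk f k < (List.replicate (gk f k) false ++ [true]).length := by
    have := Lk_succ f k; simp; omega
  rw [List.getD_eq_getElem _ _ (by simp [hLk]; simp at hlen; omega),
    List.getElem_append_right (by omega)]
  rcases Nat.lt_or_ge (i - Lk f k) (gk f k) with h' | h'
  · rw [List.getElem_append_left (by simpa [hLk] using h')]
    simp [List.getElem_replicate]
    omega
  · have he : i = Lk f k + gk f k := by
      have := Lk_succ f k; simp [hLk] at *; omega
    rw [List.getElem_append_right (by simp; omega), List.getElem_singleton]
    simp [he]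

lemma yf_true_iff (k i : ℕ) (h1 : Lk f k ≤ i) (h2 : i < Lk f (k + 1)) :
    (yf f i = true ↔ i = Lk f k + gk f k) := by
  rw [yf_block f k i h1 h2]; simp

lemma exists_block (i : ℕ) : ∃ k, Lk f k ≤ i ∧ i < Lk f (k + 1) := by
  induction i with
  | zero => exact ⟨0, Nat.le_refl _, Lk_lt f 0⟩
  | succ n ih =>
      obtain ⟨k, hk1, hk2⟩ := ih
      rcases Nat.lt_or_ge (n + 1) (Lk f (k + 1)) with h | h
      · exact ⟨k, by omega, h⟩
      · exact ⟨k + 1, h, by have := Lk_lt f (k + 1); omega⟩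

/-- The coded values are pairs `(Lk k, gk k)`. -/
lemma mem_A (k : ℕ) : Nat.pair (Lk f k) (gk f k) ∈ A (yf f) := by
  refine ⟨Lk f k, gk f k, ?_, ?_, ?_, rfl⟩
  · cases k with
    | zero => exact Or.inl rfl
    | succ j =>
        right
        have h1 : Lk f j ≤ Lk f (j + 1) - 1 := by have := Lk_lt f j; omega
        have h2 : Lk f (j + 1) - 1 < Lk f (j + 1) := by have := Lk_lt f j; omega
        rw [yf_true_iff f j _ h1 h2]
        have := Lk_succ f j; omega
  · intro i hi
    have h2 : Lk f k + i < Lk f (k + 1) := by have := Lk_succ f k; omega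
    rw [yf_block f k _ (by omega) h2]
    simp; omega
  · have h2 : Lk f k + gk f k < Lk f (k + 1) := by have := Lk_succ f k; omega
    rw [yf_true_iff f k _ (by omega) h2]

lemma A_eq (c : ℕ) (hc : c ∈ A (yf f)) : ∃ k, c = Nat.pair (Lk f k) (gk f k) := by
  obtain ⟨L, g, hstart, hfalse, htrue, rfl⟩ := hc
  -- first: L = Lk f k for some k
  obtain ⟨k, hLk⟩ : ∃ k, L = Lk f k := by
    by_cases hL0 : L = 0
    · exact ⟨0, by simp [hL0, Lk, seq]⟩
    rcases hstart with h0 | htr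
    · exact absurd h0 hL0
    · obtain ⟨j, hj1, hj2⟩ := exists_block f (L - 1)
      have : L - 1 = Lk f j + gk f j := (yf_true_iff f j _ hj1 hj2).mp htr
      refine ⟨j + 1, ?_⟩
      have := Lk_succ f j
      omega
  subst hLk
  -- now g is forced to be gk f k
  refine ⟨k, ?_⟩
  have hgk : g = gk f k := by
    by_contra hne
    rcases Nat.lt_or_ge g (gk f k) with h | h
    · have h2 : Lk f k + g < Lk f (k + 1) := by have := Lk_succ f k; omega
      have := (yf_true_iff f k _ (by omega) h2).mp htrue
      omega
    · have h2 : Lk f k + gk f k < Lk f (k + 1) := by have := Lk_succ f k; omega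
      have ht := (yf_true_iff f k _ (by omega) h2).mpr rfl
      have hf := hfalse (gk f k) (by omega)
      rw [ht] at hf; simp at hf
  rw [hgk]

lemma A_infinite : (A (yf f)).Infinite := by
  apply Set.infinite_of_injective_forall_mem
    (f := fun k => Nat.pair (Lk f k) (gk f k))
    (fun a b h => (Lk_mono f).injective (Nat.pair_eq_pair.mp h).1) (mem_A f)

lemma ofFn_eq (k : ℕ) : (List.ofFn fun i : Fin (Lk f k) => yf f i) = seq f k := by
  apply List.ext_getElem
  · simp [Lk]
  · intro n h1 h2
    simp only [List.getElem_ofFn]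
    rw [yf_eq f k n h2, List.getD_eq_getElem _ _ h2]

end Stmt8Aux

theorem stmt_8 :
    ∃ F : Y → Set ℕ, (∀ y, (F y).Infinite) ∧
      ¬ ∃ f : Y → ℕ, (∀ y, f y ∈ F y) ∧
        ∀ y₀ y₁ : Y, G1 y₀ y₁ → f y₀ ≠ f y₁ := by
  classical
  refine ⟨Stmt8Aux.Fdef, Stmt8Aux.Fdef_infinite, ?_⟩
  rintro ⟨f, hf, hcol⟩
  set y : ℕ → Bool := Stmt8Aux.yf f with hy
  have hFy : Stmt8Aux.Fdef (Sum.inr y) = Stmt8Aux.A y := by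
    simp only [Stmt8Aux.Fdef, if_pos (Stmt8Aux.A_infinite f)]
    exact if_pos (Stmt8Aux.A_infinite f)
  have hmem : f (Sum.inr y) ∈ Stmt8Aux.A y := by
    have := hf (Sum.inr y); rwa [hFy] at this
  obtain ⟨k, hk⟩ := Stmt8Aux.A_eq f _ hmem
  -- f (Sum.inl (seq f k)) = Nat.pair (Lk f k) (gk f k)
  have hfl : f (Sum.inl (Stmt8Aux.seq f k)) = Nat.pair (Stmt8Aux.Lk f k) (Stmt8Aux.gk f k) := by
    obtain ⟨n, hn⟩ := hf (Sum.inl (Stmt8Aux.seq f k))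
    have : Stmt8Aux.gk f k = n := by
      simp only [Stmt8Aux.gk, ← hn, Nat.unpair_pair]
    rw [this, ← hn]; rfl
  have hedge : G1 (Sum.inl (Stmt8Aux.seq f k)) (Sum.inr y) := by
    exact ⟨Stmt8Aux.Lk f k, (Stmt8Aux.ofFn_eq f k).symm⟩
  exact hcol _ _ hedge (by rw [hfl, hk])
end

section
/- There exists a graph G on the set ω₁ of countable ordinals such that (i) G does not have countable coloring number, i.e. there is no orientation of G (antisymmetric relation o whose symmetrization is G) in which the outflow {β : o α β} of every vertex α is finite, and (ii) for every countable set a ⊆ ω₁, the set {β ∈ ω₁ : the set {γ ∈ a : β G γ} is infinite} is countable. -/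
open Set

/-- The set of countable ordinals, i.e. ordinals below `ω₁`. -/
abbrev Omega1 : Type _ := {α : Ordinal // α < (Cardinal.aleph 1).ord}

namespace Stmt9Aux

open Cardinal Ordinal

local notation "Ω" => Cardinal.ord (Cardinal.aleph 1)

lemma one_lt_Omega : (1 : Ordinal) < Ω := by
  rw [Cardinal.lt_ord]
  simpa using Cardinal.aleph0_lt_aleph_one.trans_le' Cardinal.one_le_aleph0

lemma succ_lt_Omega {x : Ordinal} (h : x < Ω) : x + 1 < Ω := by
  rw [Ordinal.add_one_eq_succ]
  exact (Cardinal.isSuccLimit_ord (Cardinal.aleph0_le_aleph 1)).succ_lt h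

lemma countable_Iio {x : Ordinal} (h : x < Ω) : (Set.Iio x).Countable := by
  rw [← Cardinal.le_aleph0_iff_set_countable, Ordinal.mk_Iio_ordinal]
  have hc : x.card ≤ ℵ₀ := by
    have := Cardinal.lt_ord.mp h
    rwa [← Cardinal.succ_aleph0, Order.lt_succ_iff] at this
  simpa [← Ordinal.lift_card] using hc

lemma countable_pre {T : Set Ordinal} (hT : T.Countable) :
    {β : Omega1 | β.1 ∈ T}.Countable :=
  hT.preimage Subtype.val_injective

lemma exists_bound {T : Set Ordinal} (hc : T.Countable) (hT : ∀ t ∈ T, t < Ω) :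
    ∃ x : Ordinal, x < Ω ∧ ∀ t ∈ T, t < x := by
  rcases T.eq_empty_or_nonempty with rfl | hne
  · exact ⟨1, one_lt_Omega, by simp⟩
  · obtain ⟨f, rfl⟩ := hc.exists_eq_range hne
    have h1 : (⨆ n, f n) < Ω :=
      Cardinal.ord_aleph 1 ▸ Ordinal.iSup_lt_omega_one fun n => (Cardinal.ord_aleph 1) ▸ hT _ (mem_range_self n)
    refine ⟨(⨆ n, f n) + 1, succ_lt_Omega h1, ?_⟩
    rintro t ⟨n, rfl⟩
    calc f n ≤ ⨆ n, f n := Ordinal.le_iSup f n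
      _ < (⨆ n, f n) + 1 := lt_add_one _

lemma exists_S (β : Ordinal) (hβ : β < Ω) :
    ∃ S : Set Ordinal, S ⊆ Iio β ∧ (Order.IsSuccLimit β → S.Infinite) ∧
      ∀ σ < β, (S ∩ Iio σ).Finite := by
  by_cases hl : Order.IsSuccLimit β
  · have hne : (Iio β).Nonempty := ⟨0, hl.pos⟩
    obtain ⟨g, hg⟩ := (countable_Iio hβ).exists_eq_range hne
    have hgmem : ∀ n, g n < β := fun n => by
      have : g n ∈ Iio β := hg ▸ mem_range_self n
      exact this
    let f : ℕ → Ordinal := fun n => Nat.rec (g 0) (fun n ih => max (g (n + 1)) (ih + 1)) n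
    have hf0 : f 0 = g 0 := rfl
    have hfs : ∀ n, f (n + 1) = max (g (n + 1)) (f n + 1) := fun n => rfl
    have hfb : ∀ n, f n < β := by
      intro n
      induction n with
      | zero => exact hf0 ▸ hgmem 0
      | succ n ih =>
        rw [hfs]
        refine max_lt (hgmem _) ?_
        rw [Ordinal.add_one_eq_succ]
        exact hl.succ_lt ih
    have hmono : StrictMono f := by
      apply strictMono_nat_of_lt_succ
      intro n
      rw [hfs]
      exact lt_of_lt_of_le (lt_add_one _) (le_max_right _ _)
    have hge : ∀ n, g n ≤ f n := by
      intro n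
      cases n with
      | zero => exact hf0.ge
      | succ n => rw [hfs]; exact le_max_left _ _
    refine ⟨range f, ?_, fun _ => infinite_range_of_injective hmono.injective, ?_⟩
    · rintro x ⟨n, rfl⟩
      exact hfb n
    · intro σ hσ
      have : σ ∈ range g := by rw [← hg]; exact hσ
      obtain ⟨n₀, hn₀⟩ := this
      apply ((Set.finite_Iio n₀).image f).subset
      rintro x ⟨⟨n, rfl⟩, hx⟩
      refine ⟨n, ?_, rfl⟩
      have : f n < f n₀ := lt_of_lt_of_le hx (hn₀ ▸ hge n₀)
      exact hmono.lt_iff_lt.mp this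
  · exact ⟨∅, empty_subset _, fun h => absurd h hl, fun σ _ => by simp⟩

noncomputable def S (β : Omega1) : Set Ordinal := (exists_S β.1 β.2).choose

lemma S_subset (β : Omega1) : S β ⊆ Iio β.1 := (exists_S β.1 β.2).choose_spec.1

lemma S_infinite (β : Omega1) (h : Order.IsSuccLimit β.1) : (S β).Infinite :=
  (exists_S β.1 β.2).choose_spec.2.1 h

lemma S_finite (β : Omega1) {σ : Ordinal} (h : σ < β.1) : (S β ∩ Iio σ).Finite :=
  (exists_S β.1 β.2).choose_spec.2.2 σ h

noncomputable def G (β γ : Omega1) : Prop := γ.1 ∈ S β ∨ β.1 ∈ S γ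

lemma G_symm : Symmetric G := fun _ _ h => h.symm

lemma G_irrefl : Irreflexive G := by
  intro x h
  rcases h with h | h <;> exact absurd (S_subset x h) (lt_irrefl x.1)

lemma G_not_ccn : ¬ CountableColoringNumber G := by
  rintro ⟨o, _hanti, hor, hfin⟩
  set h : Omega1 → Ordinal := fun γ => sSup (Subtype.val '' {δ | o γ δ}) with hh
  have hmem : ∀ γ δ : Omega1, o γ δ → δ.1 ≤ h γ := by
    intro γ δ hd
    exact le_csSup ((hfin γ).image _).bddAbove ⟨δ, hd, rfl⟩
  have hlt : ∀ γ, h γ < Ω := by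
    intro γ
    rcases (Subtype.val '' {δ | o γ δ}).eq_empty_or_nonempty with he | hne
    · rw [hh]
      simp only [he, csSup_empty]
      exact lt_of_le_of_lt (zero_le (a := (1 : Ordinal))) one_lt_Omega
    · have hm := hne.csSup_mem ((hfin γ).image _)
      obtain ⟨δ, _, hδ⟩ := hm
      rw [hh]
      simp only
      rw [← hδ]
      exact δ.2
  have hstep : ∀ β : Omega1, ∃ x : Omega1, β.1 < x.1 ∧
      ∀ γ : Omega1, γ.1 < β.1 → h γ < x.1 := by
    intro β
    have hc : (insert β.1 (h '' {γ : Omega1 | γ.1 < β.1})).Countable :=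
      ((countable_pre (countable_Iio β.2)).image h).insert _
    have hb : ∀ t ∈ insert β.1 (h '' {γ : Omega1 | γ.1 < β.1}), t < Ω := by
      rintro t (rfl | ⟨γ, _, rfl⟩)
      · exact β.2
      · exact hlt γ
    obtain ⟨x, hxΩ, hxb⟩ := exists_bound hc hb
    exact ⟨⟨x, hxΩ⟩, hxb _ (mem_insert _ _),
      fun γ hγ => hxb _ (mem_insert_of_mem _ ⟨γ, hγ, rfl⟩)⟩
  choose st hst1 hst2 using hstep
  set b : ℕ → Omega1 := fun n => st^[n] ⟨1, one_lt_Omega⟩ with hb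
  have hbsucc : ∀ n, b (n + 1) = st (b n) := fun n => Function.iterate_succ_apply' st n _
  have hblt : ∀ n, (b n).1 < (b (n + 1)).1 := fun n => (hbsucc n) ▸ hst1 (b n)
  set βs : Ordinal := ⨆ n, (b n).1 with hβs
  have hβsΩ : βs < Ω := Cardinal.ord_aleph 1 ▸ Ordinal.iSup_lt_omega_one fun n => (Cardinal.ord_aleph 1) ▸ (b n).2
  have hble : ∀ n, (b n).1 ≤ βs := fun n => Ordinal.le_iSup (fun n => (b n).1) n
  have hlim : Order.IsSuccLimit βs := by
    rw [Ordinal.isSuccLimit_iff, Order.isSuccPrelimit_iff_succ_lt]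
    constructor
    · have h0 : (0 : Ordinal) < (b 0).1 := by
        rw [hb]
        exact zero_lt_one
      exact (lt_of_lt_of_le h0 (hble 0)).ne'
    · intro δ hδ
      obtain ⟨n, hn⟩ := Ordinal.lt_iSup_iff.mp hδ
      have h1 : Order.succ δ ≤ (b n).1 := Order.succ_le_of_lt hn
      exact lt_of_le_of_lt (h1.trans (hblt n).le) (lt_of_lt_of_le (hblt (n + 1)) (hble (n + 2)))
  set B : Omega1 := ⟨βs, hβsΩ⟩ with hB
  have hSi : (S B).Infinite := S_infinite B hlim
  obtain ⟨xv, hxS, hxout⟩ := (hSi.diff ((hfin B).image Subtype.val)).nonempty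
  have hxβ : xv < βs := S_subset B hxS
  have hγΩ : xv < Ω := hxβ.trans hβsΩ
  have hG : G B ⟨xv, hγΩ⟩ := Or.inl hxS
  rcases (hor B ⟨xv, hγΩ⟩).mp hG with hc | hc
  · exact hxout ⟨⟨xv, hγΩ⟩, hc, rfl⟩
  · have h1 : βs ≤ h ⟨xv, hγΩ⟩ := hmem _ B hc
    obtain ⟨n, hn⟩ := Ordinal.lt_iSup_iff.mp hxβ
    have h2 : h ⟨xv, hγΩ⟩ < (b (n + 1)).1 := by
      rw [hbsucc n]
      exact hst2 (b n) ⟨xv, hγΩ⟩ hn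
    exact absurd (h1.trans_lt (h2.trans_le (hble (n + 1)))) (lt_irrefl βs)

lemma G_almost_disjoint : ∀ a : Set Omega1, a.Countable →
    {β : Omega1 | {γ ∈ a | G β γ}.Infinite}.Countable := by
  intro a ha
  have hc : (Subtype.val '' a).Countable := ha.image _
  have hbd : ∀ t ∈ Subtype.val '' a, t < Ω := by
    rintro t ⟨γ, _, rfl⟩
    exact γ.2
  obtain ⟨x, hxΩ, hxb⟩ := exists_bound hc hbd
  have hcover : {β : Omega1 | {γ ∈ a | G β γ}.Infinite} ⊆
      {β : Omega1 | β.1 ∈ Iio (x + 1)} ∪ ⋃ γ ∈ a, {β : Omega1 | β.1 ∈ S γ} := by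
    intro β hβ
    by_contra hβ'
    simp only [mem_union, mem_iUnion, not_or, not_exists] at hβ'
    obtain ⟨h1, h2⟩ := hβ'
    have hx : x < β.1 := by
      have : ¬ β.1 < x + 1 := h1
      have := not_lt.mp this
      exact lt_of_lt_of_le (lt_add_one x) this
    have hsub : {γ ∈ a | G β γ} ⊆ {γ : Omega1 | γ.1 ∈ S β ∩ Iio x} := by
      rintro γ ⟨hga, hgG⟩
      rcases hgG with hg | hg
      · exact ⟨hg, hxb _ ⟨γ, hga, rfl⟩⟩
      · exact absurd hg (by simpa using h2 γ hga)
    have hfin : {γ : Omega1 | γ.1 ∈ S β ∩ Iio x}.Finite :=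
      (S_finite β hx).preimage Subtype.val_injective.injOn
    exact (mem_setOf_eq ▸ hβ) (hfin.subset hsub)
  refine Set.Countable.mono hcover ?_
  refine (countable_pre (countable_Iio (succ_lt_Omega hxΩ))).union ?_
  exact ha.biUnion fun γ _ => countable_pre ((countable_Iio γ.2).mono (S_subset γ))

end Stmt9Aux

theorem stmt_9 :
    ∃ G : Omega1 → Omega1 → Prop, Symmetric G ∧ Irreflexive G ∧
      ¬ CountableColoringNumber G ∧
      ∀ a : Set Omega1, a.Countable →
        {β : Omega1 | {γ ∈ a | G β γ}.Infinite}.Countable :=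
  ⟨Stmt9Aux.G, Stmt9Aux.G_symm, Stmt9Aux.G_irrefl, Stmt9Aux.G_not_ccn,
    Stmt9Aux.G_almost_disjoint⟩
end

section
/- Let ⟨a_n : n ∈ ω⟩ be pairwise disjoint infinite subsets of ω, for each n let g_n : ω → ω be the increasing enumeration of the set a_n ∪ {0, 1, …, n−1}, and let f_n : 2^ω → 2^ω be defined by f_n(x) = x ∘ g_n. Let G be the graph on 2^ω relating distinct points x, y if and only if there is n ∈ ω with f_n(x) = y or f_n(y) = x. Then G has uncountable chromatic number: 2^ω is not the union of countably many G-anticliques. -/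
open Set

open scoped Classical

/-- truncation of a sequence below `2*k`. -/
def trunc (k : ℕ) (s : ℕ → Bool) : ℕ → Bool := fun q => if q < 2*k then s q else false

/-- pick an element of `B k` agreeing with `u` below `2*k`, if one exists. -/
noncomputable def zsel (B : ℕ → Set (ℕ → Bool)) (k : ℕ) (u : ℕ → Bool) : ℕ → Bool :=
  if h : ∃ z ∈ B k, ∀ q, q < 2*k → z q = u q then h.choose else fun _ => false

/-- a "fresh" coordinate in `a (2*k+1)` above `2*k`. -/
noncomputable def pk (a : ℕ → Set ℕ) (hinf : ∀ n, (a n).Infinite) (k : ℕ) : ℕ :=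
  ((hinf (2*k+1)).exists_gt (2*k)).choose

lemma pk_mem (a : ℕ → Set ℕ) (hinf : ∀ n, (a n).Infinite) (k : ℕ) :
    pk a hinf k ∈ a (2*k+1) :=
  ((hinf (2*k+1)).exists_gt (2*k)).choose_spec.1

lemma pk_gt (a : ℕ → Set ℕ) (hinf : ∀ n, (a n).Infinite) (k : ℕ) :
    2*k < pk a hinf k :=
  ((hinf (2*k+1)).exists_gt (2*k)).choose_spec.2

/-- the stage `k` such that `n ∈ a (2*k)`, `2*k ≤ n`, if it exists. -/
noncomputable def idx (a : ℕ → Set ℕ) (n : ℕ) : ℕ :=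
  if h : ∃ k, 2*k ≤ n ∧ n ∈ a (2*k) then h.choose else 0

/-- a preimage of `n` under `g m`, if it exists. -/
noncomputable def ginv (g : ℕ → ℕ → ℕ) (m n : ℕ) : ℕ :=
  if h : ∃ i, g m i = n then h.choose else 0

/-- the stage `k` such that `n = pk a hinf k`, if it exists. -/
noncomputable def idx3 (a : ℕ → Set ℕ) (hinf : ∀ n, (a n).Infinite) (n : ℕ) : ℕ :=
  if h : ∃ k, n = pk a hinf k then h.choose else 0

lemma idx_eq (a : ℕ → Set ℕ) (hdisj : Pairwise fun m n => Disjoint (a m) (a n))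
    {n k : ℕ} (h1 : 2*k ≤ n) (h2 : n ∈ a (2*k)) : idx a n = k := by
  unfold idx
  rw [dif_pos ⟨k, h1, h2⟩]
  have hs := (⟨k, h1, h2⟩ : ∃ k, 2*k ≤ n ∧ n ∈ a (2*k)).choose_spec
  by_contra hne
  have hne2 : 2 * (⟨k, h1, h2⟩ : ∃ k, 2*k ≤ n ∧ n ∈ a (2*k)).choose ≠ 2 * k := by omega
  exact Set.disjoint_left.mp (hdisj hne2) hs.2 h2

lemma ginv_eq (g : ℕ → ℕ → ℕ) (hmono : ∀ n, StrictMono (g n))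
    {m n i : ℕ} (h : g m i = n) : ginv g m n = i := by
  unfold ginv
  rw [dif_pos ⟨i, h⟩]
  exact (hmono m).injective ((⟨i, h⟩ : ∃ i, g m i = n).choose_spec.trans h.symm)

lemma idx3_eq (a : ℕ → Set ℕ) (hinf : ∀ n, (a n).Infinite)
    (hdisj : Pairwise fun m n => Disjoint (a m) (a n))
    {n k : ℕ} (h : n = pk a hinf k) : idx3 a hinf n = k := by
  unfold idx3
  rw [dif_pos ⟨k, h⟩]
  have hs := (⟨k, h⟩ : ∃ k, n = pk a hinf k).choose_spec
  set k' := (⟨k, h⟩ : ∃ k, n = pk a hinf k).choose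
  by_contra hne
  have hmem' : n ∈ a (2*k'+1) := by rw [hs]; exact pk_mem a hinf k'
  have hmem : n ∈ a (2*k+1) := by rw [h]; exact pk_mem a hinf k
  have hne3 : (2*k'+1) ≠ (2*k+1) := by omega
  exact Set.disjoint_left.mp (hdisj hne3) hmem' hmem

/-- value of the diagonal point at coordinate `n`, given its earlier values `s`. -/
noncomputable def val (a : ℕ → Set ℕ) (g : ℕ → ℕ → ℕ) (B : ℕ → Set (ℕ → Bool))
    (hinf : ∀ n, (a n).Infinite) (n : ℕ) (s : ℕ → Bool) : Bool :=
  if ∃ k, 2*k ≤ n ∧ n ∈ a (2*k) then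
    zsel B (idx a n) (trunc (idx a n) s) (ginv g (2 * idx a n) n)
  else if ∃ k, n = pk a hinf k then
    ! (zsel B (idx3 a hinf n) (trunc (idx3 a hinf n) s) n)
  else false

/-- `XX n` is the diagonal point on coordinates `< n` (junk elsewhere). -/
noncomputable def XX (a : ℕ → Set ℕ) (g : ℕ → ℕ → ℕ) (B : ℕ → Set (ℕ → Bool))
    (hinf : ∀ n, (a n).Infinite) : ℕ → ℕ → Bool
  | 0 => fun _ => false
  | (n+1) => fun p => if p = n then val a g B hinf n (XX a g B hinf n) else XX a g B hinf n p

/-- the diagonal point. -/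
noncomputable def xx (a : ℕ → Set ℕ) (g : ℕ → ℕ → ℕ) (B : ℕ → Set (ℕ → Bool))
    (hinf : ∀ n, (a n).Infinite) : ℕ → Bool := fun p => XX a g B hinf (p+1) p

lemma XX_coh (a : ℕ → Set ℕ) (g : ℕ → ℕ → ℕ) (B : ℕ → Set (ℕ → Bool))
    (hinf : ∀ n, (a n).Infinite) :
    ∀ n p, p < n → XX a g B hinf n p = xx a g B hinf p := by
  intro n
  induction n with
  | zero => intro p hp; omega
  | succ n ih =>
    intro p hp
    by_cases h : p = n
    · subst h; rfl
    · have hlt : p < n := by omega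
      simp only [XX]
      rw [if_neg h, ih p hlt]

lemma xx_val (a : ℕ → Set ℕ) (g : ℕ → ℕ → ℕ) (B : ℕ → Set (ℕ → Bool))
    (hinf : ∀ n, (a n).Infinite) (p : ℕ) :
    xx a g B hinf p = val a g B hinf p (XX a g B hinf p) := by
  simp only [xx, XX, if_pos]

lemma g_id_below (g : ℕ → ℕ → ℕ) (a : ℕ → Set ℕ)
    (hmono : ∀ n, StrictMono (g n))
    (hrange : ∀ n, Set.range (g n) = a n ∪ {i : ℕ | i < n}) :
    ∀ n i, i < n → g n i = i := by
  intro n i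
  induction i using Nat.strong_induction_on with
  | _ i ih =>
    intro hi
    have hmem : i ∈ Set.range (g n) := by
      rw [hrange n]; exact Or.inr hi
    obtain ⟨m, hm⟩ := hmem
    have hle : m ≤ i := by
      have h0 : m ≤ g n m := (hmono n).le_apply
      omega
    rcases eq_or_lt_of_le hle with h | h
    · subst h; exact hm
    · exfalso
      have := ih m h (by omega)
      rw [this] at hm
      omega

theorem stmt_11 (a : ℕ → Set ℕ)
    (hinf : ∀ n, (a n).Infinite)
    (hdisj : Pairwise fun m n => Disjoint (a m) (a n))
    (g : ℕ → ℕ → ℕ)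
    (hmono : ∀ n, StrictMono (g n))
    (hrange : ∀ n, Set.range (g n) = a n ∪ {i : ℕ | i < n})
    (G : (ℕ → Bool) → (ℕ → Bool) → Prop)
    (hG : ∀ x y : ℕ → Bool, G x y ↔ x ≠ y ∧ ∃ n : ℕ, x ∘ g n = y ∨ y ∘ g n = x) :
    ¬ ∃ B : ℕ → Set (ℕ → Bool), (∀ n, Anticlique G (B n)) ∧ (⋃ n, B n) = Set.univ := by
  rintro ⟨B, hanti, hcover⟩
  set x : ℕ → Bool := xx a g B hinf with hxdef
  have hxmem : x ∈ ⋃ n, B n := by rw [hcover]; trivial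
  obtain ⟨_, ⟨k, rfl⟩, hx⟩ := hxmem
  -- truncations stabilize
  have htr : ∀ n, 2*k ≤ n →
      trunc k (XX a g B hinf n) = trunc k x := by
    intro n hn
    funext q
    simp only [trunc]
    by_cases hq : q < 2*k
    · rw [if_pos hq, if_pos hq, XX_coh a g B hinf n q (by omega)]
    · rw [if_neg hq, if_neg hq]
  set Zk : ℕ → Bool := zsel B k (trunc k x) with hZdef
  have hex : ∃ z ∈ B k, ∀ q, q < 2*k → z q = trunc k x q := by
    refine ⟨x, hx, fun q hq => ?_⟩
    simp only [trunc]; rw [if_pos hq]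
  have hZspec : Zk ∈ B k ∧ ∀ q, q < 2*k → Zk q = trunc k x q := by
    rw [hZdef]
    unfold zsel
    rw [dif_pos hex]
    exact ⟨hex.choose_spec.1, hex.choose_spec.2⟩
  have hZagree : ∀ q, q < 2*k → Zk q = x q := by
    intro q hq
    rw [hZspec.2 q hq]
    simp only [trunc]; rw [if_pos hq]
  -- key: x ∘ g (2*k) = Zk
  have key : ∀ i, x (g (2*k) i) = Zk i := by
    intro i
    by_cases hi : i < 2*k
    · rw [g_id_below g a hmono hrange (2*k) i hi, hZagree i hi]
    · push_neg at hi
      set p := g (2*k) i with hpdef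
      have hple : 2*k ≤ p := le_trans hi (hmono (2*k)).le_apply
      have hpa : p ∈ a (2*k) := by
        have hmem : p ∈ Set.range (g (2*k)) := ⟨i, rfl⟩
        rw [hrange (2*k)] at hmem
        rcases hmem with h | h
        · exact h
        · exfalso; simp only [Set.mem_setOf_eq] at h; omega
      have hik : idx a p = k := idx_eq a hdisj hple hpa
      have hgi : ginv g (2 * idx a p) p = i := by
        rw [hik]; exact ginv_eq g hmono hpdef.symm
      have hv : x p = val a g B hinf p (XX a g B hinf p) := xx_val a g B hinf p
      rw [hv]
      unfold val
      rw [if_pos ⟨k, hple, hpa⟩, hgi, hik, htr p hple, ← hZdef]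
  -- x differs from Zk at pk k
  have hne : x ≠ Zk := by
    set p := pk a hinf k with hpdef
    have hpa : p ∈ a (2*k+1) := pk_mem a hinf k
    have hple : 2*k < p := pk_gt a hinf k
    have h1 : ¬ ∃ k', 2*k' ≤ p ∧ p ∈ a (2*k') := by
      rintro ⟨k', _, hmem⟩
      have hne2 : 2*k' ≠ 2*k+1 := by omega
      exact Set.disjoint_left.mp (hdisj hne2) hmem hpa
    have hik : idx3 a hinf p = k := idx3_eq a hinf hdisj hpdef
    have hv : x p = ! (Zk p) := by
      have hv0 : x p = val a g B hinf p (XX a g B hinf p) := xx_val a g B hinf p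
      rw [hv0]
      unfold val
      rw [if_neg h1, if_pos ⟨k, hpdef⟩, hik, htr p (by omega), ← hZdef]
    intro heq
    rw [heq] at hv
    simp at hv
  -- monochromatic edge: contradiction
  have hedge : G x Zk := by
    rw [hG]
    exact ⟨hne, ⟨2*k, Or.inl (funext key)⟩⟩
  exact hanti k x hx Zk hZspec.1 hne hedge
end

section
/- For each n ∈ ω let f_n : 2^ω → 2^ω be the function defined by f_n(x)(i) = x(i) if i < n and f_n(x)(i) = 0 if i ≥ n, and let G be the graph on 2^ω relating distinct points x, y if and only if there is n ∈ ω with f_n(x) = y or f_n(y) = x. Let A ⊆ 2^ω be the set of binary sequences that are eventually 0. If B ⊆ 2^ω is a G-loose set, then the set (closure of B) \ A is a closed subset of 2^ω. -/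
open Set

/-- `f n x` agrees with `x` below `n` and is `0` from `n` on. -/
def cutoff (n : ℕ) (x : ℕ → Bool) : ℕ → Bool :=
  fun i => if i < n then x i else false

/-- The associated graph on `2^ω`. -/
def cutoffGraph (x y : ℕ → Bool) : Prop :=
  x ≠ y ∧ ∃ n : ℕ, cutoff n x = y ∨ cutoff n y = x

/-- The set of eventually-zero binary sequences. -/
def EvZero : Set (ℕ → Bool) :=
  {x | ∀ᶠ i in Filter.atTop, x i = false}

lemma cyl_open (x : ℕ → Bool) (m : ℕ) :
    IsOpen {y : ℕ → Bool | ∀ i < m, y i = x i} := by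
  have : {y : ℕ → Bool | ∀ i < m, y i = x i}
      = Set.pi (Set.Iio m) (fun i => {x i}) := by
    ext y; simp [Set.mem_pi, Set.mem_Iio]
  rw [this]
  exact isOpen_set_pi (Set.finite_Iio m) (fun a _ => isOpen_discrete _)

lemma exists_cyl {O : Set (ℕ → Bool)} (hO : IsOpen O) {x : ℕ → Bool} (hx : x ∈ O) :
    ∃ m, ∀ y : ℕ → Bool, (∀ i < m, y i = x i) → y ∈ O := by
  obtain ⟨I, u, hu, hsub⟩ := isOpen_pi_iff.mp hO x hx
  refine ⟨I.sup id + 1, fun y hy => hsub ?_⟩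
  intro i hi
  have : y i = x i := hy i (Nat.lt_succ_of_le (Finset.le_sup (f := id) hi))
  rw [this]
  exact (hu i hi).2

theorem stmt_12 (B : Set (ℕ → Bool)) (hB : Loose cutoffGraph B) :
    IsClosed (closure B \ EvZero) := by
  apply isClosed_of_closure_subset
  intro x hx
  have hxB : x ∈ closure B := by
    have := closure_mono (diff_subset (s := closure B) (t := EvZero)) hx
    rwa [closure_closure] at this
  refine ⟨hxB, fun hxE => ?_⟩
  -- x is eventually zero
  obtain ⟨N, hN⟩ := Filter.eventually_atTop.mp hxE
  obtain ⟨O, hO, hxO, hloose⟩ := hB x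
  obtain ⟨m₀, hm⟩ := exists_cyl hO hxO
  set m := max m₀ N with hmdef
  -- find y in closure B \ EvZero agreeing with x below m
  obtain ⟨y, hyC, hy⟩ := mem_closure_iff.mp hx
    {y : ℕ → Bool | ∀ i < m, y i = x i} (cyl_open x m) (fun i _ => rfl)
  obtain ⟨hyB, hyE⟩ := hy
  -- y is not eventually zero: find j ≥ m with y j = true
  have : ∃ j ≥ m, y j = true := by
    by_contra h
    push_neg at h
    exact hyE (Filter.eventually_atTop.mpr ⟨m, fun i hi => by
      have := h i hi; simpa using this⟩)
  obtain ⟨j, hjm, hyj⟩ := this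
  -- find z in B agreeing with y below j+1
  obtain ⟨z, hzC, hzB⟩ := mem_closure_iff.mp hyB
    {w : ℕ → Bool | ∀ i < j + 1, w i = y i} (cyl_open y (j+1)) (fun i _ => rfl)
  have hzx : ∀ i < m, z i = x i := fun i hi =>
    (hzC i (lt_of_lt_of_le hi (Nat.le_succ_of_le hjm))).trans (hyC i hi)
  have hzO : z ∈ O := hm z (fun i hi => hzx i (lt_of_lt_of_le hi (le_max_left _ _)))
  have hxj : x j = false := hN j (le_trans (le_max_right _ _) hjm)
  have hzj : z j = true := (hzC j (Nat.lt_succ_self j)).trans hyj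
  refine hloose z hzB hzO ⟨?_, m, Or.inr ?_⟩
  · intro h
    rw [h, hzj] at hxj
    simp at hxj
  · funext i
    by_cases hi : i < m
    · simp [cutoff, hi, hzx i hi]
    · simp only [cutoff, if_neg hi]
      exact (hN i (le_trans (le_max_right _ _) (not_lt.mp hi))).symm
end

section
/- For each n ∈ ω let f_n : 2^ω → 2^ω be the function defined by f_n(x)(i) = x(i) if i < n and f_n(x)(i) = 0 if i ≥ n, and let G be the graph on 2^ω relating distinct points x, y if and only if there is n ∈ ω with f_n(x) = y or f_n(y) = x. Then the least cardinality of a family of G-loose sets covering 2^ω equals the dominating-type invariant 𝔡, defined as the least cardinality of a family of compact subsets of the Baire space ω^ω whose union is all of ω^ω. -/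
open Set

/-- The loose number of `cutoffGraph`: the least cardinality of a family of
loose sets covering the Cantor space. -/
noncomputable def looseNumber : Cardinal :=
  sInf {c : Cardinal | ∃ S : Set (Set (ℕ → Bool)),
    (∀ A ∈ S, Loose cutoffGraph A) ∧ ⋃₀ S = Set.univ ∧ Cardinal.mk S = c}

/-- `𝔡`: the least cardinality of a family of compact subsets of the Baire
space covering the whole Baire space. -/
noncomputable def frakD : Cardinal :=
  sInf {c : Cardinal | ∃ S : Set (Set (ℕ → ℕ)),
    (∀ K ∈ S, IsCompact K) ∧ ⋃₀ S = Set.univ ∧ Cardinal.mk S = c}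


-- basic: the "agree below M" set is open
lemma isOpen_agreeSet (z : ℕ → Bool) (M : ℕ) :
    IsOpen {y : ℕ → Bool | ∀ i < M, y i = z i} := by
  have : {y : ℕ → Bool | ∀ i < M, y i = z i}
      = ⋂ i : Fin M, (fun y : ℕ → Bool => y i) ⁻¹' {z i} := by
    ext y
    simp only [mem_setOf_eq, mem_iInter, mem_preimage, mem_singleton_iff]
    exact ⟨fun h i => h i i.2, fun h i hi => h ⟨i, hi⟩⟩
  rw [this]
  exact isOpen_iInter_of_finite fun i => (isOpen_discrete _).preimage (continuous_apply _)

lemma loose_singleton (q : ℕ → Bool) : Loose cutoffGraph {q} := by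
  intro z
  by_cases hz : z = q
  · exact ⟨univ, isOpen_univ, mem_univ _, by
      rintro y rfl _ hG
      exact hG.1 (hz ▸ rfl)⟩
  · exact ⟨{q}ᶜ, isClosed_singleton.isOpen_compl, hz, by
      rintro y rfl hy _; exact hy rfl⟩

lemma loose_witness {A : Set (ℕ → Bool)} (hA : Loose cutoffGraph A) (q : ℕ → Bool) :
    ∃ M : ℕ, ∀ y ∈ A, (∀ i < M, y i = q i) → ¬ cutoffGraph q y := by
  obtain ⟨O, hO, hqO, h⟩ := hA q
  obtain ⟨I, u, hu, hsub⟩ := isOpen_pi_iff.mp hO q hqO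
  refine ⟨I.sup id + 1, fun y hy hagree => h y hy ?_⟩
  apply hsub
  intro i hi
  have : y i = q i := hagree i (Nat.lt_succ_of_le (Finset.le_sup (f := id) hi))
  rw [this]
  exact (hu i hi).2

def padded (s : ℕ) (t : Fin (s + 1) → Bool) : ℕ → Bool :=
  fun i => if h : i < s + 1 then t ⟨i, h⟩ else false

noncomputable def phi (m : (ℕ → Bool) → ℕ) (s : ℕ) : ℕ :=
  Finset.univ.sup (fun t : Fin (s + 1) → Bool => m (padded s t))

lemma phi_mono (m : (ℕ → Bool) → ℕ) : Monotone (phi m) := by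
  apply monotone_nat_of_le_succ
  intro s
  apply Finset.sup_le
  intro t _
  have heq : padded s t = padded (s + 1) (fun i : Fin (s + 2) =>
      if h : (i : ℕ) < s + 1 then t ⟨i, h⟩ else false) := by
    funext i
    simp only [padded]
    by_cases h : i < s + 1
    · rw [dif_pos h, dif_pos (h.trans (Nat.lt_succ_self _)), dif_pos h]
    · rw [dif_neg h]
      by_cases h2 : i < s + 2
      · rw [dif_pos h2, dif_neg h]
      · rw [dif_neg h2]
  rw [heq]
  exact Finset.le_sup (f := fun t => m (padded (s + 1) t)) (Finset.mem_univ _)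

lemma cutoff_eq_padded (x : ℕ → Bool) (s : ℕ) :
    cutoff (s + 1) x = padded s (fun i : Fin (s + 1) => x i) := by
  funext i
  unfold cutoff padded
  by_cases h : i < s + 1
  · rw [if_pos h, dif_pos h]
  · rw [if_neg h, dif_neg h]

noncomputable def psi (m : (ℕ → Bool) → ℕ) : ℕ → ℕ
  | 0 => m (fun _ => false)
  | n + 1 => phi m (psi m n)

def pos (g : ℕ → ℕ) : ℕ → ℕ
  | 0 => g 0
  | n + 1 => pos g n + 1 + g (n + 1)

lemma pos_strictMono (g : ℕ → ℕ) : StrictMono (pos g) :=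
  strictMono_nat_of_lt_succ fun n => by simp [pos]; omega

open Classical in
noncomputable def enc (g : ℕ → ℕ) : ℕ → Bool :=
  fun i => if ∃ n, pos g n = i then true else false

lemma enc_eq_true_iff (g : ℕ → ℕ) (i : ℕ) : enc g i = true ↔ ∃ n, pos g n = i := by
  unfold enc
  split <;> simp_all

lemma enc_pos (g : ℕ → ℕ) (n : ℕ) : enc g (pos g n) = true :=
  (enc_eq_true_iff g _).mpr ⟨n, rfl⟩

lemma enc_false_of_gap (g : ℕ → ℕ) {n i : ℕ} (h1 : pos g n < i) (h2 : i < pos g (n + 1)) :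
    enc g i = false := by
  rw [← Bool.not_eq_true, enc_eq_true_iff]
  rintro ⟨k, rfl⟩
  rcases le_or_gt k n with hk | hk
  · have h3 := (pos_strictMono g).monotone hk
    omega
  · have h3 := (pos_strictMono g).monotone hk
    simp only [Nat.succ_eq_add_one] at h3
    omega

lemma enc_false_of_lt (g : ℕ → ℕ) {i : ℕ} (h : i < pos g 0) : enc g i = false := by
  rw [← Bool.not_eq_true, enc_eq_true_iff]
  rintro ⟨k, rfl⟩
  exact absurd ((pos_strictMono g).monotone (Nat.zero_le k)) (by omega)

-- key bound
lemma pos_lt_psi {A : Set (ℕ → Bool)} {m : (ℕ → Bool) → ℕ}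
    (hm : ∀ q, ∀ y ∈ A, (∀ i < m q, y i = q i) → ¬ cutoffGraph q y)
    {g : ℕ → ℕ} (hg : enc g ∈ A) : ∀ n, pos g n < psi m n := by
  have x := enc g
  -- G relation with truncations
  have hxq : ∀ n, cutoffGraph (cutoff (pos g n + 1) (enc g)) (enc g) := by
    intro n
    refine ⟨?_, ⟨pos g n + 1, Or.inr rfl⟩⟩
    intro h
    have h4 := pos_strictMono g (Nat.lt_succ_self n)
    simp only [Nat.succ_eq_add_one] at h4
    have h5 := congrFun h (pos g (n + 1))
    rw [enc_pos] at h5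
    unfold cutoff at h5
    rw [if_neg (by omega)] at h5
    exact Bool.false_ne_true h5
  -- agreement below next position
  have hagree : ∀ n i, i < pos g (n + 1) → enc g i = cutoff (pos g n + 1) (enc g) i := by
    intro n i hi
    unfold cutoff
    by_cases h : i < pos g n + 1
    · rw [if_pos h]
    · rw [if_neg h]
      exact enc_false_of_gap g (by omega) hi
  -- successor bound
  have hsucc : ∀ n, pos g (n + 1) < m (cutoff (pos g n + 1) (enc g)) := by
    intro n
    by_contra hle
    push_neg at hle
    exact hm _ (enc g) hg (fun i hi => hagree n i (lt_of_lt_of_le hi hle)) (hxq n)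
  -- base
  have hbase : pos g 0 < m (fun _ => false) := by
    by_contra hle
    push_neg at hle
    refine hm (fun _ => false) (enc g) hg (fun i hi => enc_false_of_lt g (lt_of_lt_of_le hi hle)) ?_
    constructor
    · intro h
      have := congrFun h.symm (pos g 0)
      rw [enc_pos] at this
      exact Bool.false_ne_true this.symm
    · refine ⟨0, Or.inr ?_⟩
      funext i
      unfold cutoff
      rw [if_neg (Nat.not_lt_zero i)]
  intro n
  induction n with
  | zero => exact hbase
  | succ n ih =>
    calc pos g (n + 1) < m (cutoff (pos g n + 1) (enc g)) := hsucc n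
    _ ≤ phi m (pos g n) := by
        rw [cutoff_eq_padded]
        exact Finset.le_sup (f := fun t => m (padded (pos g n) t)) (Finset.mem_univ _)
    _ ≤ phi m (psi m n) := phi_mono m (le_of_lt ih)

lemma le_pos (g : ℕ → ℕ) (n : ℕ) : g n ≤ pos g n := by
  cases n with
  | zero => exact le_refl _
  | succ n => simp [pos]

/-- The loose set associated to a bounding function `H`. -/
def AH (H : ℕ → ℕ) : Set (ℕ → Bool) :=
  {x | (∃ i, i ≤ H 0 ∧ x i = true) ∧ ∀ s, x s = true → ∃ i, s < i ∧ i ≤ H s ∧ x i = true}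

lemma AH_unbounded {H : ℕ → ℕ} {x : ℕ → Bool} (hx : x ∈ AH H) :
    ∀ m, ∃ i, m ≤ i ∧ x i = true := by
  intro m
  induction m with
  | zero =>
    obtain ⟨i, _, hi⟩ := hx.1
    exact ⟨i, Nat.zero_le _, hi⟩
  | succ m ih =>
    obtain ⟨i, hmi, hi⟩ := ih
    obtain ⟨j, hij, _, hj⟩ := hx.2 i hi
    exact ⟨j, by omega, hj⟩

lemma loose_AH (H : ℕ → ℕ) : Loose cutoffGraph (AH H) := by
  intro z
  by_cases hz : ∃ s : ℕ, ∀ i, s ≤ i → z i = false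
  · -- finite support
    by_cases h1 : ∃ s, z s = true
    · -- there is a largest 1
      obtain ⟨s0, hs0⟩ := hz
      obtain ⟨s1, hs1⟩ := h1
      have hs1s0 : s1 ≤ s0 := by
        by_contra h
        rw [hs0 s1 (by omega)] at hs1
        exact Bool.false_ne_true hs1
      set s := Nat.findGreatest (fun i => z i = true) s0 with hs
      have hzs : z s = true := Nat.findGreatest_spec (P := fun i => z i = true) hs1s0 hs1
      have hmax : ∀ k, s < k → z k = false := by
        intro k hk
        rcases le_or_gt k s0 with h | h
        · have := Nat.findGreatest_is_greatest hk h
          simpa using this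
        · exact hs0 k (le_of_lt h)
      refine ⟨{y | ∀ i < max (s + 1) (H s + 1), y i = z i}, isOpen_agreeSet z _,
        fun i _ => rfl, ?_⟩
      intro y hy hyO _
      obtain ⟨i, hsi, hiH, hi⟩ := hy.2 s (by
        rw [hyO s (lt_of_lt_of_le (Nat.lt_succ_self s) (le_max_left _ _))]; exact hzs)
      have : y i = z i := hyO i (lt_of_le_of_lt (by omega) (lt_of_lt_of_le (Nat.lt_succ_self _) (le_max_right _ _)))
      rw [this, hmax i hsi] at hi
      exact Bool.false_ne_true hi
    · -- z is identically false
      push_neg at h1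
      refine ⟨{y | ∀ i < H 0 + 1, y i = z i}, isOpen_agreeSet z _, fun i _ => rfl, ?_⟩
      intro y hy hyO _
      obtain ⟨i, hiH, hi⟩ := hy.1
      have : y i = z i := hyO i (by omega)
      rw [this] at hi
      exact h1 i hi
  · -- infinite support: nothing in AH is related to z
    refine ⟨Set.univ, isOpen_univ, Set.mem_univ _, ?_⟩
    intro y hy _ hG
    obtain ⟨hne, k, hk | hk⟩ := hG
    · -- cutoff k z = y : y has finite support, contradiction with AH_unbounded
      obtain ⟨i, hki, hi⟩ := AH_unbounded hy k
      rw [← hk] at hi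
      unfold cutoff at hi
      rw [if_neg (by omega)] at hi
      exact Bool.false_ne_true hi
    · -- cutoff k y = z : z has finite support, contradiction
      apply hz
      refine ⟨k, fun i hki => ?_⟩
      rw [← hk]
      unfold cutoff
      rw [if_neg (by omega)]

/-- points of finite support -/
def FS : Set (ℕ → Bool) := {x | ∃ s, ∀ i, s ≤ i → x i = false}

lemma countable_FS : FS.Countable := by
  have : FS = ⋃ s : ℕ, {x : ℕ → Bool | ∀ i, s ≤ i → x i = false} := by
    ext x; simp [FS]
  rw [this]
  refine Set.countable_iUnion fun s => Set.Finite.countable ?_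
  apply Set.Finite.of_finite_image (f := fun x (j : Fin s) => x j) (Set.toFinite _)
  intro x hx y hy hxy
  funext i
  by_cases h : i < s
  · exact congrFun hxy ⟨i, h⟩
  · rw [hx i (by omega), hy i (by omega)]

lemma mem_AH_of_bound {x : ℕ → Bool} (hx : ∀ s, ∃ i, s ≤ i ∧ x i = true) (h : ℕ → ℕ)
    (hb : ∀ n, Nat.nth (fun i => x i = true) n ≤ h n) :
    x ∈ AH (fun s => Finset.sup (Finset.range (s + 2)) h) := by
  classical
  set p : ℕ → Prop := fun i => x i = true with hp
  have hinf : (setOf p).Infinite := by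
    apply Set.infinite_of_not_bddAbove
    rintro ⟨b, hbnd⟩
    obtain ⟨i, hbi, hi⟩ := hx (b + 1)
    have := hbnd (show i ∈ setOf p from hi)
    omega
  constructor
  · refine ⟨Nat.nth p 0, ?_, Nat.nth_mem_of_infinite hinf 0⟩
    exact le_trans (hb 0) (Finset.le_sup (by simp))
  · intro s hs
    set j := Nat.count p s with hj
    have hnth : Nat.nth p j = s := Nat.nth_count hs
    refine ⟨Nat.nth p (j + 1), ?_, ?_, Nat.nth_mem_of_infinite hinf (j + 1)⟩
    · rw [← hnth]
      exact Nat.nth_strictMono hinf (Nat.lt_succ_self j)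
    · refine le_trans (hb (j + 1)) (Finset.le_sup ?_)
      have : j ≤ s := hnth ▸ (Nat.nth_strictMono hinf).le_apply
      simp only [Finset.mem_range]
      omega

lemma aleph0_le_frakD : Cardinal.aleph0 ≤ frakD := by
  have hne : {c : Cardinal | ∃ S : Set (Set (ℕ → ℕ)),
      (∀ K ∈ S, IsCompact K) ∧ ⋃₀ S = Set.univ ∧ Cardinal.mk S = c}.Nonempty := by
    refine ⟨_, Set.range (fun g : ℕ → ℕ => ({g} : Set (ℕ → ℕ))), ?_, ?_, rfl⟩
    · rintro K ⟨g, rfl⟩; exact isCompact_singleton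
    · ext g
      simp only [Set.mem_sUnion, Set.mem_univ, iff_true, Set.mem_range]
      exact ⟨{g}, ⟨g, rfl⟩, rfl⟩
  refine le_csInf hne ?_
  rintro c ⟨S, hcomp, hcov, rfl⟩
  by_contra hlt
  push_neg at hlt
  have hfin : S.Finite := Cardinal.lt_aleph0_iff_set_finite.mp hlt
  have hU : IsCompact (Set.univ : Set (ℕ → ℕ)) := hcov ▸ hfin.isCompact_sUnion hcomp
  have himg : IsCompact ((fun g : ℕ → ℕ => g 0) '' Set.univ) :=
    hU.image (continuous_apply 0)
  have : ((fun g : ℕ → ℕ => g 0) '' Set.univ) = Set.univ := by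
    ext n
    simp only [Set.image_univ, Set.mem_range, Set.mem_univ, iff_true]
    exact ⟨fun _ => n, rfl⟩
  rw [this] at himg
  exact Set.infinite_univ himg.finite_of_discrete

lemma looseNumber_le_of_compact_cover (S : Set (Set (ℕ → ℕ)))
    (hcomp : ∀ K ∈ S, IsCompact K) (hcov : ⋃₀ S = Set.univ) :
    looseNumber ≤ Cardinal.mk S + Cardinal.aleph0 := by
  classical
  have hbound : ∀ K : ↥S, ∃ h : ℕ → ℕ, ∀ g ∈ (K : Set (ℕ → ℕ)), ∀ n, g n ≤ h n := by
    intro K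
    have hb : ∀ n : ℕ, ∃ b, ∀ g ∈ (K : Set (ℕ → ℕ)), g n ≤ b := by
      intro n
      have hfin : ((fun g : ℕ → ℕ => g n) '' K).Finite :=
        ((hcomp K K.2).image (continuous_apply n)).finite_of_discrete
      obtain ⟨b, hb⟩ := hfin.bddAbove
      exact ⟨b, fun g hg => hb ⟨g, hg, rfl⟩⟩
    choose b hbs using hb
    exact ⟨b, fun g hg n => hbs n g hg⟩
  choose h hh using hbound
  set S' : Set (Set (ℕ → Bool)) :=
    Set.range (fun K : ↥S => AH (fun s => Finset.sup (Finset.range (s + 2)) (h K)))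
      ∪ (fun q => ({q} : Set (ℕ → Bool))) '' FS with hS'
  have hmem : Cardinal.mk S' ∈ {c : Cardinal | ∃ S : Set (Set (ℕ → Bool)),
      (∀ A ∈ S, Loose cutoffGraph A) ∧ ⋃₀ S = Set.univ ∧ Cardinal.mk S = c} := by
    refine ⟨S', ?_, ?_, rfl⟩
    · rintro A (⟨K, rfl⟩ | ⟨q, _, rfl⟩)
      · exact loose_AH _
      · exact loose_singleton q
    · ext x
      simp only [Set.mem_sUnion, Set.mem_univ, iff_true]
      by_cases hfs : x ∈ FS
      · exact ⟨{x}, Or.inr ⟨x, hfs, rfl⟩, rfl⟩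
      · have hx : ∀ s, ∃ i, s ≤ i ∧ x i = true := by
          intro s
          by_contra hcon
          push_neg at hcon
          refine hfs ⟨s, fun i hi => ?_⟩
          have := hcon i hi
          simp only [Bool.not_eq_true] at this
          exact this
        have he : Nat.nth (fun i => x i = true) ∈ ⋃₀ S := hcov ▸ Set.mem_univ _
        obtain ⟨K0, hK0, heK⟩ := he
        refine ⟨_, Or.inl ⟨⟨K0, hK0⟩, rfl⟩,
          mem_AH_of_bound hx (h ⟨K0, hK0⟩) (fun n => hh ⟨K0, hK0⟩ _ heK n)⟩
  refine le_trans (csInf_le' hmem) ?_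
  refine le_trans (Cardinal.mk_union_le _ _) (add_le_add Cardinal.mk_range_le ?_)
  refine le_trans Cardinal.mk_image_le ?_
  have : Countable ↥FS := countable_FS.to_subtype
  exact Cardinal.mk_le_aleph0

lemma frakD_le_of_loose_cover (S : Set (Set (ℕ → Bool)))
    (hS : ∀ A ∈ S, Loose cutoffGraph A) (hcov : ⋃₀ S = Set.univ) :
    frakD ≤ Cardinal.mk S := by
  classical
  choose m hm using fun (A : ↥S) (q : ℕ → Bool) => loose_witness (hS A A.2) q
  set K : ↥S → Set (ℕ → ℕ) := fun A => {g | ∀ n, g n < psi (m A) n} with hK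
  have hKcompact : ∀ A, IsCompact (K A) := by
    intro A
    have : K A = Set.univ.pi (fun n => Set.Iio (psi (m A) n)) := by
      ext g
      simp [hK, Set.mem_univ_pi]
    rw [this]
    exact isCompact_univ_pi fun n => (Set.finite_Iio _).isCompact
  have hKcover : ∀ g : ℕ → ℕ, ∃ A : ↥S, g ∈ K A := by
    intro g
    have : enc g ∈ ⋃₀ S := hcov ▸ Set.mem_univ _
    obtain ⟨A, hAS, hgA⟩ := this
    refine ⟨⟨A, hAS⟩, fun n => lt_of_le_of_lt (le_pos g n) ?_⟩
    exact pos_lt_psi (fun q => hm ⟨A, hAS⟩ q) hgA n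
  have hmem : Cardinal.mk (Set.range K) ∈ {c : Cardinal | ∃ S : Set (Set (ℕ → ℕ)),
      (∀ K ∈ S, IsCompact K) ∧ ⋃₀ S = Set.univ ∧ Cardinal.mk S = c} := by
    refine ⟨Set.range K, ?_, ?_, rfl⟩
    · rintro K' ⟨A, rfl⟩
      exact hKcompact A
    · ext g
      simp only [Set.mem_sUnion, Set.mem_univ, iff_true, Set.mem_range]
      obtain ⟨A, hA⟩ := hKcover g
      exact ⟨K A, ⟨A, rfl⟩, hA⟩
  exact le_trans (csInf_le' hmem) Cardinal.mk_range_le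

theorem stmt_13 : looseNumber = frakD := by
  apply le_antisymm
  · have hne : {c : Cardinal | ∃ S : Set (Set (ℕ → ℕ)),
        (∀ K ∈ S, IsCompact K) ∧ ⋃₀ S = Set.univ ∧ Cardinal.mk S = c}.Nonempty := by
      refine ⟨_, Set.range (fun g : ℕ → ℕ => ({g} : Set (ℕ → ℕ))), ?_, ?_, rfl⟩
      · rintro K ⟨g, rfl⟩; exact isCompact_singleton
      · ext g
        simp only [Set.mem_sUnion, Set.mem_univ, iff_true, Set.mem_range]
        exact ⟨{g}, ⟨g, rfl⟩, rfl⟩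
    have hD : frakD ∈ {c : Cardinal | ∃ S : Set (Set (ℕ → ℕ)),
        (∀ K ∈ S, IsCompact K) ∧ ⋃₀ S = Set.univ ∧ Cardinal.mk S = c} := csInf_mem hne
    obtain ⟨S, hcomp, hcov, hmk⟩ := hD
    calc looseNumber ≤ Cardinal.mk S + Cardinal.aleph0 :=
          looseNumber_le_of_compact_cover S hcomp hcov
      _ = frakD + Cardinal.aleph0 := by rw [hmk]
      _ = frakD := Cardinal.add_eq_left aleph0_le_frakD aleph0_le_frakD
  · have hne : {c : Cardinal | ∃ S : Set (Set (ℕ → Bool)),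
        (∀ A ∈ S, Loose cutoffGraph A) ∧ ⋃₀ S = Set.univ ∧ Cardinal.mk S = c}.Nonempty := by
      refine ⟨_, Set.range (fun x : ℕ → Bool => ({x} : Set (ℕ → Bool))), ?_, ?_, rfl⟩
      · rintro A ⟨x, rfl⟩; exact loose_singleton x
      · ext x
        simp only [Set.mem_sUnion, Set.mem_univ, iff_true, Set.mem_range]
        exact ⟨{x}, ⟨x, rfl⟩, rfl⟩
    have hL : looseNumber ∈ {c : Cardinal | ∃ S : Set (Set (ℕ → Bool)),
        (∀ A ∈ S, Loose cutoffGraph A) ∧ ⋃₀ S = Set.univ ∧ Cardinal.mk S = c} := csInf_mem hne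
    obtain ⟨S, hS, hcov, hmk⟩ := hL
    exact hmk ▸ frakD_le_of_loose_cover S hS hcov
end

section
/- For each n ∈ ω let f_n : 2^ω → 2^ω be the function defined by f_n(x)(i) = x(i) if i < n and f_n(x)(i) = 0 if i ≥ n, and let G be the graph on 2^ω relating distinct points x, y if and only if there is n ∈ ω with f_n(x) = y or f_n(y) = x. Then κ(G), the least cardinality of a set S ⊆ 2^ω that is not contained in the union of countably many compact G-anticliques, equals 𝔟, the least cardinality of a subset of the Baire space ω^ω that is not contained in the union of countably many compact subsets of ω^ω. -/
open Set
set_option linter.unusedSectionVars false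
set_option linter.unusedVariables false

/-- `κ(G)`: the least cardinality of a subset of `2^ω` not covered by
countably many compact `G`-anticliques. -/
noncomputable def kappa (G : (ℕ → Bool) → (ℕ → Bool) → Prop) : Cardinal :=
  sInf {c : Cardinal | ∃ S : Set (ℕ → Bool), Cardinal.mk S = c ∧
    ¬ ∃ K : ℕ → Set (ℕ → Bool),
      (∀ n, IsCompact (K n) ∧ Anticlique G (K n)) ∧ S ⊆ ⋃ n, K n}

/-- `𝔟`: the least cardinality of a subset of the Baire space not covered by
countably many compact subsets of the Baire space. -/
noncomputable def frakB : Cardinal :=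
  sInf {c : Cardinal | ∃ S : Set (ℕ → ℕ), Cardinal.mk S = c ∧
    ¬ ∃ K : ℕ → Set (ℕ → ℕ), (∀ n, IsCompact (K n)) ∧ S ⊆ ⋃ n, K n}

namespace Aux

variable {A B : Type*} [TopologicalSpace A] [DiscreteTopology A]
  [TopologicalSpace B] [DiscreteTopology B]

lemma isOpen_cyl (x : ℕ → A) (n : ℕ) : IsOpen {y : ℕ → A | ∀ i < n, y i = x i} := by
  have : {y : ℕ → A | ∀ i < n, y i = x i} = Set.pi (Set.Iio n) (fun i => {x i}) := by
    ext y; simp [Set.mem_pi, Set.mem_Iio]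
  rw [this]
  exact isOpen_set_pi (Set.finite_Iio n) (fun i _ => isOpen_discrete _)

lemma mem_cyl_self (x : ℕ → A) (n : ℕ) : x ∈ {y : ℕ → A | ∀ i < n, y i = x i} :=
  fun _ _ => rfl

lemma continuous_det (φ : (ℕ → A) → B)
    (hd : ∀ x, ∃ n, ∀ y, (∀ i < n, y i = x i) → φ y = φ x) : Continuous φ := by
  refine continuous_def.2 (fun U _ => ?_)
  rw [isOpen_iff_mem_nhds]
  intro x hx
  obtain ⟨n, hn⟩ := hd x
  refine Filter.mem_of_superset ((isOpen_cyl x n).mem_nhds (mem_cyl_self x n)) ?_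
  intro y hy
  simp only [Set.mem_preimage]
  rw [hn y hy]
  exact hx

lemma continuousOn_det (φ : (ℕ → A) → B) (S : Set (ℕ → A))
    (hd : ∀ x ∈ S, ∃ n, ∀ y, (∀ i < n, y i = x i) → φ y = φ x) : ContinuousOn φ S := by
  intro x hx
  obtain ⟨n, hn⟩ := hd x hx
  intro U hU
  refine mem_nhdsWithin_of_mem_nhds ?_
  refine Filter.mem_of_superset ((isOpen_cyl x n).mem_nhds (mem_cyl_self x n)) ?_
  intro y hy
  simp only [Set.mem_preimage]
  rw [hn y hy]
  exact mem_of_mem_nhds hU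

/-- Non-eventually-zero points of `2^ω`. -/
def NE : Set (ℕ → Bool) := {x | ∀ n, ∃ i, n ≤ i ∧ x i = true}

/-- partial sums with gaps -/
def s (f : ℕ → ℕ) : ℕ → ℕ
  | 0 => f 0
  | k+1 => s f k + f (k+1) + 1

lemma s_lt_succ (f : ℕ → ℕ) (k : ℕ) : s f k < s f (k+1) := by
  simp [s]

lemma s_strictMono (f : ℕ → ℕ) : StrictMono (s f) :=
  strictMono_nat_of_lt_succ (s_lt_succ f)

lemma le_s (f : ℕ → ℕ) (k : ℕ) : k ≤ s f k := by
  induction k with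
  | zero => exact Nat.zero_le _
  | succ k ih => have := s_lt_succ f k; omega

open Classical in
noncomputable def h (f : ℕ → ℕ) : ℕ → Bool := fun i => decide (∃ k, s f k = i)

lemma h_eq_true {f : ℕ → ℕ} {i : ℕ} : h f i = true ↔ ∃ k, s f k = i := by
  simp [h]

lemma h_mem_NE (f : ℕ → ℕ) : h f ∈ NE := by
  intro n
  exact ⟨s f n, le_s f n, h_eq_true.2 ⟨n, rfl⟩⟩

noncomputable def p (x : ℕ → Bool) : ℕ → ℕ
  | 0 => sInf {n | x n = true}
  | k+1 => sInf {n | p x k < n ∧ x n = true}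

noncomputable def g (x : ℕ → Bool) : ℕ → ℕ
  | 0 => p x 0
  | k+1 => p x (k+1) - p x k - 1

lemma sInf_eq_of {S : Set ℕ} {a : ℕ} (h1 : a ∈ S) (h2 : ∀ b < a, b ∉ S) : sInf S = a := by
  refine le_antisymm (Nat.sInf_le h1) ?_
  by_contra hlt
  push_neg at hlt
  exact h2 _ hlt (Nat.sInf_mem ⟨a, h1⟩)

lemma p_h (f : ℕ → ℕ) : ∀ k, p (h f) k = s f k := by
  intro k
  induction k with
  | zero =>
    refine sInf_eq_of (h_eq_true.2 ⟨0, rfl⟩) ?_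
    intro b hb hmem
    obtain ⟨j, hj⟩ := h_eq_true.1 hmem
    have := (s_strictMono f).monotone (Nat.zero_le j)
    omega
  | succ k ih =>
    refine sInf_eq_of ⟨?_, h_eq_true.2 ⟨k+1, rfl⟩⟩ ?_
    · rw [ih]; exact s_lt_succ f k
    · rintro b hb ⟨hb1, hb2⟩
      obtain ⟨j, hj⟩ := h_eq_true.1 hb2
      rw [ih] at hb1
      have hjk : k < j := by
        by_contra hle
        push_neg at hle
        have := (s_strictMono f).monotone hle
        omega
      have h5 : s f (k+1) ≤ s f j := (s_strictMono f).monotone hjk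
      omega

lemma g_h (f : ℕ → ℕ) : g (h f) = f := by
  funext k
  cases k with
  | zero => show p (h f) 0 = f 0; rw [p_h]; rfl
  | succ k =>
    show p (h f) (k+1) - p (h f) k - 1 = f (k+1)
    rw [p_h, p_h]
    show s f k + f (k+1) + 1 - s f k - 1 = f (k+1)
    omega

lemma h_injective : Function.Injective h := by
  intro f f' hff
  calc f = g (h f) := (g_h f).symm
  _ = g (h f') := by rw [hff]
  _ = f' := g_h f'

-- facts about p for x ∈ NE
lemma p_spec {x : ℕ → Bool} (hx : x ∈ NE) :
    ∀ k, x (p x k) = true ∧ p x k < p x (k+1) := by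
  have h0 : x (p x 0) = true := Nat.sInf_mem (by obtain ⟨i, _, hi⟩ := hx 0; exact ⟨i, hi⟩)
  have key : ∀ k, x (p x k) = true → p x k < p x (k+1) ∧ x (p x (k+1)) = true := by
    intro k _
    have hne : {n | p x k < n ∧ x n = true}.Nonempty := by
      obtain ⟨i, hi1, hi2⟩ := hx (p x k + 1)
      exact ⟨i, by omega, hi2⟩
    have := Nat.sInf_mem hne
    exact ⟨this.1, this.2⟩
  intro k
  induction k with
  | zero => exact ⟨h0, (key 0 h0).1⟩
  | succ k ih => exact ⟨(key k ih.1).2, (key (k+1) (key k ih.1).2).1⟩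

lemma p_true {x : ℕ → Bool} (hx : x ∈ NE) (k : ℕ) : x (p x k) = true := (p_spec hx k).1

lemma p_lt {x : ℕ → Bool} (hx : x ∈ NE) (k : ℕ) : p x k < p x (k+1) := (p_spec hx k).2

lemma p_strictMono {x : ℕ → Bool} (hx : x ∈ NE) : StrictMono (p x) :=
  strictMono_nat_of_lt_succ (p_lt hx)

/-- every position of a `true` is attained by `p`. -/
lemma exists_p_eq {x : ℕ → Bool} (hx : x ∈ NE) : ∀ i, x i = true → ∃ k, p x k = i := by
  intro i
  induction i using Nat.strong_induction_on with
  | _ i IH =>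
    intro hi
    by_cases hbelow : ∃ j, j < i ∧ x j = true
    · -- take maximal such j
      obtain ⟨j, hji, hjt⟩ := hbelow
      -- find the largest j < i with x j = true
      classical
      set j0 := Nat.findGreatest (fun j => x j = true) (i-1) with hj0def
      have hj0t : x j0 = true := by
        rw [hj0def]
        exact Nat.findGreatest_spec (m := j) (n := i - 1) (P := fun j => x j = true)
          (by omega) hjt
      have hj0i : j0 < i := by
        have := Nat.findGreatest_le (P := fun j => x j = true) (i-1)
        omega
      have hmax : ∀ j', j0 < j' → j' < i → x j' = false := by
        intro j' h1 h2
        have := Nat.findGreatest_is_greatest (P := fun j => x j = true) (n := i-1) h1 (by omega)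
        simpa using this
      obtain ⟨k, hk⟩ := IH j0 hj0i hj0t
      refine ⟨k+1, ?_⟩
      show sInf {n | p x k < n ∧ x n = true} = i
      refine sInf_eq_of ⟨by omega, hi⟩ ?_
      rintro b hb ⟨hb1, hb2⟩
      rw [hk] at hb1
      exact absurd hb2 (by simp [hmax b hb1 hb])
    · push_neg at hbelow
      refine ⟨0, ?_⟩
      show sInf {n | x n = true} = i
      refine sInf_eq_of hi ?_
      intro b hb hbmem
      exact absurd hbmem (by simp [hbelow b hb])

lemma s_g {x : ℕ → Bool} (hx : x ∈ NE) : ∀ k, s (g x) k = p x k := by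
  intro k
  induction k with
  | zero => rfl
  | succ k ih =>
    have := p_lt hx k
    show s (g x) k + g x (k+1) + 1 = p x (k+1)
    rw [ih]
    show p x k + (p x (k+1) - p x k - 1) + 1 = p x (k+1)
    omega

lemma h_g {x : ℕ → Bool} (hx : x ∈ NE) : h (g x) = x := by
  funext i
  cases hxi : x i with
  | true =>
    refine h_eq_true.2 ?_
    obtain ⟨k, hk⟩ := exists_p_eq hx i hxi
    exact ⟨k, by rw [s_g hx, hk]⟩
  | false =>
    rw [← Bool.not_eq_true]
    rw [h_eq_true]
    rintro ⟨k, hk⟩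
    rw [s_g hx] at hk
    rw [← hk] at hxi
    rw [p_true hx k] at hxi
    exact Bool.noConfusion hxi

lemma s_congr {f f' : ℕ → ℕ} {k : ℕ} (hag : ∀ j ≤ k, f j = f' j) : s f k = s f' k := by
  induction k with
  | zero => exact hag 0 le_rfl
  | succ k ih =>
    show s f k + f (k+1) + 1 = s f' k + f' (k+1) + 1
    rw [ih (fun j hj => hag j (by omega)), hag (k+1) le_rfl]

lemma continuous_h : Continuous h := by
  refine continuous_pi (fun i => continuous_det _ (fun f => ⟨i + 1, fun y hy => ?_⟩))
  simp only [h]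
  rw [decide_eq_decide]
  constructor
  · rintro ⟨k, hk⟩
    have hki : k ≤ i := le_trans (le_s y k) (le_of_eq hk)
    exact ⟨k, by rw [← s_congr (fun j hj => hy j (by omega)), hk]⟩
  · rintro ⟨k, hk⟩
    have hki : k ≤ i := le_trans (le_s f k) (le_of_eq hk)
    exact ⟨k, by rw [s_congr (fun j hj => hy j (by omega)), hk]⟩

lemma p_congr {x : ℕ → Bool} (hx : x ∈ NE) (k : ℕ) {y : ℕ → Bool}
    (hag : ∀ i ≤ p x k, y i = x i) : ∀ j ≤ k, p y j = p x j := by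
  intro j hj
  induction j with
  | zero =>
    have h0k : p x 0 ≤ p x k := (p_strictMono hx).monotone (Nat.zero_le k)
    refine sInf_eq_of ?_ ?_
    · show y (p x 0) = true
      rw [hag _ h0k]; exact p_true hx 0
    · intro b hb hbmem
      have : x b = true := by rw [← hag b (by omega)]; exact hbmem
      exact Nat.notMem_of_lt_sInf hb this
  | succ j ih =>
    have hjk : j ≤ k := by omega
    have hpj := ih hjk
    have hmon : p x (j+1) ≤ p x k := (p_strictMono hx).monotone hj
    refine sInf_eq_of ⟨?_, ?_⟩ ?_
    · rw [hpj]; exact p_lt hx j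
    · show y (p x (j+1)) = true
      rw [hag _ hmon]; exact p_true hx (j+1)
    · rintro b hb ⟨hb1, hb2⟩
      rw [hpj] at hb1
      have : x b = true := by rw [← hag b (by omega)]; exact hb2
      exact Nat.notMem_of_lt_sInf (s := {n | p x j < n ∧ x n = true}) hb ⟨hb1, this⟩

lemma continuousOn_g : ContinuousOn g NE := by
  refine continuousOn_pi.2 (fun k => continuousOn_det _ _ (fun x hx => ?_))
  refine ⟨p x k + 1, fun y hy => ?_⟩
  have hag : ∀ i ≤ p x k, y i = x i := fun i hi => hy i (by omega)
  cases k with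
  | zero =>
    show p y 0 = p x 0
    exact p_congr hx 0 hag 0 le_rfl
  | succ k =>
    show p y (k+1) - p y k - 1 = p x (k+1) - p x k - 1
    rw [p_congr hx (k+1) hag (k+1) le_rfl, p_congr hx (k+1) hag k (by omega)]

lemma cutoff_not_mem_NE (n : ℕ) (x : ℕ → Bool) : cutoff n x ∉ NE := by
  intro hmem
  obtain ⟨i, hi, ht⟩ := hmem n
  simp [cutoff, Nat.not_lt.2 hi] at ht

lemma anticlique_of_subset_NE {K : Set (ℕ → Bool)} (hK : K ⊆ NE) :
    Anticlique cutoffGraph K := by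
  intro x hx y hy hxy hG
  obtain ⟨-, n, hc | hc⟩ := hG
  · exact cutoff_not_mem_NE n x (hc ▸ hK hy)
  · exact cutoff_not_mem_NE n y (hc ▸ hK hx)

def U (K : Set (ℕ → Bool)) : Set (ℕ → Bool) :=
  ⋃ e ∈ K \ NE, ⋃ m ∈ {m : ℕ | ∀ i, m ≤ i → e i = false}, {y | ∀ i < m, y i = e i}

lemma isOpen_U (K : Set (ℕ → Bool)) : IsOpen (U K) :=
  isOpen_biUnion (fun e _ => isOpen_biUnion (fun m _ => isOpen_cyl e m))

lemma not_NE_bound {e : ℕ → Bool} (he : e ∉ NE) : ∃ m, ∀ i, m ≤ i → e i = false := by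
  simp only [NE, mem_setOf_eq, not_forall] at he
  obtain ⟨n, hn⟩ := he
  push_neg at hn
  exact ⟨n, fun i hi => by simpa using hn i hi⟩

lemma diff_subset_NE {K : Set (ℕ → Bool)} : K \ U K ⊆ NE := by
  rintro x ⟨hxK, hxU⟩
  by_contra hxNE
  obtain ⟨m, hm⟩ := not_NE_bound hxNE
  exact hxU (mem_biUnion ⟨hxK, hxNE⟩ (mem_biUnion hm (fun i _ => rfl)))

lemma inter_NE_subset {K : Set (ℕ → Bool)} (hK : Anticlique cutoffGraph K) :
    K ∩ NE ⊆ K \ U K := by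
  rintro x ⟨hxK, hxNE⟩
  refine ⟨hxK, fun hxU => ?_⟩
  simp only [U, mem_iUnion, mem_setOf_eq, exists_prop] at hxU
  obtain ⟨e, ⟨heK, heNE⟩, m, hm, hagree⟩ := hxU
  have hcut : cutoff m x = e := by
    funext i
    by_cases hi : i < m
    · simp [cutoff, hi, hagree i hi]
    · simp [cutoff, hi, (hm i (Nat.not_lt.1 hi)).symm]
  have hne : x ≠ e := fun hxe => heNE (hxe ▸ hxNE)
  exact hK x hxK e heK hne ⟨hne, m, Or.inl hcut⟩

lemma countable_compl_NE : (NEᶜ : Set (ℕ → Bool)).Countable := by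
  have hsub : (NEᶜ : Set (ℕ → Bool)) ⊆ ⋃ n, Set.range (cutoff n) := by
    intro x hx
    obtain ⟨m, hm⟩ := not_NE_bound hx
    refine mem_iUnion.2 ⟨m, x, funext fun i => ?_⟩
    by_cases hi : i < m
    · simp [cutoff, hi]
    · simp [cutoff, hi, (hm i (Nat.not_lt.1 hi)).symm]
  refine Set.Countable.mono hsub (countable_iUnion (fun n => ?_))
  have hfin : (Set.range (cutoff n)).Finite := by
    classical
    have : Set.range (cutoff n) ⊆
        Set.range (fun v : Fin n → Bool => (fun i => if h : i < n then v ⟨i, h⟩ else false)) := by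
      rintro _ ⟨x, rfl⟩
      exact ⟨fun j => x j, by funext i; simp [cutoff]⟩
    exact (Set.finite_range _).subset this
  exact hfin.countable

lemma false_not_mem_NE : (fun _ => false) ∉ NE := by
  intro hmem
  obtain ⟨i, _, ht⟩ := hmem 0
  exact Bool.noConfusion ht

lemma baire_not_sigma_compact :
    ¬ ∃ K : ℕ → Set (ℕ → ℕ), (∀ n, IsCompact (K n)) ∧ (univ : Set (ℕ → ℕ)) ⊆ ⋃ n, K n := by
  rintro ⟨K, hK, hcov⟩
  classical
  set b : ℕ → ℕ → ℕ := fun n i => sSup ((fun f : ℕ → ℕ => f i) '' K n) with hbdef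
  have hb : ∀ n i, ∀ f ∈ K n, f i ≤ b n i := fun n i f hf =>
    le_csSup ((hK n).image (continuous_apply i)).bddAbove ⟨f, hf, rfl⟩
  set F : ℕ → ℕ := fun i => (Finset.range (i+1)).sup (fun n => b n i) + 1 with hFdef
  obtain ⟨n, hFn⟩ := mem_iUnion.1 (hcov (mem_univ F))
  have h1 : F n ≤ b n n := hb n n F hFn
  have h2 : b n n ≤ (Finset.range (n+1)).sup (fun m => b m n) :=
    Finset.le_sup (f := fun m => b m n) (Finset.self_mem_range_succ n)
  have h3 : F n = (Finset.range (n+1)).sup (fun m => b m n) + 1 := rfl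
  omega

end Aux

theorem stmt_14 : kappa cutoffGraph = frakB := by
  classical
  set A : Set Cardinal := {c : Cardinal | ∃ S : Set (ℕ → Bool), Cardinal.mk S = c ∧
    ¬ ∃ K : ℕ → Set (ℕ → Bool),
      (∀ n, IsCompact (K n) ∧ Anticlique cutoffGraph (K n)) ∧ S ⊆ ⋃ n, K n} with hA
  set B : Set Cardinal := {c : Cardinal | ∃ S : Set (ℕ → ℕ), Cardinal.mk S = c ∧
    ¬ ∃ K : ℕ → Set (ℕ → ℕ), (∀ n, IsCompact (K n)) ∧ S ⊆ ⋃ n, K n} with hB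
  have hBA : B ⊆ A := by
    rintro c ⟨S, hmk, hS⟩
    refine ⟨Aux.h '' S, by rw [Cardinal.mk_image_eq Aux.h_injective, hmk], ?_⟩
    rintro ⟨K, hK, hcov⟩
    apply hS
    refine ⟨fun n => Aux.g '' (K n \ Aux.U (K n)), fun n =>
      ((hK n).1.diff (Aux.isOpen_U _)).image_of_continuousOn
        (Aux.continuousOn_g.mono Aux.diff_subset_NE), ?_⟩
    intro f hf
    have hhf : Aux.h f ∈ ⋃ n, K n := hcov ⟨f, hf, rfl⟩
    obtain ⟨n, hn⟩ := mem_iUnion.1 hhf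
    refine mem_iUnion.2 ⟨n, Aux.h f, ?_, Aux.g_h f⟩
    exact Aux.inter_NE_subset (hK n).2 ⟨hn, Aux.h_mem_NE f⟩
  have hBne : B.Nonempty :=
    ⟨Cardinal.mk (univ : Set (ℕ → ℕ)), univ, rfl, Aux.baire_not_sigma_compact⟩
  have hAne : A.Nonempty := ⟨hBne.choose, hBA hBne.choose_spec⟩
  show sInf A = sInf B
  refine le_antisymm (csInf_le_csInf (OrderBot.bddBelow _) hBne hBA) (le_csInf hAne ?_)
  rintro c ⟨S, hmk, hS⟩
  set T : Set (ℕ → ℕ) := Aux.g '' (S ∩ Aux.NE) with hT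
  have hTB : Cardinal.mk T ∈ B := by
    refine ⟨T, rfl, ?_⟩
    rintro ⟨C, hC, hcov⟩
    apply hS
    obtain ⟨e, he⟩ := Aux.countable_compl_NE.exists_eq_range
      ⟨(fun _ => false), Aux.false_not_mem_NE⟩
    refine ⟨fun n => if Even n then Aux.h '' C (n/2) else {e (n/2)}, fun n => ?_, ?_⟩
    · by_cases hn : Even n
      · simp only [hn, if_true]
        refine ⟨(hC _).image Aux.continuous_h, Aux.anticlique_of_subset_NE ?_⟩
        rintro _ ⟨f, _, rfl⟩
        exact Aux.h_mem_NE f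
      · simp only [hn, if_false]
        refine ⟨isCompact_singleton, ?_⟩
        intro x hx y hy hxy
        simp only [mem_singleton_iff] at hx hy
        exact absurd (hx.trans hy.symm) hxy
    · intro x hx
      by_cases hxNE : x ∈ Aux.NE
      · have hgx : Aux.g x ∈ T := ⟨x, ⟨hx, hxNE⟩, rfl⟩
        obtain ⟨m, hm⟩ := mem_iUnion.1 (hcov hgx)
        refine mem_iUnion.2 ⟨2*m, ?_⟩
        have he2 : Even (2*m) := even_two_mul m
        have hdiv : (2*m)/2 = m := by omega
        simp only [he2, if_true, hdiv]
        exact ⟨Aux.g x, hm, Aux.h_g hxNE⟩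
      · have : x ∈ Set.range e := he ▸ hxNE
        obtain ⟨j, hj⟩ := this
        refine mem_iUnion.2 ⟨2*j+1, ?_⟩
        have ho : ¬ Even (2*j+1) := by simp [Nat.even_add_one, parity_simps]
        have hdiv : (2*j+1)/2 = j := by omega
        simp only [ho, if_false, hdiv, mem_singleton_iff]
        exact hj.symm
  calc sInf B ≤ Cardinal.mk T := csInf_le (OrderBot.bddBelow _) hTB
    _ ≤ Cardinal.mk (S ∩ Aux.NE : Set (ℕ → Bool)) := Cardinal.mk_image_le
    _ ≤ Cardinal.mk S := Cardinal.mk_le_mk_of_subset inter_subset_left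
    _ = c := hmk
end

section
/- Let n > 3 be a natural number, let ⟨r_k : k ∈ ω⟩ be a sequence of positive real numbers converging to 0, and let G be the graph on the cube [0,1]^n ⊆ ℝ^n relating distinct points x, y if and only if the Euclidean distance between x and y equals r_k for some k ∈ ω. Then G has uncountable coloring number: there is no orientation of G (antisymmetric relation o whose symmetrization is G) in which the outflow {y : o x y} of every vertex x is finite. -/
open Set

/-- The unit cube `[0,1]^n` with the Euclidean metric inherited from `ℝ^n`. -/
abbrev Cube (n : ℕ) : Type :=
  {x : EuclideanSpace ℝ (Fin n) // ∀ i, x i ∈ Set.Icc (0 : ℝ) 1}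

noncomputable def zfun (n : ℕ) (ρ t : ℝ) : EuclideanSpace ℝ (Fin n) :=
  WithLp.toLp 2 fun m : Fin n => if m.val = 0 then 1/2 + t else if m.val = 1 then 1/2 + Real.sqrt (ρ^2 - t^2) else 1/2

noncomputable def yfun (n : ℕ) (d s : ℝ) : EuclideanSpace ℝ (Fin n) :=
  WithLp.toLp 2 fun m : Fin n => if m.val = 2 then 1/2 + s else if m.val = 3 then 1/2 + Real.sqrt (d^2 - s^2) else 1/2

lemma zy_dist (n : ℕ) (hn : 4 ≤ n) (ρ d t s : ℝ) (ht : t^2 ≤ ρ^2) (hs : s^2 ≤ d^2) :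
    dist (zfun n ρ t) (yfun n d s) = Real.sqrt (ρ^2 + d^2) := by
  rw [EuclideanSpace.dist_eq]
  congr 1
  have key : ∀ m : Fin n, dist (zfun n ρ t m) (yfun n d s m) ^ 2 =
      (if m = (⟨0, by omega⟩ : Fin n) then t^2 else 0) +
      (if m = (⟨1, by omega⟩ : Fin n) then ρ^2 - t^2 else 0) +
      (if m = (⟨2, by omega⟩ : Fin n) then s^2 else 0) +
      (if m = (⟨3, by omega⟩ : Fin n) then d^2 - s^2 else 0) := by
    intro m
    simp only [zfun, yfun, PiLp.toLp_apply, Real.dist_eq, Fin.ext_iff]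
    rcases eq_or_ne m.val 0 with h0 | h0
    · simp [h0, sq_abs]
    rcases eq_or_ne m.val 1 with h1 | h1
    · simp [h0, h1, sq_abs, Real.sq_sqrt (by linarith : (0:ℝ) ≤ ρ^2 - t^2)]
    rcases eq_or_ne m.val 2 with h2 | h2
    · simp [h0, h1, h2, sq_abs]
    rcases eq_or_ne m.val 3 with h3 | h3
    · simp [h0, h1, h2, h3, sq_abs, Real.sq_sqrt (by linarith : (0:ℝ) ≤ d^2 - s^2)]
    · simp [h0, h1, h2, h3]
  rw [Finset.sum_congr rfl (fun m _ => key m)]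
  simp only [Finset.sum_add_distrib, Finset.sum_ite_eq', Finset.mem_univ, if_true]
  ring

lemma zfun_mem (n : ℕ) (ρ t : ℝ) (h0 : 0 ≤ t) (h1 : t ≤ ρ) (h2 : ρ ≤ 1/2) :
    ∀ i, zfun n ρ t i ∈ Set.Icc (0:ℝ) 1 := by
  intro i
  have hnn : (0:ℝ) ≤ Real.sqrt (ρ^2 - t^2) := Real.sqrt_nonneg _
  have hsq : Real.sqrt (ρ^2 - t^2) ≤ 1/2 := by
    have h := Real.sqrt_le_sqrt (show ρ^2 - t^2 ≤ ρ^2 by nlinarith)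
    rw [Real.sqrt_sq (by linarith)] at h
    linarith
  simp only [zfun, PiLp.toLp_apply]
  split_ifs <;> constructor <;> linarith

lemma yfun_mem (n : ℕ) (d s : ℝ) (h0 : 0 ≤ s) (h1 : s ≤ d) (h2 : d ≤ 1/2) :
    ∀ i, yfun n d s i ∈ Set.Icc (0:ℝ) 1 := by
  intro i
  have hnn : (0:ℝ) ≤ Real.sqrt (d^2 - s^2) := Real.sqrt_nonneg _
  have hsq : Real.sqrt (d^2 - s^2) ≤ 1/2 := by
    have h := Real.sqrt_le_sqrt (show d^2 - s^2 ≤ d^2 by nlinarith)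
    rw [Real.sqrt_sq (by linarith)] at h
    linarith
  simp only [yfun, PiLp.toLp_apply]
  split_ifs <;> constructor <;> linarith

noncomputable def Zc (n : ℕ) (ρ : ℝ) (hρ2 : ρ ≤ 1/2) (t : Set.Icc (0:ℝ) ρ) : Cube n :=
  ⟨zfun n ρ t.val, zfun_mem n ρ t.val t.2.1 t.2.2 hρ2⟩

noncomputable def Yc (n : ℕ) (d : ℝ) (hd : 0 < d) (hd2 : d ≤ 1/2) (i : ℕ) : Cube n :=
  ⟨yfun n d (d/(i+2)),
    yfun_mem n d _ (by positivity)
      (div_le_self hd.le (by exact_mod_cast le_add_of_nonneg_of_le (by positivity) (by norm_num)))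
      hd2⟩

theorem stmt_15 (n : ℕ) (hn : 3 < n) (r : ℕ → ℝ)
    (hpos : ∀ k, 0 < r k) (hlim : Filter.Tendsto r Filter.atTop (nhds 0))
    (G : Cube n → Cube n → Prop)
    (hG : ∀ x y : Cube n, G x y ↔ x ≠ y ∧ ∃ k : ℕ, dist x y = r k) :
    ¬ CountableColoringNumber G := by
  have hn4 : 4 ≤ n := hn
  -- pick a small distance
  obtain ⟨k, hk⟩ : ∃ k, r k < 1/2 :=
    (hlim.eventually (gt_mem_nhds (by norm_num : (0:ℝ) < 1/2))).exists
  set R : ℝ := r k with hRdef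
  have hR : 0 < R := hpos k
  set ρ : ℝ := 3/5 * R with hρdef
  set d : ℝ := 4/5 * R with hddef
  have hρ0 : 0 < ρ := by positivity
  have hd0 : 0 < d := by positivity
  have hρ2 : ρ ≤ 1/2 := by rw [hρdef]; linarith
  have hd2 : d ≤ 1/2 := by rw [hddef]; linarith
  have hpyth : ρ^2 + d^2 = R^2 := by rw [hρdef, hddef]; ring
  rintro ⟨o, hanti, hor, hfin⟩
  -- the countable family Y and uncountable family Z
  set Y : ℕ → Cube n := Yc n d hd0 hd2 with hYdef
  set Z : Set.Icc (0:ℝ) ρ → Cube n := Zc n ρ hρ2 with hZdef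
  have hYinj : Function.Injective Y := by
    intro i j h
    have h2 := congrFun (congrArg (fun x : Cube n => WithLp.ofLp x.val) h) (⟨2, by omega⟩ : Fin n)
    simp only [hYdef, Yc, yfun, WithLp.ofLp_toLp] at h2
    norm_num at h2
    field_simp at h2
    replace h2 : j = i ∨ d = 0 := Or.inl (by exact_mod_cast (add_right_cancel h2))
    rcases h2 with h2 | h2
    · exact h2.symm
    · exact absurd h2 hd0.ne'
  have hZinj : Function.Injective Z := by
    intro a b h
    have h2 := congrFun (congrArg (fun x : Cube n => WithLp.ofLp x.val) h) (⟨0, by omega⟩ : Fin n)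
    simp only [hZdef, Zc, zfun, WithLp.ofLp_toLp] at h2
    norm_num at h2
    exact Subtype.ext h2
  have hdist : ∀ (t : Set.Icc (0:ℝ) ρ) (i : ℕ), dist (Z t) (Y i) = R := by
    intro t i
    rw [Subtype.dist_eq]
    have ht : (t.val)^2 ≤ ρ^2 := by
      have := t.2.1; have := t.2.2; nlinarith
    have hs : (d/(i+2))^2 ≤ d^2 := by
      have h1 : 0 < (i:ℝ) + 2 := by positivity
      have h2 : d/((i:ℝ)+2) ≤ d := div_le_self hd0.le (by linarith)
      have h3 : 0 ≤ d/((i:ℝ)+2) := by positivity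
      nlinarith
    rw [show ((Z t : Cube n) : EuclideanSpace ℝ (Fin n)) = zfun n ρ t.val from rfl,
      show ((Y i : Cube n) : EuclideanSpace ℝ (Fin n)) = yfun n d (d/(i+2)) from rfl]
    rw [zy_dist n hn4 ρ d t.val (d/(i+2)) ht hs, hpyth, Real.sqrt_sq hR.le]
  -- the countable bad set
  set B : Set (Cube n) := ⋃ i, {y | o (Y i) y} with hBdef
  have hB : B.Countable := countable_iUnion fun i => (hfin (Y i)).countable
  -- find z avoiding B
  obtain ⟨t, htB⟩ : ∃ t, Z t ∉ B := by
    by_contra hall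
    push_neg at hall
    have h1 : Set.range Z ⊆ B := range_subset_iff.2 hall
    have h2 : (Set.range Z).Countable := hB.mono h1
    have h3 : (Set.univ : Set (Set.Icc (0:ℝ) ρ)).Countable := by
      have := h2.preimage hZinj
      rwa [Set.preimage_range] at this
    have h4 : Countable (Set.Icc (0:ℝ) ρ) := Set.countable_univ_iff.mp h3
    have h5 : (Set.Icc (0:ℝ) ρ).Countable := Set.countable_coe_iff.mp h4
    exact (Cardinal.aleph0_lt_continuum.trans_eq
      (Cardinal.mk_Icc_real hρ0).symm).not_ge h5.le_aleph0
  -- all edges from Z t point outward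
  have hout : ∀ i, o (Z t) (Y i) := by
    intro i
    have hne : Z t ≠ Y i := by
      intro h
      have := hdist t i
      rw [h, dist_self] at this
      exact absurd this.symm hR.ne'
    have hGzy : G (Z t) (Y i) := (hG _ _).2 ⟨hne, k, hdist t i⟩
    rcases (hor _ _).1 hGzy with h | h
    · exact h
    · exact absurd (Set.mem_iUnion.2 ⟨i, h⟩) htB
  -- contradiction with finiteness
  have hsub : Set.range Y ⊆ {y | o (Z t) y} := range_subset_iff.2 hout
  exact (Set.infinite_range_of_injective hYinj).mono hsub (hfin (Z t))
end

section
/- Let X be a metric space with metric d, let G be a graph on X, and suppose there is a well-ordering ≼ of X such that for every x ∈ X there is ε > 0 with d(x, y) > ε for every y ≼ x that is G-related to x. Then X is the union of countably many G-loose sets. -/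
open Set

theorem stmt_16 {X : Type*} [MetricSpace X]
    (G : X → X → Prop) (hsym : Symmetric G) (hirr : Irreflexive G)
    (r : X → X → Prop) (hwo : IsWellOrder X r)
    (h : ∀ x : X, ∃ ε > (0 : ℝ), ∀ y : X, (r y x ∨ y = x) → G x y → ε < dist x y) :
    ∃ A : ℕ → Set X, (∀ n, Loose G (A n)) ∧ (⋃ n, A n) = Set.univ := by
  choose ε hpos hε using h
  refine ⟨fun n => {x | 1 / (n + 1 : ℝ) < ε x}, ?_, ?_⟩
  · intro n x
    have hn : (0 : ℝ) < 1 / (n + 1 : ℝ) := by positivity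
    refine ⟨Metric.ball x (min (ε x) (1 / (n + 1 : ℝ))), Metric.isOpen_ball, ?_, ?_⟩
    · exact Metric.mem_ball_self (lt_min (hpos x) hn)
    · intro y hy hyO hGxy
      have hyO' : dist y x < min (ε x) (1 / (n + 1 : ℝ)) := Metric.mem_ball.mp hyO
      haveI := hwo.toTrichotomous
      rcases trichotomous_of r y x with h1 | h1 | h1
      · have := hε x y (Or.inl h1) hGxy
        rw [dist_comm] at this
        exact absurd this (not_lt.mpr (le_of_lt (lt_of_lt_of_le hyO' (min_le_left _ _))))
      · have := hε x y (Or.inr h1) hGxy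
        rw [dist_comm] at this
        exact absurd this (not_lt.mpr (le_of_lt (lt_of_lt_of_le hyO' (min_le_left _ _))))
      · have h2 := hε y x (Or.inl h1) (hsym hGxy)
        have : (1 : ℝ) / (n + 1) < dist y x := lt_trans hy h2
        exact absurd this (not_lt.mpr (le_of_lt (lt_of_lt_of_le hyO' (min_le_right _ _))))
  · ext x
    simp only [mem_iUnion, mem_univ, iff_true, mem_setOf_eq]
    obtain ⟨n, hn⟩ := exists_nat_one_div_lt (hpos x)
    exact ⟨n, hn⟩
end

section
/- Let X be a compact metric space with metric d, let ⟨r_k : k ∈ ω⟩ be a sequence of positive real numbers converging to 0, and let G be the graph on X relating distinct points x, y if and only if d(x, y) = r_k for some k ∈ ω. Then for every compact set K ⊆ X, every ε > 0, and every G-anticlique B ⊆ X, there is an open set O ⊆ X such that K ⊆ O, every point of O is within distance ε of some point of K, and the topological boundary of O is disjoint from B. -/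
open Set

theorem stmt_17 {X : Type*} [MetricSpace X] [CompactSpace X]
    (r : ℕ → ℝ) (hpos : ∀ k, 0 < r k)
    (hlim : Filter.Tendsto r Filter.atTop (nhds 0))
    (G : X → X → Prop)
    (hG : ∀ x y : X, G x y ↔ x ≠ y ∧ ∃ k : ℕ, dist x y = r k)
    (K : Set X) (hK : IsCompact K) (ε : ℝ) (hε : 0 < ε)
    (B : Set X) (hB : Anticlique G B) :
    ∃ O : Set X, IsOpen O ∧ K ⊆ O ∧
      (∀ x ∈ O, ∃ y ∈ K, dist x y ≤ ε) ∧ frontier O ∩ B = ∅ := by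
  -- pick k with r k < ε/2
  obtain ⟨k, hk⟩ : ∃ k, r k < ε / 2 :=
    (hlim.eventually (gt_mem_nhds (half_pos hε))).exists
  have hrk := hpos k
  -- key: for each z ∈ K, a good open neighborhood
  have key : ∀ z ∈ K, ∃ U : Set X, IsOpen U ∧ z ∈ U ∧
      (∀ x ∈ U, dist x z ≤ ε) ∧ ∀ x ∈ frontier U, x ∉ B := by
    intro z _
    by_cases h : ∃ b ∈ B, dist z b < r k / 2
    · obtain ⟨b, hbB, hbz⟩ := h
      refine ⟨Metric.ball b (r k), Metric.isOpen_ball, ?_, ?_, ?_⟩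
      · exact Metric.mem_ball.2 (by rw [dist_comm] at hbz ⊢; linarith)
      · intro x hx
        have hx' : dist x b < r k := Metric.mem_ball.1 hx
        calc dist x z ≤ dist x b + dist b z := dist_triangle x b z
          _ ≤ ε := by rw [dist_comm b z]; linarith
      · intro x hx hxB
        have hs : dist x b = r k := Metric.frontier_ball_subset_sphere hx
        have hne : x ≠ b := by
          intro e; rw [e, dist_self] at hs; exact absurd hs.symm (ne_of_gt hrk)
        exact hB x hxB b hbB hne ((hG x b).2 ⟨hne, k, hs⟩)
    · push_neg at h
      refine ⟨Metric.ball z (r k / 4), Metric.isOpen_ball, ?_, ?_, ?_⟩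
      · exact Metric.mem_ball_self (by linarith)
      · intro x hx
        have := Metric.mem_ball.1 hx
        linarith
      · intro x hx hxB
        have hs : dist x z = r k / 4 := Metric.frontier_ball_subset_sphere hx
        have := h x hxB
        rw [dist_comm] at hs
        linarith
  choose! U hopen hmem hdist hfront using key
  obtain ⟨t, htK, hcov⟩ := hK.elim_nhds_subcover U
    (fun z hz => (hopen z hz).mem_nhds (hmem z hz))
  refine ⟨⋃ z ∈ t, U z, isOpen_biUnion fun z _ => hopen z (htK z ‹_›), hcov, ?_, ?_⟩
  · intro x hx
    obtain ⟨z, hzt, hzx⟩ := mem_iUnion₂.1 hx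
    exact ⟨z, htK z hzt, hdist z (htK z hzt) x hzx⟩
  · rw [eq_empty_iff_forall_notMem]
    rintro x ⟨hxf, hxB⟩
    have hxcl : x ∈ ⋃ z ∈ t, closure (U z) := by
      have := hxf.1
      rwa [t.closure_biUnion] at this
    obtain ⟨z, hzt, hzx⟩ := mem_iUnion₂.1 hxcl
    have hO : IsOpen (⋃ z ∈ t, U z) := isOpen_biUnion fun w hw => hopen w (htK w hw)
    have hxnot : x ∉ U z := fun hmem' => hxf.2
      (by rw [hO.interior_eq]; exact mem_iUnion₂.2 ⟨z, hzt, hmem'⟩)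
    exact hfront z (htK z hzt) x ⟨hzx, fun hi => hxnot (interior_subset hi)⟩ hxB
end
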